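/- arXiv:2507.20219 — 9 statements merged into one kernel-verified Lean document; each statement's English description precedes it below -/
import Mathlib

section
/- Let U ⊆ ℝ be a nonempty open interval, K ⊆ ℝ a compact set, and φ : U → ℝ infinitely differentiable on U. Let m ∈ ℕ and let ν be a finite signed Borel measure on ℝ whose support is contained in K. Assume ∫_K t^m dν(t) ≠ 0, but ∫_K φ(a·t + b) dν(t) = 0 for every a, b ∈ ℝ such that a·t + b ∈ U for all t ∈ K. Then φ coincides on U with a polynomial of degree at most m − 1 (in particular, φ ≡ 0 on U when m = 0); equivalently, the m-th derivative of φ vanishes identically on U. -/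
open MeasureTheory Polynomial Metric

private lemma iter_smooth {U : Set ℝ} (hU : IsOpen U) {φ : ℝ → ℝ}
    (hφ : ContDiffOn ℝ (⊤ : ℕ∞) φ U) (j : ℕ) : ContDiffOn ℝ (⊤ : ℕ∞) (iteratedDeriv j φ) U := by
  induction j with
  | zero => simpa [iteratedDeriv_zero] using hφ
  | succ j ih =>
    rw [iteratedDeriv_succ]
    exact (ih.derivWithin (m := (⊤ : ℕ∞)) hU.uniqueDiffOn (by simp)).congr
      fun x hx => (derivWithin_of_isOpen hU hx).symm

private lemma iter_hasDerivAt {U : Set ℝ} (hU : IsOpen U) {φ : ℝ → ℝ}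
    (hφ : ContDiffOn ℝ (⊤ : ℕ∞) φ U) (j : ℕ) {x : ℝ} (hx : x ∈ U) :
    HasDerivAt (iteratedDeriv j φ) (iteratedDeriv (j + 1) φ x) x := by
  have h := (((iter_smooth hU hφ j).differentiableOn (by simp)).differentiableAt
    (hU.mem_nhds hx)).hasDerivAt
  rwa [iteratedDeriv_succ]

noncomputable def polyInt (p : ℝ[X]) : ℝ[X] :=
  p.sum fun n a => C (a / (n + 1)) * X ^ (n + 1)

private lemma polyInt_derivative (p : ℝ[X]) : (polyInt p).derivative = p := by
  conv_rhs => rw [← p.sum_C_mul_X_pow_eq]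
  rw [polyInt, Polynomial.sum, Polynomial.sum, map_sum]
  refine Finset.sum_congr rfl fun n hn => ?_
  rw [derivative_C_mul, derivative_X_pow]
  have h : ((n : ℝ) + 1) ≠ 0 := by positivity
  rw [Nat.add_sub_cancel, ← mul_assoc, ← C_mul]
  push_cast
  rw [div_mul_cancel₀ _ h]

private lemma polyInt_degree {p : ℝ[X]} {m : ℕ} (h : p.degree < (m : WithBot ℕ)) :
    (polyInt p).degree < ((m + 1 : ℕ) : WithBot ℕ) := by
  rw [polyInt, Polynomial.sum]
  refine lt_of_le_of_lt (degree_sum_le _ _) ?_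
  rw [Finset.sup_lt_iff (WithBot.bot_lt_coe _)]
  intro n hn
  refine lt_of_le_of_lt (degree_C_mul_X_pow_le _ _) ?_
  have h1 : (n : WithBot ℕ) < (m : WithBot ℕ) :=
    lt_of_le_of_lt (le_degree_of_ne_zero (mem_support_iff.1 hn)) h
  have h2 : n < m := by exact_mod_cast h1
  exact_mod_cast Nat.succ_lt_succ h2

private lemma poly_of_iter_zero {U : Set ℝ} (hU : IsOpen U) (hconn : U.OrdConnected) :
    ∀ (m : ℕ) (g : ℝ → ℝ), ContDiffOn ℝ (⊤ : ℕ∞) g U → (∀ x ∈ U, iteratedDeriv m g x = 0) →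
    ∃ p : ℝ[X], p.degree < (m : WithBot ℕ) ∧ ∀ x ∈ U, g x = p.eval x := by
  intro m
  induction m with
  | zero =>
    intro g hg h0
    exact ⟨0, by simpa using WithBot.bot_lt_coe 0,
      fun x hx => by simpa [iteratedDeriv_zero] using h0 x hx⟩
  | succ m ih =>
    intro g hg h0
    have hg' : ContDiffOn ℝ (⊤ : ℕ∞) (deriv g) U := by
      have := iter_smooth hU hg 1
      simpa [iteratedDeriv_one] using this
    obtain ⟨p, hpdeg, hp⟩ := ih (deriv g) hg' (fun x hx => by
      have := h0 x hx; rwa [iteratedDeriv_succ'] at this)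
    rcases U.eq_empty_or_nonempty with hUe | ⟨x₀, hx₀⟩
    · exact ⟨0, by simpa using WithBot.bot_lt_coe (m+1), fun x hx => by simp [hUe] at hx⟩
    set P : ℝ[X] := polyInt p + C (g x₀ - (polyInt p).eval x₀) with hPdef
    refine ⟨P, ?_, ?_⟩
    · refine lt_of_le_of_lt (degree_add_le _ _) (max_lt (polyInt_degree hpdeg) ?_)
      exact lt_of_le_of_lt degree_C_le (by exact_mod_cast WithBot.coe_lt_coe.2 (Nat.succ_pos m))
    · have hconv : Convex ℝ U := convex_iff_ordConnected.2 hconn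
      have hPC : ∀ x : ℝ, HasDerivAt (fun y => P.eval y) (p.eval x) x := by
        intro x
        have := P.hasDerivAt x
        rwa [hPdef, derivative_add, derivative_C, add_zero, polyInt_derivative] at this
      have heq : Set.EqOn g (fun y => P.eval y) U := by
        refine hconv.eqOn_of_fderivWithin_eq (hg.differentiableOn (by simp))
          (P.differentiable.differentiableOn) hU.uniqueDiffOn ?_ hx₀ ?_
        · intro x hx
          rw [fderivWithin_of_isOpen hU hx, fderivWithin_of_isOpen hU hx,
            ← toSpanSingleton_deriv, ← toSpanSingleton_deriv, (hPC x).deriv, hp x hx]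
        · simp [hPdef]
      exact fun x hx => heq hx

/-- If `ν = ν₁ - ν₂` is a finite signed Borel measure supported in the
compact set `K`, `φ` is infinitely differentiable on the nonempty open interval `U`,
the `m`-th moment of `ν` is nonzero, but `∫ φ(a t + b) dν(t) = 0` for all affine maps
`t ↦ a t + b` sending `K` into `U`, then `φ` coincides on `U` with a polynomial of
degree at most `m - 1`. -/
theorem stmt_0 (U : Set ℝ) (hUopen : IsOpen U) (hUconn : U.OrdConnected)
    (hUne : U.Nonempty) (K : Set ℝ) (hK : IsCompact K)
    (φ : ℝ → ℝ) (hφ : ContDiffOn ℝ (⊤ : ℕ∞) φ U) (m : ℕ)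
    (ν₁ ν₂ : Measure ℝ) [IsFiniteMeasure ν₁] [IsFiniteMeasure ν₂]
    (hsupp₁ : ν₁ Kᶜ = 0) (hsupp₂ : ν₂ Kᶜ = 0)
    (hm : (∫ t, t ^ m ∂ν₁) - (∫ t, t ^ m ∂ν₂) ≠ 0)
    (hvanish : ∀ a b : ℝ, (∀ t ∈ K, a * t + b ∈ U) →
      (∫ t, φ (a * t + b) ∂ν₁) - (∫ t, φ (a * t + b) ∂ν₂) = 0) :
    ∃ p : Polynomial ℝ, p.degree < (m : WithBot ℕ) ∧ ∀ t ∈ U, φ t = p.eval t := by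
  have hKmeas : MeasurableSet K := hK.isClosed.measurableSet
  have hae₁ : ∀ᵐ t ∂ν₁, t ∈ K := by rw [ae_iff]; exact hsupp₁
  have hae₂ : ∀ᵐ t ∂ν₂, t ∈ K := by rw [ae_iff]; exact hsupp₂
  have hres₁ : ν₁.restrict K = ν₁ := Measure.restrict_eq_self_of_ae_mem hae₁
  have hres₂ : ν₂.restrict K = ν₂ := Measure.restrict_eq_self_of_ae_mem hae₂
  suffices hiter : ∀ b ∈ U, iteratedDeriv m φ b = 0 by
    exact poly_of_iter_zero hUopen hUconn m φ hφ hiter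
  intro b hb
  set S : Set ℝ := {a | ∀ t ∈ K, a * t + b ∈ U} with hSdef
  have hSopen : IsOpen S := by
    rw [isOpen_iff_mem_nhds]
    intro a₀ ha₀
    exact hK.eventually_forall_of_forall_eventually
      (P := fun a t => a * t + b ∈ U) (fun t ht =>
        (((continuous_fst.mul continuous_snd).add continuous_const).continuousAt).eventually_mem
          (hUopen.mem_nhds (ha₀ t ht)))
  have h0S : (0 : ℝ) ∈ S := fun t _ => by simpa using hb
  -- inner affine map continuity (in t, for fixed x)
  have haff : ∀ x : ℝ, Continuous fun t : ℝ => x * t + b :=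
    fun x => (continuous_const.mul continuous_id).add continuous_const
  have hFcont : ∀ j : ℕ, ∀ x ∈ S, ContinuousOn
      (fun t => t ^ j * iteratedDeriv j φ (x * t + b)) K := by
    intro j x hx
    exact (continuous_pow j).continuousOn.mul
      (((iter_smooth hUopen hφ j).continuousOn.comp (haff x).continuousOn)
        (fun t ht => hx t ht))
  have key : ∀ j : ℕ, ∀ a ∈ S,
      (∫ t, t ^ j * iteratedDeriv j φ (a * t + b) ∂ν₁)
        - (∫ t, t ^ j * iteratedDeriv j φ (a * t + b) ∂ν₂) = 0 := by
    intro j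
    induction j with
    | zero =>
      intro a ha
      simpa [iteratedDeriv_zero] using hvanish a b ha
    | succ j ih =>
      intro a₀ ha₀
      obtain ⟨ε, hε, hball⟩ := Metric.isOpen_iff.1 hSopen a₀ ha₀
      have hε2 : (0 : ℝ) < ε / 2 := by linarith
      have hcbS : closedBall a₀ (ε / 2) ⊆ S := fun x hx =>
        hball (lt_of_le_of_lt (mem_closedBall.1 hx) (by linarith))
      -- bound on the compact set closedBall × K
      obtain ⟨Cb, hCb⟩ := ((isCompact_closedBall a₀ (ε / 2)).prod hK).exists_bound_of_continuousOn
        (f := fun z : ℝ × ℝ => z.2 ^ (j + 1) * iteratedDeriv (j + 1) φ (z.1 * z.2 + b))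
        ((continuous_snd.pow (j + 1)).continuousOn.mul
          (((iter_smooth hUopen hφ (j + 1)).continuousOn.comp
            ((continuous_fst.mul continuous_snd).add continuous_const).continuousOn)
            (fun z hz => hcbS hz.1 z.2 hz.2)))
      have hD : ∀ (μ : Measure ℝ), IsFiniteMeasure μ → μ.restrict K = μ →
          HasDerivAt (fun a => ∫ t, t ^ j * iteratedDeriv j φ (a * t + b) ∂μ)
            (∫ t, t ^ (j + 1) * iteratedDeriv (j + 1) φ (a₀ * t + b) ∂μ) a₀ := by
        intro μ hfin hres
        haveI := hfin
        rw [← hres]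
        have hmem : ∀ᵐ t ∂μ.restrict K, t ∈ K := ae_restrict_mem hKmeas
        refine (hasDerivAt_integral_of_dominated_loc_of_deriv_le (μ := μ.restrict K)
          (F := fun x t => t ^ j * iteratedDeriv j φ (x * t + b))
          (F' := fun x t => t ^ (j + 1) * iteratedDeriv (j + 1) φ (x * t + b))
          (x₀ := a₀) (s := ball a₀ (ε / 2)) (bound := fun _ => Cb) (ball_mem_nhds a₀ hε2) ?_ ?_ ?_ ?_ ?_ ?_).2
        · filter_upwards [hSopen.mem_nhds ha₀] with x hx
          exact (hFcont j x hx).aestronglyMeasurable hKmeas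
        · exact (hFcont j a₀ ha₀).integrableOn_compact hK
        · exact (hFcont (j + 1) a₀ ha₀).aestronglyMeasurable hKmeas
        · filter_upwards [hmem] with t ht
          intro x hx
          exact hCb (x, t) ⟨ball_subset_closedBall hx, ht⟩
        · exact integrable_const Cb
        · filter_upwards [hmem] with t ht
          intro x hx
          have hxS : x ∈ S := hcbS (ball_subset_closedBall hx)
          have hinner : HasDerivAt (fun y : ℝ => y * t + b) t x :=
            (hasDerivAt_mul_const t).add_const b
          have hcomp := (iter_hasDerivAt hUopen hφ j (hxS t ht)).comp x hinner
          have := hcomp.const_mul (t ^ j)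
          exact this.congr_deriv (by ring)
      have h₁ := hD ν₁ inferInstance hres₁
      have h₂ := hD ν₂ inferInstance hres₂
      have hsub := h₁.sub h₂
      have hev : (fun _ : ℝ => (0 : ℝ)) =ᶠ[nhds a₀]
          (fun a => (∫ t, t ^ j * iteratedDeriv j φ (a * t + b) ∂ν₁)
            - (∫ t, t ^ j * iteratedDeriv j φ (a * t + b) ∂ν₂)) := by
        filter_upwards [hSopen.mem_nhds ha₀] with a ha
        exact (ih a ha).symm
      have := (hsub.congr_of_eventuallyEq hev).unique (hasDerivAt_const a₀ 0)
      linarith [this]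
  have h := key m 0 h0S
  simp only [zero_mul, zero_add] at h
  rw [integral_mul_const, integral_mul_const, ← sub_mul] at h
  rcases mul_eq_zero.1 h with h' | h'
  · exact absurd h' hm
  · exact h'
end

section
/- Let U ⊆ ℝ be a nonempty open interval, let K ⊆ ℝ be an infinite compact set, and let φ : U → ℝ be continuous. Then the linear span of { φ ∘ g restricted to K : g : ℝ → ℝ affine (g(t) = a·t + b), g(K) ⊆ U } is dense in C(K) (with the supremum norm) if and only if φ does not coincide on U with a polynomial. -/
/-!
If `φ = p` on `U` with `deg p = N`, every `t ↦ φ (a t + b)` is a polynomial of degree `≤ N`, so the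
span lies in a finite-dimensional, hence closed, subspace of `C(K)`; it is proper because `K` is
infinite, so that `t ^ (N + 1)` restricted to `K` is not a polynomial of degree `≤ N`.

Conversely, if the span is not dense, Hahn–Banach gives a functional `L ≠ 0` killing every
`φ (a · + b)`, and by Weierstrass `L (tⁿ) ≠ 0` for some `n`. Near a compact interval `[c, d] ⊆ U`,
`L` also kills `f (a · + b)` for a mollification `f = ρ ⋆ φ` and small `a`. The `n`-th difference
quotient in `a` of these functions tends in `C(K)` to `tⁿ f⁽ⁿ⁾(b)`, so `f⁽ⁿ⁾(b) L (tⁿ) = 0`: the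
mollifications are polynomials of degree `< n` on `[c, d]`. Their pointwise limit `φ` is then a
polynomial there too, and these local polynomials agree on overlaps.
-/

open Set Filter Topology Polynomial MeasureTheory fwdDiff

theorem exists_sub_eq_mul_deriv_add {g : ℝ → ℝ} (hg : Differentiable ℝ g) (c u : ℝ) :
    ∃ θ ∈ Icc (0 : ℝ) 1, g (c + u) - g c = u * deriv g (c + θ * u) := by
  have hderiv (s : ℝ) : HasDerivAt (fun s => g (c + s * u)) (u * deriv g (c + s * u)) s := by
    have hlin : HasDerivAt (fun s => c + s * u) u s := by
      simpa using ((hasDerivAt_id s).mul_const u).const_add c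
    rw [mul_comm]
    exact (hg (c + s * u)).hasDerivAt.comp s hlin
  obtain ⟨θ, hθ, hslope⟩ := exists_hasDerivAt_eq_slope _ _ zero_lt_one
    (fun s _ => (hderiv s).continuousAt.continuousWithinAt) fun s _ => hderiv s
  exact ⟨θ, Ioo_subset_Icc_self hθ, by simpa using hslope.symm⟩

theorem iteratedDeriv_fwdDiff {n : ℕ} {f : ℝ → ℝ} (hf : ContDiff ℝ n f) (u : ℝ) :
    iteratedDeriv n (Δ_[u] f) = Δ_[u] (iteratedDeriv n f) := by
  ext x
  have hshift : ContDiff ℝ n fun y => f (y + u) := hf.comp (contDiff_id.add contDiff_const)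
  change iteratedDeriv n (fun y => f (y + u) - f y) x = _
  rw [iteratedDeriv_fun_sub hshift.contDiffAt hf.contDiffAt, iteratedDeriv_comp_add_const]
  rfl

theorem exists_fwdDiff_iter_eq_pow_mul_iteratedDeriv {n : ℕ} {f : ℝ → ℝ} (hf : ContDiff ℝ n f)
    (u b : ℝ) : ∃ θ ∈ Icc (0 : ℝ) n, (Δ_[u])^[n] f b = u ^ n * iteratedDeriv n f (b + θ * u) := by
  induction n generalizing f with
  | zero => exact ⟨0, by simp, by simp⟩
  | succ n ih =>
    have hΔ : ContDiff ℝ n (Δ_[u] f) :=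
      ((hf.comp (contDiff_id.add contDiff_const)).sub hf).of_succ
    obtain ⟨θ₁, hθ₁, h₁⟩ := ih hΔ
    obtain ⟨θ₂, hθ₂, h₂⟩ := exists_sub_eq_mul_deriv_add
      (hf.differentiable_iteratedDeriv n (by exact_mod_cast Nat.lt_succ_self n)) (b + θ₁ * u) u
    refine ⟨θ₁ + θ₂, ⟨by linarith [hθ₁.1, hθ₂.1], by push_cast; linarith [hθ₁.2, hθ₂.2]⟩, ?_⟩
    rw [Function.iterate_succ_apply, h₁, iteratedDeriv_fwdDiff hf.of_succ, fwdDiff, h₂,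
      iteratedDeriv_succ]
    ring_nf

theorem exists_polynomial_eqOn_of_iteratedDeriv_eq_zero {f : ℝ → ℝ} {n : ℕ} {s : Set ℝ}
    (hs : s.OrdConnected) (hf : ContDiff ℝ n f) (h : ∀ x ∈ s, iteratedDeriv n f x = 0) :
    ∃ p : ℝ[X], p.degree < n ∧ EqOn f (fun x => p.eval x) s := by
  rcases s.eq_empty_or_nonempty with rfl | ⟨x₀, hx₀⟩
  · exact ⟨0, by simp, by simp⟩
  cases n with
  | zero => exact ⟨0, by simp, fun x hx => by simpa using h x hx⟩
  | succ m =>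
    let p : ℝ[X] := ∑ k ∈ Finset.range (m + 1),
      C (iteratedDeriv k f x₀ / k.factorial) * (X - C x₀) ^ k
    refine ⟨p, ?_, fun x hx => ?_⟩
    · refine degree_le_natDegree.trans_lt (WithBot.coe_lt_coe.mpr
        (Nat.lt_succ_of_le (natDegree_sum_le_of_forall_le _ _ fun k hk => ?_)))
      refine (natDegree_C_mul_le _ _).trans
        ((natDegree_pow_le_of_le k (natDegree_X_sub_C_le x₀)).trans ?_)
      simpa [Nat.lt_succ_iff] using hk
    rcases eq_or_ne x₀ x with rfl | hne
    · simp [p, Finset.sum_range_succ', eval_finsetSum]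
    -- `p` is the Taylor polynomial of order `m` at `x₀`, and the Lagrange remainder vanishes.
    have hp : p.eval x = taylorWithinEval f m (uIcc x₀ x) x₀ x := by
      rw [taylor_within_apply, eval_finsetSum]
      refine Finset.sum_congr rfl fun k hk => ?_
      rw [iteratedDerivWithin_eq_iteratedDeriv (uniqueDiffOn_uIcc hne)
        (hf.contDiffAt.of_le (by exact_mod_cast (Finset.mem_range.mp hk).le)) left_mem_uIcc]
      simp only [eval_mul, eval_C, eval_pow, eval_sub, eval_X, smul_eq_mul]
      ring
    obtain ⟨x', hx', hrem⟩ := taylor_mean_remainder_lagrange_iteratedDeriv hne hf.contDiffOn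
    rw [h x' (hs.uIcc_subset hx₀ hx (uIoo_subset_uIcc_self hx')), zero_mul, zero_div,
      sub_eq_zero] at hrem
    exact hrem.trans hp.symm

theorem exists_polynomial_eqOn_of_tendsto {ι : Type*} {l : Filter ι} [l.NeBot]
    {F : ι → ℝ → ℝ} {g : ℝ → ℝ} {s : Set ℝ} {n : ℕ} (hs : s.Infinite)
    (hF : ∀ i, ∃ p : ℝ[X], p.degree < n ∧ EqOn (F i) (fun x => p.eval x) s)
    (hlim : ∀ x ∈ s, Tendsto (fun i => F i x) l (𝓝 (g x))) :
    ∃ p : ℝ[X], p.degree < n ∧ EqOn g (fun x => p.eval x) s := by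
  classical
  obtain ⟨T, hTs, hTcard⟩ := hs.exists_subset_card_eq n
  have hinj : InjOn id (T : Set ℝ) := injOn_id _
  have heval (v : ℝ → ℝ) (x : ℝ) :
      (Lagrange.interpolate T id v).eval x = ∑ j ∈ T, v j * (Lagrange.basis T id j).eval x := by
    simp [Lagrange.interpolate_apply, eval_finsetSum]
  refine ⟨Lagrange.interpolate T id g, hTcard ▸ Lagrange.degree_interpolate_lt _ hinj,
    fun x hx => tendsto_nhds_unique (hlim x hx) ?_⟩
  have hFi (i : ι) : F i x = ∑ j ∈ T, F i j * (Lagrange.basis T id j).eval x := by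
    obtain ⟨p, hpdeg, hp⟩ := hF i
    rw [hp hx, ← heval, Lagrange.eq_interpolate_of_eval_eq _ hinj (hTcard ▸ hpdeg)
      fun j hj => (hp (hTs hj)).symm]
  simp only [hFi, heval]
  exact tendsto_finsetSum _ fun j hj => (hlim j (hTs hj)).mul_const _

theorem exists_polynomial_eqOn_of_forall_Icc {U : Set ℝ} (hU : IsOpen U) (hUc : U.OrdConnected)
    (hUne : U.Nonempty) {f : ℝ → ℝ}
    (h : ∀ c d, c < d → Icc c d ⊆ U → ∃ p : ℝ[X], EqOn f (fun x => p.eval x) (Icc c d)) :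
    ∃ p : ℝ[X], EqOn f (fun x => p.eval x) U := by
  obtain ⟨α, β, hαβ, hαβU⟩ := hU.exists_Ioo_subset hUne
  obtain ⟨u, hαu, huβ⟩ := exists_between hαβ
  obtain ⟨v, huv, hvβ⟩ := exists_between huβ
  have hu : u ∈ U := hαβU ⟨hαu, huβ⟩
  have hv : v ∈ U := hαβU ⟨hαu.trans huv, hvβ⟩
  obtain ⟨p₀, hp₀⟩ := h u v huv (hUc.out hu hv)
  refine ⟨p₀, fun y hy => ?_⟩
  have hmin : min u y ∈ U := by rcases min_choice u y with h | h <;> rw [h] <;> assumption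
  have hmax : max v y ∈ U := by rcases max_choice v y with h | h <;> rw [h] <;> assumption
  obtain ⟨p, hp⟩ := h (min u y) (max v y)
    ((min_le_left u y).trans_lt (huv.trans_le (le_max_left v y))) (hUc.out hmin hmax)
  have hpp₀ : p = p₀ := eq_of_infinite_eval_eq _ _ <| (Icc_infinite huv).mono fun x hx =>
    (hp ⟨(min_le_left u y).trans hx.1, hx.2.trans (le_max_left v y)⟩).symm.trans (hp₀ hx)
  exact hpp₀ ▸ hp ⟨min_le_right u y, le_max_right v y⟩

theorem Submodule.exists_ne_zero_forall_eq_zero_of_not_dense {E : Type*} [AddCommGroup E]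
    [Module ℝ E] [TopologicalSpace E] [IsTopologicalAddGroup E] [ContinuousSMul ℝ E]
    [LocallyConvexSpace ℝ E] (W : Submodule ℝ E) (hW : ¬Dense (W : Set E)) :
    ∃ L : E →L[ℝ] ℝ, L ≠ 0 ∧ ∀ w ∈ W, L w = 0 := by
  obtain ⟨v, hv⟩ : ∃ v, v ∉ W.topologicalClosure := by
    by_contra! h
    exact hW (dense_iff_topologicalClosure_eq_top.mpr (eq_top_iff'.mpr h))
  obtain ⟨L, s, hlt, hsv⟩ := geometric_hahn_banach_closed_point W.topologicalClosure.convex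
    W.isClosed_topologicalClosure hv
  -- `L` is bounded above by `s` on a subspace, so it vanishes there.
  have hzero (w : E) (hw : w ∈ W.topologicalClosure) : L w = 0 := by
    by_contra hLw
    have := hlt ((s / L w) • w) (smul_mem _ _ hw)
    rw [map_smul, smul_eq_mul, div_mul_cancel₀ _ hLw] at this
    exact lt_irrefl _ this
  refine ⟨L, fun hL => ?_, fun w hw => hzero w (W.le_topologicalClosure hw)⟩
  have h0 := hlt 0 (zero_mem _)
  rw [hL] at hsv h0
  simp only [zero_apply] at hsv h0
  exact lt_asymm h0 hsv

section ContinuousFunctionsOnCompact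

variable {K : Set ℝ}

theorem Polynomial.toContinuousMapOn_injective (hK : K.Infinite) :
    Function.Injective fun p : ℝ[X] => p.toContinuousMapOn K := fun p q hpq =>
  eq_of_infinite_eval_eq p q <| hK.mono fun x hx => congrArg (fun f : C(K, ℝ) => f ⟨x, hx⟩) hpq

theorem ContinuousLinearMap.eq_zero_of_map_X_pow_eq_zero [CompactSpace K] {E : Type*}
    [AddCommGroup E] [Module ℝ E] [TopologicalSpace E] [T2Space E] (L : C(K, ℝ) →L[ℝ] E)
    (h : ∀ n : ℕ, L ((X ^ n : ℝ[X]).toContinuousMapOn K) = 0) : L = 0 := by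
  have hpoly : (L : C(K, ℝ) →ₗ[ℝ] E) ∘ₗ (toContinuousMapOnAlgHom K).toLinearMap = 0 :=
    lhom_ext' fun n => LinearMap.ext_ring (by simpa [monomial_one_right_eq_X_pow] using h n)
  have hdense : Dense (polynomialFunctions K : Set C(K, ℝ)) := by
    rw [dense_iff_closure_eq, ← Subalgebra.topologicalClosure_coe,
      ContinuousMap.subalgebra_topologicalClosure_eq_top_of_separatesPoints _
        (polynomialFunctions_separatesPoints K)]
    rfl
  refine DFunLike.coe_injective (Continuous.ext_on hdense L.continuous continuous_zero ?_)
  rintro _ ⟨p, -, rfl⟩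
  exact LinearMap.congr_fun hpoly p

def affineCompositions (K U : Set ℝ) (φ : ℝ → ℝ) : Set C(K, ℝ) :=
  {h | ∃ a b : ℝ, (∀ t ∈ K, a * t + b ∈ U) ∧ ∀ x : K, h x = φ (a * (x : ℝ) + b)}

theorem affineCompositions_subset_map_degreeLT {U : Set ℝ} {φ : ℝ → ℝ} {p : ℝ[X]}
    (hp : EqOn φ (fun t => p.eval t) U) :
    affineCompositions K U φ ⊆
      (degreeLT ℝ (p.natDegree + 1)).map (toContinuousMapOnAlgHom K).toLinearMap := by
  rintro h ⟨a, b, habU, hh⟩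
  refine ⟨p.comp (C a * X + C b), mem_degreeLT.mpr ?_, ?_⟩
  · refine degree_le_natDegree.trans_lt (WithBot.coe_lt_coe.mpr (Nat.lt_succ_of_le ?_))
    rw [natDegree_comp]
    exact (Nat.mul_le_mul_left _ natDegree_linear_le).trans (mul_one _).le
  · ext x
    simp [hh, hp (habU x x.2)]

theorem not_dense_span_affineCompositions [CompactSpace K] (hK : K.Infinite) {U : Set ℝ}
    {φ : ℝ → ℝ} {p : ℝ[X]} (hp : EqOn φ (fun t => p.eval t) U) :
    ¬Dense (Submodule.span ℝ (affineCompositions K U φ) : Set C(K, ℝ)) := by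
  intro hdense
  set V := (degreeLT ℝ (p.natDegree + 1)).map (toContinuousMapOnAlgHom K).toLinearMap
  have hV (f : C(K, ℝ)) : f ∈ V := closure_minimal
    (Submodule.span_le.mpr (affineCompositions_subset_map_degreeLT hp))
    V.closed_of_finiteDimensional (hdense f)
  obtain ⟨q, hq, hqX⟩ := hV ((X ^ (p.natDegree + 1) : ℝ[X]).toContinuousMapOn K)
  rw [toContinuousMapOn_injective hK hqX] at hq
  have hdeg := mem_degreeLT.mp hq
  rw [degree_X_pow] at hdeg
  exact lt_irrefl _ hdeg

def compAffine (K : Set ℝ) (f : C(ℝ, ℝ)) (a b : ℝ) : C(K, ℝ) :=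
  ⟨fun t => f (a * t + b), by fun_prop⟩

@[simp]
theorem compAffine_apply (f : C(ℝ, ℝ)) (a b : ℝ) (t : K) :
    compAffine K f a b t = f (a * t + b) :=
  rfl

theorem fwdDiff_iter_compAffine_apply (f : C(ℝ, ℝ)) (n : ℕ) (h b : ℝ) (t : K) :
    (Δ_[h])^[n] (fun a => compAffine K f a b) 0 t = (Δ_[h * t])^[n] f b := by
  rw [fwdDiff_iter_eq_sum_shift, fwdDiff_iter_eq_sum_shift, ContinuousMap.sum_apply]
  refine Finset.sum_congr rfl fun k _ => ?_
  simp only [ContinuousMap.zsmul_apply, compAffine_apply, zero_add, nsmul_eq_mul]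
  ring_nf

theorem tendsto_fwdDiff_iter_compAffine [CompactSpace K] {f : C(ℝ, ℝ)} {n : ℕ}
    (hf : ContDiff ℝ n f) (b : ℝ) :
    Tendsto (fun h : ℝ => (h ^ n)⁻¹ • (Δ_[h])^[n] (fun a => compAffine K f a b) 0) (𝓝[≠] 0)
      (𝓝 (iteratedDeriv n f b • (X ^ n : ℝ[X]).toContinuousMapOn K)) := by
  set M := ‖(X : ℝ[X]).toContinuousMapOn K‖
  have hM (t : K) : |(t : ℝ)| ≤ M := by
    simpa using ContinuousMap.norm_coe_le_norm ((X : ℝ[X]).toContinuousMapOn K) t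
  set g := iteratedDeriv n f
  rw [Metric.tendsto_nhdsWithin_nhds]
  intro e he
  obtain ⟨δ, hδ, hgδ⟩ := Metric.continuous_iff.mp (hf.continuous_iteratedDeriv' n) b
    (e / (2 * (M ^ n + 1))) (by positivity)
  refine ⟨δ / (n * M + 1), by positivity, fun h (hh0 : h ≠ 0) hh => ?_⟩
  rw [Real.dist_eq, sub_zero, lt_div_iff₀ (by positivity)] at hh
  refine lt_of_le_of_lt ((ContinuousMap.dist_le (by positivity)).mpr fun t => ?_) (half_lt_self he)
  obtain ⟨θ, hθ, hΔ⟩ := exists_fwdDiff_iter_eq_pow_mul_iteratedDeriv hf (h * t) b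
  have hξ : dist (b + θ * (h * t)) b < δ := by
    rw [Real.dist_eq, add_sub_cancel_left, abs_mul, abs_mul, abs_of_nonneg hθ.1]
    calc θ * (|h| * |(t : ℝ)|) ≤ n * (|h| * M) := by
          gcongr
          · exact hθ.2
          · exact hM t
      _ < δ := by nlinarith [abs_nonneg h]
  have happly : ((h ^ n)⁻¹ • (Δ_[h])^[n] (fun a => compAffine K f a b) 0) t
      = (t : ℝ) ^ n * g (b + θ * (h * t)) := by
    rw [ContinuousMap.smul_apply, fwdDiff_iter_compAffine_apply, hΔ, smul_eq_mul, mul_pow,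
      ← mul_assoc, ← mul_assoc, inv_mul_cancel₀ (pow_ne_zero n hh0), one_mul]
  rw [Real.dist_eq, happly, ContinuousMap.smul_apply, smul_eq_mul, toContinuousMapOn_apply,
    toContinuousMap_apply, eval_X_pow, mul_comm (g b), ← mul_sub, abs_mul, abs_pow]
  calc |(t : ℝ)| ^ n * |g (b + θ * (h * t)) - g b| ≤ M ^ n * (e / (2 * (M ^ n + 1))) := by
        gcongr
        · exact hM t
        · exact (hgδ _ hξ).le
    _ = e / 2 * (M ^ n / (M ^ n + 1)) := by field_simp
    _ ≤ e / 2 := mul_le_of_le_one_right (by positivity) ((div_le_one (by positivity)).mpr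
        (by linarith))

theorem iteratedDeriv_mul_map_X_pow_eq_zero [CompactSpace K] (L : C(K, ℝ) →L[ℝ] ℝ)
    {f : C(ℝ, ℝ)} {n : ℕ} (hf : ContDiff ℝ n f) {b ε : ℝ} (hε : 0 < ε)
    (hL : ∀ a, |a| ≤ ε → L (compAffine K f a b) = 0) :
    iteratedDeriv n f b * L ((X ^ n : ℝ[X]).toContinuousMapOn K) = 0 := by
  have hlim := (L.continuous.tendsto _).comp (tendsto_fwdDiff_iter_compAffine (K := K) hf b)
  have hev : ∀ᶠ h in 𝓝[≠] (0 : ℝ),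
      L ((h ^ n)⁻¹ • (Δ_[h])^[n] (fun a => compAffine K f a b) 0) = 0 := by
    filter_upwards [nhdsWithin_le_nhds (Metric.ball_mem_nhds 0
      (by positivity : 0 < ε / (n + 1)))] with h hh
    rw [mem_ball_zero_iff, Real.norm_eq_abs, lt_div_iff₀ (by positivity)] at hh
    rw [map_smul, fwdDiff_iter_eq_sum_shift, map_sum, Finset.sum_eq_zero, smul_zero]
    intro k hk
    have hk' : (k : ℝ) ≤ n := by exact_mod_cast Nat.lt_succ_iff.mp (Finset.mem_range.mp hk)
    rw [map_zsmul, zero_add, hL _ ?_, zsmul_zero]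
    rw [nsmul_eq_mul, abs_mul, Nat.abs_cast]
    nlinarith [abs_nonneg h]
  simpa using tendsto_nhds_unique hlim (tendsto_const_nhds.congr' (hev.mono fun _ h => h.symm))

end ContinuousFunctionsOnCompact

namespace ContDiffBump

noncomputable def mollify (ρ : ContDiffBump (0 : ℝ)) (ψ : C(ℝ, ℝ)) : C(ℝ, ℝ) :=
  ⟨convolution (ρ.normed volume) ψ (ContinuousLinearMap.lsmul ℝ ℝ) volume,
    (ρ.hasCompactSupport_normed.contDiff_convolution_left (n := 0) _ ρ.contDiff_normed
      ψ.continuous.locallyIntegrable).continuous⟩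

theorem contDiff_mollify (ρ : ContDiffBump (0 : ℝ)) (ψ : C(ℝ, ℝ)) (n : ℕ) :
    ContDiff ℝ n (ρ.mollify ψ) :=
  ρ.hasCompactSupport_normed.contDiff_convolution_left _ ρ.contDiff_normed
    ψ.continuous.locallyIntegrable

theorem map_compAffine_mollify_eq_zero {K : Set ℝ} [CompactSpace K] (L : C(K, ℝ) →L[ℝ] ℝ)
    (ρ : ContDiffBump (0 : ℝ)) (ψ : C(ℝ, ℝ)) {a b : ℝ}
    (hL : ∀ s, |s| < ρ.rOut → L (compAffine K ψ a (b - s)) = 0) :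
    L (compAffine K (ρ.mollify ψ) a b) = 0 := by
  set Ψ : ℝ → C(K, ℝ) := fun s => ρ.normed volume s • compAffine K ψ a (b - s)
  have hΨ : Integrable Ψ := by
    refine Continuous.integrable_of_hasCompactSupport ?_ ρ.hasCompactSupport_normed.smul_right
    refine ρ.continuous_normed.smul (ContinuousMap.continuous_of_continuous_uncurry _ ?_)
    simp only [compAffine_apply]
    fun_prop
  -- `(ρ ⋆ ψ)(a t + b) = ∫ ρ(s) ψ(a t + b - s) ds`, an integral of functions killed by `L`.
  have hint : ∫ s, Ψ s = compAffine K (ρ.mollify ψ) a b := by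
    ext t
    rw [ContinuousMap.integral_apply hΨ, compAffine_apply, mollify, ContinuousMap.coe_mk,
      convolution_def]
    simp [Ψ, add_sub_assoc]
  rw [← hint, ← L.integral_comp_comm hΨ]
  refine integral_eq_zero_of_ae (Eventually.of_forall fun s => ?_)
  by_cases hs : ρ.normed volume s = 0
  · simp [Ψ, hs]
  · have hs' : |s| < ρ.rOut := by
      simpa [Real.dist_eq] using (ρ.support_normed_eq (μ := volume)).subset hs
    simp [Ψ, hL s hs']

end ContDiffBump

section Annihilator

variable {K : Set ℝ} [CompactSpace K] (L : C(K, ℝ) →L[ℝ] ℝ)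

theorem exists_polynomial_eqOn_of_map_compAffine_eq_zero {ψ : C(ℝ, ℝ)} {n : ℕ}
    (hn : L ((X ^ n : ℝ[X]).toContinuousMapOn K) ≠ 0) {c d ε η : ℝ} (hcd : c < d) (hε : 0 < ε)
    (hη : 0 < η) (hL : ∀ a b, |a| ≤ ε → b ∈ Icc (c - η) (d + η) → L (compAffine K ψ a b) = 0) :
    ∃ p : ℝ[X], EqOn ψ (fun x => p.eval x) (Icc c d) := by
  let ρ (k : ℕ) : ContDiffBump (0 : ℝ) :=
    ⟨η / (k + 2), η / (k + 1), by positivity, by gcongr; linarith⟩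
  have hρ (k : ℕ) : ∃ p : ℝ[X], p.degree < n ∧
      EqOn ((ρ k).mollify ψ) (fun x => p.eval x) (Icc c d) := by
    refine exists_polynomial_eqOn_of_iteratedDeriv_eq_zero ordConnected_Icc
      ((ρ k).contDiff_mollify ψ n) fun b hb => ?_
    refine (mul_eq_zero.mp (iteratedDeriv_mul_map_X_pow_eq_zero L ((ρ k).contDiff_mollify ψ n) hε
      fun a ha => (ρ k).map_compAffine_mollify_eq_zero L ψ fun s hs => hL a _ ha ?_)).resolve_right
        hn
    have hsη : |s| ≤ η := hs.le.trans (div_le_self hη.le (by linarith [k.cast_nonneg (α := ℝ)]))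
    constructor <;> linarith [hb.1, hb.2, abs_le.mp hsη]
  have hρ_lim : Tendsto (fun k => (ρ k).rOut) atTop (𝓝 0) :=
    tendsto_const_div_atTop_nhds_zero_nat η |>.comp (tendsto_add_atTop_nat 1) |>.congr fun k => by
      simp [ρ]
  obtain ⟨p, -, hp⟩ := exists_polynomial_eqOn_of_tendsto (Icc_infinite hcd) hρ fun x _ =>
    ContDiffBump.convolution_tendsto_right hρ_lim
      (Eventually.of_forall fun _ => ψ.continuous.aestronglyMeasurable)
      ((ψ.continuous.tendsto x).comp tendsto_snd) tendsto_const_nhds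
  exact ⟨p, hp⟩

theorem exists_polynomial_eqOn_Icc_of_map_eq_zero {U : Set ℝ} (hU : IsOpen U) {φ : ℝ → ℝ}
    (hφ : ContinuousOn φ U) (hL : ∀ g ∈ affineCompositions K U φ, L g = 0) {n : ℕ}
    (hn : L ((X ^ n : ℝ[X]).toContinuousMapOn K) ≠ 0) {c d : ℝ} (hcd : c < d)
    (hcdU : Icc c d ⊆ U) : ∃ p : ℝ[X], EqOn φ (fun x => p.eval x) (Icc c d) := by
  obtain ⟨δ, hδ, hδU⟩ := isCompact_Icc.exists_thickening_subset_open hU hcdU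
  set η := δ / 3
  have hη : 0 < η := by positivity
  have hmargin : Icc (c - 2 * η) (d + 2 * η) ⊆ U := fun x hx =>
    hδU (Metric.mem_thickening_iff.mpr ⟨projIcc c d hcd.le x, Subtype.prop _, by
      rw [Real.dist_eq, abs_sub_lt_iff, projIcc]; grind⟩)
  have hcd' : c - 2 * η ≤ d + 2 * η := by linarith
  let ψ : C(ℝ, ℝ) := ⟨fun x => φ (projIcc _ _ hcd' x),
    hφ.comp_continuous (continuous_subtype_val.comp continuous_projIcc)
      fun x => hmargin (projIcc _ _ hcd' x).2⟩
  have hψ : EqOn ψ φ (Icc (c - 2 * η) (d + 2 * η)) := fun x hx => by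
    simp [ψ, projIcc_of_mem hcd' hx]
  set M := ‖(X : ℝ[X]).toContinuousMapOn K‖
  have hM (t : K) : |(t : ℝ)| ≤ M := by
    simpa using ContinuousMap.norm_coe_le_norm ((X : ℝ[X]).toContinuousMapOn K) t
  have hε : 0 < η / (M + 1) := by positivity
  obtain ⟨p, hp⟩ := exists_polynomial_eqOn_of_map_compAffine_eq_zero L hn hcd hε hη
    fun a b ha hb => by
      have hmem (t : K) : a * t + b ∈ Icc (c - 2 * η) (d + 2 * η) := by
        have hat : |a * t| ≤ η := by
          rw [abs_mul]
          calc |a| * |(t : ℝ)| ≤ η / (M + 1) * M := by gcongr; exact hM t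
            _ ≤ η := by rw [div_mul_eq_mul_div, div_le_iff₀ (by positivity)]; nlinarith
        constructor <;> linarith [hb.1, hb.2, abs_le.mp hat]
      exact hL (compAffine K ψ a b) ⟨a, b, fun t ht => hmargin (hmem ⟨t, ht⟩), fun t => hψ (hmem t)⟩
  exact ⟨p, fun x hx => (hψ ⟨by linarith [hx.1], by linarith [hx.2]⟩).symm.trans (hp hx)⟩

end Annihilator

/-- For a nonempty open interval `U`, an infinite compact set `K ⊆ ℝ`
and `φ` continuous on `U`, the span of `{φ ∘ g |_K : g affine, g(K) ⊆ U}` is dense in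
`C(K)` if and only if `φ` does not coincide on `U` with a polynomial. -/
theorem stmt_1 (U : Set ℝ) (hUopen : IsOpen U) (hUconn : U.OrdConnected)
    (hUne : U.Nonempty) (K : Set ℝ) (hKcompact : IsCompact K) (hKinf : K.Infinite)
    (φ : ℝ → ℝ) (hφ : ContinuousOn φ U) :
    Dense (↑(Submodule.span ℝ
        {h : C(K, ℝ) | ∃ a b : ℝ, (∀ t ∈ K, a * t + b ∈ U) ∧
          ∀ x : K, h x = φ (a * (x : ℝ) + b)}) : Set C(K, ℝ)) ↔
      ¬∃ p : Polynomial ℝ, ∀ t ∈ U, φ t = p.eval t := by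
  have : CompactSpace K := isCompact_iff_compactSpace.mp hKcompact
  refine ⟨fun hdense ⟨p, hp⟩ => not_dense_span_affineCompositions hKinf hp hdense,
    fun hpoly => by_contra fun hnd => hpoly ?_⟩
  obtain ⟨L, hL0, hL⟩ :=
    (Submodule.span ℝ (affineCompositions K U φ)).exists_ne_zero_forall_eq_zero_of_not_dense hnd
  obtain ⟨n, hn⟩ : ∃ n : ℕ, L ((X ^ n : ℝ[X]).toContinuousMapOn K) ≠ 0 := by
    by_contra! h
    exact hL0 (L.eq_zero_of_map_X_pow_eq_zero h)
  exact exists_polynomial_eqOn_of_forall_Icc hUopen hUconn hUne fun c d hcd hcdU =>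
    exists_polynomial_eqOn_Icc_of_map_eq_zero L hUopen hφ
      (fun g hg => hL g (Submodule.subset_span hg)) hn hcd hcdU
end

section
/- Let E and F be locally convex Hausdorff real topological vector spaces and let Φ : E → F be continuous. Then Φ is a polynomial — i.e., there exist n ∈ ℕ, a vector w₀ ∈ F, and maps M_k : E^k → F for k = 1, …, n, each symmetric and linear separately in each coordinate, such that Φ(e) = w₀ + M₁(e) + M₂(e, e) + ⋯ + M_n(e, …, e) for all e ∈ E — if and only if there exists m ∈ ℕ such that for every continuous linear functional ν on F and all e, b ∈ E, the function t ↦ ν(Φ(t•e + b)) coincides with a polynomial of degree at most m. -/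
/-!
Along a line `t ↦ t • e + b`, a function of degree `≤ m` has `Δ_[e] ^[m]` equal to `m!` times its
leading coefficient. Comparing the lines of a plane shows that this coefficient does not depend
on `b`; hence each forward difference lowers the degree along lines by one, and the mixed
differences `Δ_[h₁] ⋯ Δ_[hₘ] Φ` are affine along lines, so linear in each `hᵢ`. Thus
`M (h₁, …, hₘ) = m!⁻¹ • Δ_[h₁] ⋯ Δ_[hₘ] Φ 0` is symmetric multilinear, `Φ - M (·, …, ·)` has
degree `≤ m - 1` along lines, and induction on `m` gives the expansion. All of this is proved for
the scalar functions `ν ∘ Φ` and carried back to `Φ` because continuous functionals separate the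
points of `F` (Hahn–Banach).
-/

open Polynomial Finset
open scoped fwdDiff

section MixedFwdDiff

variable {M G : Type*} [AddCommMonoid M] [AddCommGroup G]

def mixedFwdDiff (l : List M) (f : M → G) : M → G := l.foldr fwdDiff f

@[simp] lemma mixedFwdDiff_nil (f : M → G) : mixedFwdDiff [] f = f := rfl

@[simp] lemma mixedFwdDiff_cons (h : M) (l : List M) (f : M → G) :
    mixedFwdDiff (h :: l) f = Δ_[h] (mixedFwdDiff l f) := rfl

lemma fwdDiff_comm (a b : M) (f : M → G) : Δ_[a] (Δ_[b] f) = Δ_[b] (Δ_[a] f) := by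
  ext x
  simp only [fwdDiff, add_right_comm x a b]
  abel

lemma mixedFwdDiff_perm {l l' : List M} (p : l.Perm l') (f : M → G) :
    mixedFwdDiff l f = mixedFwdDiff l' f := by
  induction p with
  | nil => rfl
  | cons a _ ih => rw [mixedFwdDiff_cons, ih, mixedFwdDiff_cons]
  | swap a b l => exact fwdDiff_comm b a _
  | trans _ _ ih₁ ih₂ => exact ih₁.trans ih₂

lemma mixedFwdDiff_replicate (n : ℕ) (h : M) (f : M → G) :
    mixedFwdDiff (List.replicate n h) f = Δ_[h] ^[n] f := by
  induction n with
  | zero => rfl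
  | succ n ih => rw [List.replicate_succ, mixedFwdDiff_cons, ih, Function.iterate_succ_apply']

lemma map_mixedFwdDiff {G' 𝓕 : Type*} [AddCommGroup G'] [FunLike 𝓕 G G']
    [AddMonoidHomClass 𝓕 G G'] (g : 𝓕) (l : List M) (f : M → G) (x : M) :
    g (mixedFwdDiff l f x) = mixedFwdDiff l (fun y => g (f y)) x := by
  induction l generalizing x with
  | nil => rfl
  | cons h l ih => simp only [mixedFwdDiff_cons, fwdDiff, map_sub, ih]

end MixedFwdDiff

theorem Polynomial.iterate_fwdDiff_eval_of_natDegree_le {R : Type*} [CommRing R] {p : R[X]}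
    {n : ℕ} (hp : p.natDegree ≤ n) (x : R) : Δ_[1] ^[n] p.eval x = n.factorial * p.coeff n := by
  rcases hp.lt_or_eq with hlt | rfl
  · rw [fwdDiff_iter_eq_zero_of_degree_lt hlt, coeff_eq_zero_of_natDegree_lt hlt]
    simp
  · rw [fwdDiff_iter_degree_eq_factorial]
    simp [mul_comm]

theorem iterate_fwdDiff_comp_line {𝕜 E G : Type*} [Ring 𝕜] [AddCommGroup E] [Module 𝕜 E]
    [AddCommGroup G] (f : E → G) (e b : E) (n : ℕ) (t : 𝕜) :
    Δ_[1] ^[n] (fun s : 𝕜 => f (s • e + b)) t = Δ_[e] ^[n] f (t • e + b) := by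
  induction n generalizing f with
  | zero => rfl
  | succ n ih =>
    have : Δ_[(1 : 𝕜)] (fun s => f (s • e + b)) = fun s => Δ_[e] f (s • e + b) := by
      ext s
      simp only [fwdDiff, add_smul, one_smul, add_right_comm _ e b]
    rw [Function.iterate_succ_apply, this, ih, Function.iterate_succ_apply]

section LineDegree

variable {𝕜 E : Type*} [Field 𝕜] [AddCommGroup E] [Module 𝕜 E]

lemma iterate_fwdDiff_eq_factorial_mul_coeff {G : E → 𝕜} {e b : E} {p : 𝕜[X]} {n : ℕ}
    (hpn : p.natDegree ≤ n) (hp : ∀ t : 𝕜, G (t • e + b) = p.eval t) :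
    Δ_[e] ^[n] G b = n.factorial * p.coeff n := by
  have hline := iterate_fwdDiff_comp_line G e b n (0 : 𝕜)
  rw [zero_smul, zero_add, funext hp, p.iterate_fwdDiff_eval_of_natDegree_le hpn] at hline
  exact hline.symm

def LineDegreeLE (D : ℕ) (G : E → 𝕜) : Prop :=
  ∀ e b : E, ∃ p : 𝕜[X], p.natDegree ≤ D ∧ ∀ t : 𝕜, G (t • e + b) = p.eval t

namespace LineDegreeLE

variable {D : ℕ} {G G₁ G₂ : E → 𝕜}

lemma mono (hG : LineDegreeLE D G) {D' : ℕ} (hD : D ≤ D') : LineDegreeLE D' G := fun e b =>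
  (hG e b).imp fun _ hp => ⟨hp.1.trans hD, hp.2⟩

lemma add (h₁ : LineDegreeLE D G₁) (h₂ : LineDegreeLE D G₂) :
    LineDegreeLE D (fun x => G₁ x + G₂ x) := fun e b => by
  obtain ⟨p₁, hp₁D, hp₁⟩ := h₁ e b
  obtain ⟨p₂, hp₂D, hp₂⟩ := h₂ e b
  exact ⟨p₁ + p₂, natDegree_add_le_of_degree_le hp₁D hp₂D, fun t => by simp [hp₁, hp₂]⟩

lemma comp_add_right (hG : LineDegreeLE D G) (h : E) : LineDegreeLE D (fun x => G (x + h)) :=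
  fun e b => by simpa only [add_assoc] using hG e (b + h)

lemma sub_of_iterate_fwdDiff_eq [CharZero 𝕜] (h₁ : LineDegreeLE (D + 1) G₁)
    (h₂ : LineDegreeLE (D + 1) G₂) (h : ∀ e b : E, Δ_[e] ^[D + 1] G₁ b = Δ_[e] ^[D + 1] G₂ b) :
    LineDegreeLE D (fun x => G₁ x - G₂ x) := fun e b => by
  obtain ⟨p₁, hp₁D, hp₁⟩ := h₁ e b
  obtain ⟨p₂, hp₂D, hp₂⟩ := h₂ e b
  have htop : p₁.coeff (D + 1) = p₂.coeff (D + 1) := by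
    refine mul_left_cancel₀ (Nat.cast_ne_zero.mpr (D + 1).factorial_ne_zero) ?_
    rw [← iterate_fwdDiff_eq_factorial_mul_coeff hp₁D hp₁,
      ← iterate_fwdDiff_eq_factorial_mul_coeff hp₂D hp₂, h]
  refine ⟨p₁ - p₂, natDegree_le_iff_coeff_eq_zero.mpr fun N hN => ?_, fun t => by
    simp [hp₁, hp₂]⟩
  rcases (Nat.succ_le_of_lt hN).eq_or_lt with rfl | hlt
  · rw [coeff_sub, htop, sub_self]
  · rw [coeff_sub, coeff_eq_zero_of_natDegree_lt (hp₁D.trans_lt hlt),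
      coeff_eq_zero_of_natDegree_lt (hp₂D.trans_lt hlt), sub_self]

lemma apply_eq_apply_zero (hG : LineDegreeLE 0 G) (x : E) : G x = G 0 := by
  obtain ⟨p, hpD, hp⟩ := hG x 0
  have h1 := hp 1
  have h0 := hp 0
  rw [one_smul, add_zero] at h1
  rw [zero_smul, add_zero] at h0
  rw [h1, h0, eq_C_of_natDegree_le_zero hpD, eval_C, eval_C]

lemma apply_smul_add (hG : LineDegreeLE 1 G) (t : 𝕜) (e b : E) :
    G (t • e + b) = G b + t * (G (e + b) - G b) := by
  obtain ⟨p, hpD, hp⟩ := hG e b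
  have h1 := hp 1
  have h0 := hp 0
  rw [one_smul] at h1
  rw [zero_smul, zero_add] at h0
  rw [hp, h1, h0, eq_X_add_C_of_natDegree_le_one hpD]
  simp only [eval_add, eval_mul, eval_C, eval_X]
  ring

end LineDegreeLE

lemma lineDegreeLE_const (c : 𝕜) : LineDegreeLE 0 (fun _ : E => c) :=
  fun _ _ => ⟨C c, by simp, fun _ => by simp⟩

lemma lineDegreeLE_sum {ι : Type*} (s : Finset ι) {D : ℕ} {G : ι → E → 𝕜}
    (hG : ∀ i ∈ s, LineDegreeLE D (G i)) : LineDegreeLE D (fun x => ∑ i ∈ s, G i x) := by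
  classical
  induction s using Finset.induction_on with
  | empty => simpa using (lineDegreeLE_const (E := E) (0 : 𝕜)).mono D.zero_le
  | insert i s hi ih =>
    simp only [Finset.sum_insert hi]
    exact (hG i (mem_insert_self i s)).add (ih fun j hj => hG j (mem_insert_of_mem hj))

end LineDegree

section CharZero

variable {𝕜 E : Type*} [Field 𝕜] [CharZero 𝕜] [AddCommGroup E] [Module 𝕜 E]

lemma eval_eq_sum_lagrangeBasis {q : 𝕜[X]} {D : ℕ} (hq : q.natDegree ≤ D) (σ : 𝕜) :
    q.eval σ = ∑ j ∈ range (D + 1),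
      (Lagrange.basis (range (D + 1)) (Nat.cast : ℕ → 𝕜) j).eval σ * q.eval (j : 𝕜) := by
  have hvs : Set.InjOn (Nat.cast : ℕ → 𝕜) (range (D + 1)) := Nat.cast_injective.injOn
  have hdeg : q.degree < #(range (D + 1)) := by
    rw [card_range]
    exact (degree_le_of_natDegree_le hq).trans_lt (by exact_mod_cast D.lt_succ_self)
  conv_lhs => rw [Lagrange.eq_interpolate hvs hdeg, Lagrange.interpolate_apply]
  simp [eval_finsetSum, mul_comm]

lemma sum_coeff_mul_coeff_eq_zero_of_natDegree_comp_le {ι : Type*} (s : Finset ι)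
    (B p : ι → 𝕜[X]) {D a : ℕ} (ha : a ≠ 0)
    (hdiag : ∀ u : 𝕜, (∑ j ∈ s, (B j).comp (C u * X) * p j).natDegree ≤ D) :
    ∑ j ∈ s, (p j).coeff D * (B j).coeff a = 0 := by
  set W : 𝕜[X] := ∑ j ∈ s, ∑ i ∈ range (a + D + 1),
    C ((B j).coeff i * (p j).coeff (a + D - i)) * X ^ i
  -- `W.eval u` is the coefficient of `X ^ (a + D)` in the polynomial of `hdiag u`.
  have hW : W = 0 := Polynomial.funext fun u => by
    have := coeff_eq_zero_of_natDegree_lt (n := a + D) ((hdiag u).trans_lt (by omega))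
    simp only [finsetSum_coeff, coeff_mul, Nat.sum_antidiagonal_eq_sum_range_succ_mk,
      comp_C_mul_X_coeff] at this
    simp only [W, eval_finsetSum, eval_mul, eval_C, eval_pow, eval_X, eval_zero, ← this]
    exact sum_congr rfl fun j _ => sum_congr rfl fun i _ => by ring
  have := congrArg (coeff · a) hW
  simp only [W, finsetSum_coeff, coeff_C_mul_X_pow, coeff_zero] at this
  rw [← this]
  refine sum_congr rfl fun j _ => ?_
  rw [sum_ite_eq, if_pos (mem_range.mpr (by omega)), Nat.add_sub_cancel_left, mul_comm]

namespace LineDegreeLE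

variable {D : ℕ} {G : E → 𝕜}

/-- In the plane `(σ, t) ↦ t • e + σ • h + b`, Lagrange interpolation in `σ` writes `G` as
`∑ⱼ Bⱼ(σ) pⱼ(t)` with all degrees `≤ D`. Degree `≤ D` along the lines `σ = u t` kills every
monomial `σᵃ tᴰ` with `a ≥ 1`, so the `tᴰ`-coefficient `Q(σ)` is constant. -/
theorem iterate_fwdDiff_add (hG : LineDegreeLE D G) (e h b : E) :
    Δ_[e] ^[D] G (b + h) = Δ_[e] ^[D] G b := by
  set B : ℕ → 𝕜[X] := Lagrange.basis (range (D + 1)) Nat.cast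
  choose p hpD hp using fun j : ℕ => hG e ((j : 𝕜) • h + b)
  have hexpand : ∀ σ t : 𝕜, G (t • e + (σ • h + b)) = ∑ j ∈ range (D + 1),
      (B j).eval σ * (p j).eval t := fun σ t => by
    obtain ⟨q, hqD, hq⟩ := hG h (t • e + b)
    rw [add_left_comm, hq, eval_eq_sum_lagrangeBasis hqD]
    refine sum_congr rfl fun j _ => ?_
    rw [← hq, add_left_comm, hp]
  set Q : 𝕜[X] := ∑ j ∈ range (D + 1), C ((p j).coeff D) * B j
  have hQ : Q = C (Q.coeff 0) := by
    ext (_ | a)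
    · simp
    · rw [coeff_C_succ, finsetSum_coeff]
      simp only [coeff_C_mul]
      refine sum_coeff_mul_coeff_eq_zero_of_natDegree_comp_le _ B p a.succ_ne_zero fun u => ?_
      obtain ⟨r, hrD, hr⟩ := hG (e + u • h) b
      convert hrD
      refine Polynomial.funext fun t => ?_
      rw [← hr, smul_add, smul_smul, add_assoc, hexpand, eval_finsetSum]
      simp [mul_comm t u]
  have htop : ∀ σ : 𝕜, Δ_[e] ^[D] G (σ • h + b) = D.factorial * Q.eval σ := fun σ => by
    rw [iterate_fwdDiff_eq_factorial_mul_coeff (p := ∑ j ∈ range (D + 1), C ((B j).eval σ) * p j)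
      (natDegree_sum_le_of_forall_le _ _ fun j _ => (natDegree_C_mul_le _ _).trans (hpD j))
      fun t => by simp [hexpand, eval_finsetSum]]
    simp [Q, finsetSum_coeff, eval_finsetSum, mul_comm]
  have h1 := htop 1
  have h0 := htop 0
  rw [one_smul, add_comm] at h1
  rw [zero_smul, zero_add] at h0
  rw [h1, h0, hQ, eval_C, eval_C]

theorem fwdDiff (hG : LineDegreeLE (D + 1) G) (h : E) : LineDegreeLE D (Δ_[h] G) :=
  (hG.comp_add_right h).sub_of_iterate_fwdDiff_eq hG fun e b => by
    rw [fwdDiff_iter_comp_add, hG.iterate_fwdDiff_add]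

theorem mixedFwdDiff {l : List E} (hG : LineDegreeLE (D + l.length) G) :
    LineDegreeLE D (mixedFwdDiff l G) := by
  induction l generalizing D with
  | nil => exact hG
  | cons h l ih =>
    exact (ih (by simpa [Nat.add_right_comm, Nat.add_assoc] using hG)).fwdDiff h

lemma isLinearMap_fwdDiff (hG : LineDegreeLE 1 G) :
    IsLinearMap 𝕜 (fun x => Δ_[x] G 0) where
  map_add x y := by
    -- `2⁻¹ • (x + y)` is the midpoint both of `0, x + y` and of `x, y`.
    have hmid₁ := hG.apply_smul_add 2⁻¹ (x + y) 0
    have hmid₂ := hG.apply_smul_add 2⁻¹ (y - x) x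
    simp only [add_zero, sub_add_cancel] at hmid₁ hmid₂
    rw [show (2 : 𝕜)⁻¹ • (y - x) + x = (2 : 𝕜)⁻¹ • (x + y) by module] at hmid₂
    simp only [_root_.fwdDiff, zero_add]
    linear_combination (2 : 𝕜) * hmid₂ - 2 * hmid₁
  map_smul t x := by
    have := hG.apply_smul_add t x 0
    simp only [add_zero] at this
    simp only [_root_.fwdDiff, zero_add, smul_eq_mul, this]
    ring

end LineDegreeLE

end CharZero

namespace MultilinearMap

variable {𝕜 E : Type*} [Field 𝕜] [AddCommGroup E] [Module 𝕜 E]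

lemma exists_poly_apply_line : ∀ {q : ℕ} (f : MultilinearMap 𝕜 (fun _ : Fin q => E) 𝕜) (e b : E),
    ∃ p : 𝕜[X], p.natDegree ≤ q ∧ p.coeff q = f (fun _ => e) ∧
      ∀ t : 𝕜, f (fun _ => t • e + b) = p.eval t
  | 0, f, e, _ => ⟨C (f fun _ => e), by simp, by simp,
      fun _ => by rw [eval_C]; exact congrArg f (Subsingleton.elim _ _)⟩
  | q + 1, f, e, b => by
    obtain ⟨pₑ, hpₑD, hpₑq, hpₑ⟩ := exists_poly_apply_line (f.curryLeft e) e b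
    obtain ⟨p_b, hp_bD, -, hp_b⟩ := exists_poly_apply_line (f.curryLeft b) e b
    have hcons : ∀ x : E, (fun _ : Fin (q + 1) => x) = Fin.cons x fun _ => x := fun x =>
      (Fin.cons_self_tail _).symm
    refine ⟨X * pₑ + p_b, natDegree_add_le_of_degree_le ?_ (hp_bD.trans q.le_succ), ?_,
      fun t => ?_⟩
    · exact natDegree_mul_le.trans (by rw [natDegree_X]; omega)
    · rw [coeff_add, coeff_X_mul, hpₑq, coeff_eq_zero_of_natDegree_lt (by omega), add_zero,
        curryLeft_apply, ← hcons]
    · rw [hcons, f.cons_add, f.cons_smul, ← curryLeft_apply, ← curryLeft_apply, hpₑ, hp_b]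
      simp

lemma lineDegreeLE_apply_diag {q : ℕ} (f : MultilinearMap 𝕜 (fun _ : Fin q => E) 𝕜) :
    LineDegreeLE q (fun x => f fun _ => x) := fun e b =>
  (f.exists_poly_apply_line e b).imp fun _ hp => ⟨hp.1, hp.2.2⟩

lemma iterate_fwdDiff_apply_diag {q : ℕ} (f : MultilinearMap 𝕜 (fun _ : Fin q => E) 𝕜)
    (e b : E) : Δ_[e] ^[q] (fun x => f fun _ => x) b = q.factorial * f (fun _ => e) := by
  obtain ⟨p, hpD, hpq, hp⟩ := f.exists_poly_apply_line e b
  rw [iterate_fwdDiff_eq_factorial_mul_coeff hpD hp, hpq]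

end MultilinearMap

lemma apply_update_eq_apply_cons_of_symmetric {α β : Type*} {n : ℕ} {f : (Fin (n + 1) → α) → β}
    (hsym : ∀ (σ : Equiv.Perm (Fin (n + 1))) (v : Fin (n + 1) → α), f (v ∘ σ) = f v)
    (v : Fin (n + 1) → α) (i : Fin (n + 1)) (x : α) :
    f (Function.update v i x) = f (Fin.cons x (Fin.tail (v ∘ Equiv.swap 0 i))) := by
  rw [← hsym (Equiv.swap 0 i), Function.update_comp_equiv, Equiv.symm_swap,
    Equiv.swap_apply_right, ← Fin.update_cons_zero (x := (v ∘ Equiv.swap 0 i) 0),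
    Fin.cons_self_tail]

namespace MultilinearMap

variable {𝕜 E F : Type*} [Field 𝕜] [AddCommGroup E] [Module 𝕜 E] [AddCommGroup F] [Module 𝕜 F]

def ofSymmetric {n : ℕ} (f : (Fin (n + 1) → E) → F)
    (hsym : ∀ (σ : Equiv.Perm (Fin (n + 1))) (v : Fin (n + 1) → E), f (v ∘ σ) = f v)
    (hlin : ∀ w : Fin n → E, IsLinearMap 𝕜 fun x => f (Fin.cons x w)) :
    MultilinearMap 𝕜 (fun _ : Fin (n + 1) => E) F :=
  mk' f
    (fun v i x y => by simp only [apply_update_eq_apply_cons_of_symmetric hsym, (hlin _).map_add])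
    (fun v i c x => by simp only [apply_update_eq_apply_cons_of_symmetric hsym, (hlin _).map_smul])

@[simp] lemma ofSymmetric_apply {n : ℕ} (f : (Fin (n + 1) → E) → F) (hsym hlin)
    (v : Fin (n + 1) → E) : ofSymmetric (𝕜 := 𝕜) f hsym hlin v = f v := rfl

end MultilinearMap

section VectorValued

variable (𝕜 : Type*) {E F : Type*} [Field 𝕜] [AddCommGroup E] [Module 𝕜 E] [AddCommGroup F]
  [Module 𝕜 F]

def HasPolynomialExpansion (n : ℕ) (Φ : E → F) : Prop :=
  ∃ (w₀ : F) (M : (k : Fin n) → MultilinearMap 𝕜 (fun _ : Fin (k.1 + 1) => E) F),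
    (∀ (k : Fin n) (σ : Equiv.Perm (Fin (k.1 + 1))) (v : Fin (k.1 + 1) → E),
      M k (v ∘ σ) = M k v) ∧
    ∀ e : E, Φ e = w₀ + ∑ k : Fin n, M k (fun _ => e)

def WeakLineDegreeLE [TopologicalSpace 𝕜] [TopologicalSpace F] (m : ℕ) (Φ : E → F) : Prop :=
  ∀ ν : F →L[𝕜] 𝕜, LineDegreeLE m (fun x => ν (Φ x))

variable {𝕜}

lemma HasPolynomialExpansion.add_multilinear {n : ℕ} {Ψ : E → F}
    (hΨ : HasPolynomialExpansion 𝕜 n Ψ) {M : MultilinearMap 𝕜 (fun _ : Fin (n + 1) => E) F}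
    (hM : ∀ (σ : Equiv.Perm (Fin (n + 1))) (v : Fin (n + 1) → E), M (v ∘ σ) = M v) :
    HasPolynomialExpansion 𝕜 (n + 1) (fun x => Ψ x + M (fun _ => x)) := by
  obtain ⟨w₀, M', hM'sym, hΨM'⟩ := hΨ
  refine ⟨w₀, Fin.lastCases (motive := fun k : Fin (n + 1) =>
    MultilinearMap 𝕜 (fun _ : Fin (k.1 + 1) => E) F) M M', fun k => ?_, fun e => ?_⟩
  · induction k using Fin.lastCases with
    | last => simpa using hM
    | cast j => simpa using hM'sym j
  · simp [Fin.sum_univ_castSucc, hΨM', add_assoc]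

variable [TopologicalSpace 𝕜] [TopologicalSpace F] {Φ : E → F}

lemma HasPolynomialExpansion.weakLineDegreeLE {n : ℕ} (hΦ : HasPolynomialExpansion 𝕜 n Φ) :
    WeakLineDegreeLE 𝕜 n Φ := fun ν => by
  obtain ⟨w₀, M, -, hΦM⟩ := hΦ
  have hνΦ : (fun x => ν (Φ x)) = fun x => ν w₀ + ∑ k : Fin n,
      (ν.toLinearMap.compMultilinearMap (M k)) (fun _ => x) := by
    ext x
    simp [hΦM]
  rw [hνΦ]
  exact ((lineDegreeLE_const _).mono n.zero_le).add <| lineDegreeLE_sum _ fun k _ =>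
    (MultilinearMap.lineDegreeLE_apply_diag _).mono k.2

lemma WeakLineDegreeLE.apply_eq_apply_zero [SeparatingDual 𝕜 F] (hΦ : WeakLineDegreeLE 𝕜 0 Φ)
    (x : E) : Φ x = Φ 0 :=
  (SeparatingDual.eq_iff_forall_dual_eq (R := 𝕜)).mpr fun ν => (hΦ ν).apply_eq_apply_zero x

variable [CharZero 𝕜]

namespace WeakLineDegreeLE

theorem mixedFwdDiff {D : ℕ} {l : List E} (hΦ : WeakLineDegreeLE 𝕜 (D + l.length) Φ) :
    WeakLineDegreeLE 𝕜 D (mixedFwdDiff l Φ) := fun ν => by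
  have hν : (fun x => ν (_root_.mixedFwdDiff l Φ x)) = _root_.mixedFwdDiff l fun x => ν (Φ x) :=
    funext (map_mixedFwdDiff ν l Φ)
  rw [hν]
  exact (hΦ ν).mixedFwdDiff

theorem sub_multilinear_diag {m : ℕ} (hΦ : WeakLineDegreeLE 𝕜 (m + 1) Φ)
    {M : MultilinearMap 𝕜 (fun _ : Fin (m + 1) => E) F}
    (hM : ∀ e : E, ((m + 1).factorial : 𝕜) • M (fun _ => e) = Δ_[e] ^[m + 1] Φ 0) :
    WeakLineDegreeLE 𝕜 m (fun x => Φ x - M (fun _ => x)) := fun ν => by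
  set f := ν.toLinearMap.compMultilinearMap M
  have hν : (fun x => ν (Φ x - M fun _ => x)) = fun x => ν (Φ x) - f (fun _ => x) := by
    ext x
    simp [f]
  rw [hν]
  refine (hΦ ν).sub_of_iterate_fwdDiff_eq f.lineDegreeLE_apply_diag fun e b => ?_
  rw [f.iterate_fwdDiff_apply_diag, ← zero_add b, (hΦ ν).iterate_fwdDiff_add,
    ← mixedFwdDiff_replicate, ← map_mixedFwdDiff, mixedFwdDiff_replicate, ← hM e]
  simp [f]

variable [SeparatingDual 𝕜 F]

theorem isLinearMap_fwdDiff (hΦ : WeakLineDegreeLE 𝕜 1 Φ) :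
    IsLinearMap 𝕜 (fun x => Δ_[x] Φ 0) where
  map_add x y := (SeparatingDual.eq_iff_forall_dual_eq (R := 𝕜)).mpr fun ν => by
    simpa [fwdDiff] using (hΦ ν).isLinearMap_fwdDiff.map_add x y
  map_smul c x := (SeparatingDual.eq_iff_forall_dual_eq (R := 𝕜)).mpr fun ν => by
    simpa [fwdDiff] using (hΦ ν).isLinearMap_fwdDiff.map_smul c x

theorem exists_multilinear_factorial_smul_diag {m : ℕ} (hΦ : WeakLineDegreeLE 𝕜 (m + 1) Φ) :
    ∃ M : MultilinearMap 𝕜 (fun _ : Fin (m + 1) => E) F,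
      (∀ (σ : Equiv.Perm (Fin (m + 1))) (v : Fin (m + 1) → E), M (v ∘ σ) = M v) ∧
      ∀ e : E, ((m + 1).factorial : 𝕜) • M (fun _ => e) = Δ_[e] ^[m + 1] Φ 0 := by
  have hfac : ((m + 1).factorial : 𝕜) ≠ 0 := Nat.cast_ne_zero.mpr (m + 1).factorial_ne_zero
  set c : 𝕜 := ((m + 1).factorial : 𝕜)⁻¹
  set f : (Fin (m + 1) → E) → F := fun v => c • _root_.mixedFwdDiff (List.ofFn v) Φ 0
  have hsym : ∀ (σ : Equiv.Perm (Fin (m + 1))) (v : Fin (m + 1) → E), f (v ∘ σ) = f v :=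
    fun σ v => by simp only [f, mixedFwdDiff_perm (σ.ofFn_comp_perm v)]
  have hlin : ∀ w : Fin m → E, IsLinearMap 𝕜 fun x => f (Fin.cons x w) := fun w => by
    obtain ⟨hadd, hsmul⟩ := (WeakLineDegreeLE.mixedFwdDiff (l := List.ofFn w) (D := 1)
      (by simpa [add_comm] using hΦ)).isLinearMap_fwdDiff
    refine ⟨fun x y => ?_, fun a x => ?_⟩
    · simp only [f, List.ofFn_cons, mixedFwdDiff_cons, hadd, smul_add]
    · simp only [f, List.ofFn_cons, mixedFwdDiff_cons, hsmul, smul_comm c a]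
  refine ⟨MultilinearMap.ofSymmetric f hsym hlin, hsym, fun e => ?_⟩
  rw [MultilinearMap.ofSymmetric_apply, smul_smul, mul_inv_cancel₀ hfac, one_smul,
    List.ofFn_const, mixedFwdDiff_replicate]

theorem hasPolynomialExpansion : ∀ {m : ℕ} {Φ : E → F}, WeakLineDegreeLE 𝕜 m Φ →
    HasPolynomialExpansion 𝕜 m Φ
  | 0, Φ, hΦ => ⟨Φ 0, finZeroElim, finZeroElim, fun e => by simp [hΦ.apply_eq_apply_zero e]⟩
  | m + 1, Φ, hΦ => by
    obtain ⟨M, hMsym, hM⟩ := hΦ.exists_multilinear_factorial_smul_diag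
    simpa using (hΦ.sub_multilinear_diag hM).hasPolynomialExpansion.add_multilinear hMsym

end WeakLineDegreeLE

end VectorValued

theorem stmt_7_general (E F : Type*)
    [AddCommGroup E] [Module ℝ E]
    [AddCommGroup F] [Module ℝ F] [TopologicalSpace F] [IsTopologicalAddGroup F]
    [ContinuousSMul ℝ F] [LocallyConvexSpace ℝ F] [T2Space F]
    (Φ : E → F) :
    (∃ (n : ℕ) (w₀ : F) (M : (k : Fin n) → MultilinearMap ℝ (fun _ : Fin (k.1 + 1) => E) F),
        (∀ (k : Fin n) (σ : Equiv.Perm (Fin (k.1 + 1))) (v : Fin (k.1 + 1) → E),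
          M k (v ∘ σ) = M k v) ∧
        (∀ e : E, Φ e = w₀ + ∑ k : Fin n, M k (fun _ => e))) ↔
      ∃ m : ℕ, ∀ (ν : F →L[ℝ] ℝ) (e b : E),
        ∃ p : Polynomial ℝ, p.natDegree ≤ m ∧ ∀ t : ℝ, ν (Φ (t • e + b)) = p.eval t :=
  ⟨fun ⟨n, h⟩ => ⟨n, HasPolynomialExpansion.weakLineDegreeLE h⟩,
    fun ⟨m, h⟩ => ⟨m, WeakLineDegreeLE.hasPolynomialExpansion h⟩⟩

/-- A continuous map `Φ : E → F` between locally convex Hausdorff real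
topological vector spaces is a polynomial (i.e. `Φ(e) = w₀ + M₁(e) + ⋯ + Mₙ(e,…,e)` for
some symmetric multilinear maps `M_k : E^k → F`) iff there is `m ∈ ℕ` such that for every
continuous linear functional `ν` on `F` and all `e, b ∈ E` the function
`t ↦ ν(Φ(t•e + b))` is a polynomial of degree at most `m`. -/
theorem stmt_7 (E F : Type*)
    [AddCommGroup E] [Module ℝ E] [TopologicalSpace E] [IsTopologicalAddGroup E]
    [ContinuousSMul ℝ E] [LocallyConvexSpace ℝ E] [T2Space E]
    [AddCommGroup F] [Module ℝ F] [TopologicalSpace F] [IsTopologicalAddGroup F]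
    [ContinuousSMul ℝ F] [LocallyConvexSpace ℝ F] [T2Space F]
    (Φ : E → F) (hΦ : Continuous Φ) :
    (∃ (n : ℕ) (w₀ : F) (M : (k : Fin n) → MultilinearMap ℝ (fun _ : Fin (k.1 + 1) => E) F),
        (∀ (k : Fin n) (σ : Equiv.Perm (Fin (k.1 + 1))) (v : Fin (k.1 + 1) → E),
          M k (v ∘ σ) = M k v) ∧
        (∀ e : E, Φ e = w₀ + ∑ k : Fin n, M k (fun _ => e))) ↔
      ∃ m : ℕ, ∀ (ν : F →L[ℝ] ℝ) (e b : E),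
        ∃ p : Polynomial ℝ, p.natDegree ≤ m ∧ ∀ t : ℝ, ν (Φ (t • e + b)) = p.eval t :=
  stmt_7_general E F Φ
end

section
/- Let X be a completely regular Hausdorff (Tychonoff) topological space and F a real Banach space. If A ⊆ C(X) is such that the linear span of A is dense in C(X) with the compact-open topology, then the linear span of { g ⊗ f : g ∈ A, f ∈ F } is dense in C(X, F) with the compact-open topology. -/
/-!
On a compact set `K`, a function `h ∈ C(X, F)` is uniformly within `ε` of `∑ gᵢ • h xᵢ`, where
`(gᵢ)` is a finite partition of unity on `K` subordinate to the sets `{y | dist (h y) (h xᵢ) < ε / 2}`;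
complete regularity provides such partitions. Since `g ↦ g ⊗ f` is continuous and linear,
density of `span A` puts every `g ⊗ f` in the closure of `span (A ⊗ F)`, which therefore
contains the dense span of all elementary tensors.
-/

open Topology Set ContinuousLinearMap

section

variable {X : Type*} [TopologicalSpace X]

theorem ContinuousMap.mem_closure_iff_forall_isCompact_dist_lt {F : Type*} [PseudoMetricSpace F]
    {S : Set C(X, F)} {h : C(X, F)} :
    h ∈ closure S ↔ ∀ K, IsCompact K → ∀ ε > 0, ∃ s ∈ S, ∀ x ∈ K, dist (s x) (h x) < ε := by
  rw [mem_closure_iff_nhds_basis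
    (nhds_basis_uniformity' Metric.uniformity_basis_dist.compactConvergenceUniformity)]
  simp only [Prod.forall, and_imp, UniformSpace.ball, mem_preimage, mem_ofPred_eq, dist_comm (h _)]
  exact ⟨fun H K hK ε hε => H K ε hK hε, fun H K ε hK hε => H K hK ε hε⟩

theorem CompletelyRegularSpace.exists_bump [CompletelyRegularSpace X] {x : X} {U : Set X}
    (hU : IsOpen U) (hx : x ∈ U) :
    ∃ φ : C(X, ℝ), φ x = 1 ∧ (∀ y, 0 ≤ φ y) ∧ ∀ y ∉ U, φ y = 0 := by
  obtain ⟨f, hf, hfx, hfU⟩ := completely_regular_isOpen x U hU hx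
  exact ⟨⟨fun y => 1 - (f y : ℝ), by fun_prop⟩, by simp [hfx], fun y => by simp [(f y).2.2],
    fun y hy => by simp [hfU hy]⟩

theorem CompletelyRegularSpace.exists_finset_sum_eq_one_on_isCompact [CompletelyRegularSpace X]
    {K : Set X} (hK : IsCompact K) {U : X → Set X} (hU : ∀ x, IsOpen (U x))
    (hxU : ∀ x, x ∈ U x) :
    ∃ (t : Finset X) (g : X → C(X, ℝ)), (∀ i y, 0 ≤ g i y) ∧ (∀ i, ∀ y ∉ U i, g i y = 0) ∧
      ∀ y ∈ K, ∑ i ∈ t, g i y = 1 := by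
  choose φ hφx hφ0 hφU using fun x => exists_bump (hU x) (hxU x)
  obtain ⟨t, ht⟩ := hK.elim_finite_subcover (fun x => {y | 1 / 2 < φ x y})
    (fun x => isOpen_lt continuous_const (φ x).continuous)
    (fun y _ => mem_iUnion.2 ⟨y, by norm_num [hφx y]⟩)
  set ψ : C(X, ℝ) := ∑ i ∈ t, φ i
  have hψ : ∀ y, ψ y = ∑ i ∈ t, φ i y := fun y => by simp [ψ]
  have hψK : ∀ y ∈ K, 1 / 2 < ψ y := by
    intro y hy
    obtain ⟨i, hit, hiy⟩ := mem_iUnion₂.1 (ht hy)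
    exact hiy.trans_le (hψ y ▸ Finset.single_le_sum (fun j _ => hφ0 j y) hit)
  -- normalize by `max ψ (1/2)`, which is positive everywhere and equals `ψ` on `K`
  set d : C(X, ℝ) := ψ ⊔ ContinuousMap.const X (1 / 2)
  have hd : ∀ y, 0 < d y := fun y => by simp [d]
  refine ⟨t, fun i => ⟨fun y => φ i y / d y, (φ i).continuous.div d.continuous (hd · |>.ne')⟩,
    fun i y => div_nonneg (hφ0 i y) (hd y).le, fun i y hy => by simp [hφU i y hy],
    fun y hy => ?_⟩
  have hdK : d y = ψ y := max_eq_left (hψK y hy).le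
  simp only [ContinuousMap.coe_mk, ← Finset.sum_div, ← hψ, hdK]
  exact div_self (by linarith [hψK y hy])

theorem ContinuousMap.dense_span_smul_const [CompletelyRegularSpace X] {F : Type*}
    [SeminormedAddCommGroup F] [NormedSpace ℝ F] :
    Dense (Submodule.span ℝ {h : C(X, F) | ∃ (g : C(X, ℝ)) (f : F), ∀ x, h x = g x • f} :
      Set C(X, F)) := by
  refine fun h => mem_closure_iff_forall_isCompact_dist_lt.2 fun K hK ε hε => ?_
  obtain ⟨t, g, hg0, hgU, hg1⟩ := CompletelyRegularSpace.exists_finset_sum_eq_one_on_isCompact hK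
    (U := fun x => {y | dist (h y) (h x) < ε / 2})
    (fun x => isOpen_lt (by fun_prop) continuous_const) (fun x => by simpa using half_pos hε)
  refine ⟨∑ i ∈ t, (toSpanSingleton ℝ (h i)).compLeftContinuous ℝ X (g i),
    Submodule.sum_mem _ fun i _ => Submodule.subset_span ⟨g i, h i, fun x => by simp⟩,
    fun y hy => ?_⟩
  have hsub : (∑ i ∈ t, (toSpanSingleton ℝ (h i)).compLeftContinuous ℝ X (g i)) y - h y =
      ∑ i ∈ t, g i y • (h i - h y) := by
    simp [smul_sub, Finset.sum_sub_distrib, ← Finset.sum_smul, hg1 y hy]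
  calc _ = ‖∑ i ∈ t, g i y • (h i - h y)‖ := by rw [dist_eq_norm, hsub]
    _ ≤ ∑ i ∈ t, g i y * (ε / 2) := norm_sum_le_of_le _ fun i _ => ?_
    _ = ε / 2 := by rw [← Finset.sum_mul, hg1 y hy, one_mul]
    _ < ε := half_lt_self hε
  rw [norm_smul, Real.norm_of_nonneg (hg0 i y)]
  by_cases hyi : dist (h y) (h i) < ε / 2
  · rw [← dist_eq_norm, dist_comm]
    exact mul_le_mul_of_nonneg_left hyi.le (hg0 i y)
  · simp [hgU i y hyi]

end

theorem stmt_8_general (X : Type*) [TopologicalSpace X] [T35Space X]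
    (F : Type*) [NormedAddCommGroup F] [NormedSpace ℝ F]
    (A : Set C(X, ℝ))
    (hA : Dense (↑(Submodule.span ℝ A) : Set C(X, ℝ))) :
    Dense (↑(Submodule.span ℝ
        {h : C(X, F) | ∃ g ∈ A, ∃ f : F, ∀ x : X, h x = g x • f}) : Set C(X, F)) := by
  set S := Submodule.span ℝ {h : C(X, F) | ∃ g ∈ A, ∃ f : F, ∀ x : X, h x = g x • f}
  have smul_const_mem (g : C(X, ℝ)) (f : F) :
      (toSpanSingleton ℝ f).compLeftContinuous ℝ X g ∈ S.topologicalClosure := by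
    set T := (toSpanSingleton ℝ f).compLeftContinuous ℝ X
    have hT : (Submodule.span ℝ A).map (T : C(X, ℝ) →ₗ[ℝ] C(X, F)) ≤ S := by
      rw [Submodule.map_span]
      refine Submodule.span_mono ?_
      rintro _ ⟨g', hg', rfl⟩
      exact ⟨g', hg', f, fun x => by simp [T]⟩
    exact map_mem_closure T.continuous (hA g) fun g' hg' => hT ⟨g', hg', rfl⟩
  have hspan : Submodule.span ℝ {h : C(X, F) | ∃ (g : C(X, ℝ)) (f : F), ∀ x, h x = g x • f} ≤
      S.topologicalClosure := by
    refine Submodule.span_le.2 fun h ⟨g, f, hgf⟩ => ?_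
    obtain rfl : h = (toSpanSingleton ℝ f).compLeftContinuous ℝ X g := by ext x; simp [hgf]
    exact smul_const_mem g f
  exact dense_closure.1 (ContinuousMap.dense_span_smul_const.mono hspan)

/-- For a Tychonoff space `X` and a real Banach space `F`: if the span
of `A ⊆ C(X)` is dense in `C(X)` (compact-open topology), then the span of
`{g ⊗ f : g ∈ A, f ∈ F}` is dense in `C(X, F)`. -/
theorem stmt_8 (X : Type*) [TopologicalSpace X] [T35Space X]
    (F : Type*) [NormedAddCommGroup F] [NormedSpace ℝ F] [CompleteSpace F]
    (A : Set C(X, ℝ))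
    (hA : Dense (↑(Submodule.span ℝ A) : Set C(X, ℝ))) :
    Dense (↑(Submodule.span ℝ
        {h : C(X, F) | ∃ g ∈ A, ∃ f : F, ∀ x : X, h x = g x • f}) : Set C(X, F)) :=
  stmt_8_general X F A hA
end

section
/- Let n ≥ 1, let e₁, …, e_n : ℝ^n → ℝ be the coordinate projections, and let r, s ∈ ℝ with s ≠ −r. For a function f : ℝ^n → ℝ write Φ(f) for the function x ↦ r·max(f(x), 0) + s·max(−f(x), 0). Then for every continuous positively homogeneous function h : ℝ^n → ℝ (i.e., h(t•x) = t·h(x) for all t ≥ 0 and x ∈ ℝ^n) and every ε > 0, there is a function u in the linear span of { Φ(f) : f ∈ span{ e₁⁺, e₁⁻, …, e_n⁺, e_n⁻ } } such that |h(x) − u(x)| ≤ ε for all x ∈ [−1, 1]^n. -/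
/-!
Since `Φ(f) + Φ(-f) = (r + s)|f|`, the span `W` of `Φ(V)`, `V = span {eᵢ⁺, eᵢ⁻}`, contains `|f|`
for every `f ∈ V`; as the generators of `V` are nonnegative, `W` contains `V` and so every `f⁺`,
`f ∈ V`. Moreover `V` contains every `x ↦ ⟪a, x⟫ + β‖x‖₁`. On the unit `ℓ¹`-sphere `K` we have
`(⟪a, x⟫ - τ)⁺ = (⟪a, x⟫ - τ‖x‖₁)⁺ ∈ W`, so one-dimensional piecewise linear interpolation shows
that `W` approximates every ridge function `ψ(⟪a, x⟫)` uniformly on `K`, in particular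
`exp ⟪a, x⟫`. These span a point-separating subalgebra of `C(ℝⁿ, ℝ)`, so by Stone–Weierstrass
`W` approximates `h` uniformly on `K`. Both `h` and the elements of `W` are positively
homogeneous, which carries the bound from `K` to the cube, where `‖x‖₁ ≤ n`.
-/

open Finset Set Matrix

def ramp (u d t : ℝ) : ℝ := min (max (t - u) 0) d

lemma ramp_eq_max_sub_max {d : ℝ} (hd : 0 ≤ d) (u : ℝ) :
    ramp u d = fun t => max (t - u) 0 - max (t - (u + d)) 0 := by
  funext t
  simp only [ramp, max_def, min_def]
  split_ifs <;> linarith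

lemma ramp_of_le {u t : ℝ} (d : ℝ) (ht : t ≤ u) (hd : 0 ≤ d) : ramp u d t = 0 := by
  simp [ramp, max_eq_right (sub_nonpos.mpr ht), hd]

lemma ramp_of_add_le {u d t : ℝ} (ht : u + d ≤ t) (hd : 0 ≤ d) : ramp u d t = d := by
  simp only [ramp]
  rw [max_eq_left (by linarith), min_eq_right (by linarith)]

lemma ramp_anti {u u' : ℝ} (d t : ℝ) (hu : u ≤ u') : ramp u' d t ≤ ramp u d t :=
  min_le_min_right d (max_le_max_right 0 (by linarith))

lemma lt_of_ramp_sub_ramp_ne_zero {u d t : ℝ} (hd : 0 ≤ d)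
    (h : ramp u d t - ramp (u + d) d t ≠ 0) : u < t ∧ t < u + 2 * d := by
  constructor
  · by_contra! ht
    exact h (by rw [ramp_of_le d ht hd, ramp_of_le d (by linarith) hd, sub_zero])
  · by_contra! ht
    exact h (by rw [ramp_of_add_le (by linarith) hd, ramp_of_add_le (by linarith) hd, sub_self])

lemma abs_sub_sum_mul_le {ι : Type*} {s : Finset ι} {w v : ι → ℝ} {y ε : ℝ}
    (hw : ∀ j ∈ s, 0 ≤ w j) (hsum : ∑ j ∈ s, w j = 1)
    (hv : ∀ j ∈ s, w j ≠ 0 → |y - v j| ≤ ε) : |y - ∑ j ∈ s, v j * w j| ≤ ε := by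
  have hterm : ∀ j ∈ s, |y - v j| * w j ≤ ε * w j := fun j hj => by
    rcases eq_or_ne (w j) 0 with h0 | h0
    · simp [h0]
    · exact mul_le_mul_of_nonneg_right (hv j hj h0) (hw j hj)
  calc |y - ∑ j ∈ s, v j * w j| = |∑ j ∈ s, (y - v j) * w j| := by
        simp only [sub_mul, sum_sub_distrib, ← mul_sum, hsum, mul_one]
    _ ≤ ∑ j ∈ s, |y - v j| * w j := by
        refine (abs_sum_le_sum_abs _ _).trans (sum_le_sum fun j hj => ?_)
        rw [abs_mul, abs_of_nonneg (hw j hj)]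
    _ ≤ ∑ j ∈ s, ε * w j := sum_le_sum hterm
    _ = ε := by rw [← mul_sum, hsum, mul_one]

abbrev reluSpan : Submodule ℝ (ℝ → ℝ) := Submodule.span ℝ (range fun τ t => max (t - τ) 0)

lemma ramp_mem_reluSpan {d : ℝ} (hd : 0 ≤ d) (u : ℝ) : ramp u d ∈ reluSpan := by
  rw [ramp_eq_max_sub_max hd]
  exact sub_mem (Submodule.subset_span ⟨u, rfl⟩) (Submodule.subset_span ⟨u + d, rfl⟩)

/-- Piecewise linear interpolation on a uniform grid: the hat functions
`(ramp uⱼ d - ramp uⱼ₊₁ d) / d` form a partition of unity on `[a, b]`. -/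
lemma exists_mem_reluSpan_near {ψ : ℝ → ℝ} {a b : ℝ} (hab : a < b)
    (hψ : ContinuousOn ψ (Icc a b)) {ε : ℝ} (hε : 0 < ε) :
    ∃ p ∈ reluSpan, ∀ t ∈ Icc a b, |ψ t - p t| ≤ ε := by
  obtain ⟨δ, hδ, hψδ⟩ := Metric.uniformContinuousOn_iff.mp
    (isCompact_Icc.uniformContinuousOn_of_continuous hψ) ε hε
  obtain ⟨N, hN⟩ := exists_nat_gt ((b - a) / δ)
  have hN0 : (0 : ℝ) < N := (div_pos (sub_pos.mpr hab) hδ).trans hN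
  set d := (b - a) / N with hd_def
  have hd : 0 < d := div_pos (sub_pos.mpr hab) hN0
  have hdδ : d < δ := by rw [div_lt_iff₀ hN0]; rw [div_lt_iff₀ hδ] at hN; linarith
  have hNd : N * d = b - a := by rw [hd_def]; field_simp
  let u : ℕ → ℝ := fun j => a + (j - 1) * d
  have hu_succ : ∀ j, u (j + 1) = u j + d := fun j => by simp only [u]; push_cast; ring
  let w : ℕ → ℝ → ℝ := fun j t => (ramp (u j) d t - ramp (u (j + 1)) d t) / d
  refine ⟨∑ j ∈ range (N + 1), (ψ (u (j + 1)) / d) • (ramp (u j) d - ramp (u (j + 1)) d),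
    sum_mem fun j _ => Submodule.smul_mem _ _
      (sub_mem (ramp_mem_reluSpan hd.le _) (ramp_mem_reluSpan hd.le _)), fun t ht => ?_⟩
  have hp : (∑ j ∈ range (N + 1), (ψ (u (j + 1)) / d) • (ramp (u j) d - ramp (u (j + 1)) d)) t
      = ∑ j ∈ range (N + 1), ψ (u (j + 1)) * w j t := by
    simp only [Finset.sum_apply, Pi.smul_apply, Pi.sub_apply, smul_eq_mul, w]
    exact sum_congr rfl fun j _ => by ring
  rw [hp]
  refine abs_sub_sum_mul_le (fun j _ => div_nonneg (sub_nonneg.mpr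
    (ramp_anti d t (by rw [hu_succ]; linarith))) hd.le) ?_ fun j hj hw => ?_
  · rw [← sum_div, sum_range_sub' (fun j => ramp (u j) d t), div_eq_one_iff_eq hd.ne',
      ramp_of_add_le (by simp only [u]; push_cast; linarith [ht.1]) hd.le,
      ramp_of_le d (by simp only [u]; push_cast; linarith [ht.2]) hd.le, sub_zero]
  · have hj : (j : ℝ) ≤ N := by exact_mod_cast Nat.lt_succ_iff.mp (mem_range.mp hj)
    obtain ⟨h1, h2⟩ := lt_of_ramp_sub_ramp_ne_zero hd.le
      (by rw [← hu_succ]; exact div_ne_zero_iff.mp hw |>.1)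
    rw [← Real.dist_eq]
    refine (hψδ t ht _ ⟨?_, ?_⟩ ?_).le
    · simp only [u]; push_cast; nlinarith
    · simp only [u]; push_cast; nlinarith
    · rw [Real.dist_eq, abs_lt]
      constructor <;> linarith [hu_succ j]

section Activation

variable {X : Type*} {r s : ℝ} {Φ : (X → ℝ) → (X → ℝ)}

lemma abs_mem_span_image (hrs : s ≠ -r)
    (hΦ : ∀ f : X → ℝ, ∀ x, Φ f x = r * max (f x) 0 + s * max (-(f x)) 0)
    {V : Submodule ℝ (X → ℝ)} {f : X → ℝ} (hf : f ∈ V) :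
    (fun x => |f x|) ∈ Submodule.span ℝ (Φ '' V) := by
  have hrs' : r + s ≠ 0 := fun h => hrs (by linarith)
  have key : (fun x => |f x|) = (r + s)⁻¹ • (Φ f + Φ (-f)) := by
    funext x
    rw [Pi.smul_apply, Pi.add_apply, hΦ, hΦ, smul_eq_mul, eq_inv_mul_iff_mul_eq₀ hrs',
      Pi.neg_apply, neg_neg]
    rcases le_total (f x) 0 with h | h
    · rw [abs_of_nonpos h, max_eq_right h, max_eq_left (neg_nonneg.mpr h)]; ring
    · rw [abs_of_nonneg h, max_eq_left h, max_eq_right (neg_nonpos.mpr h)]; ring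
  rw [key]
  exact Submodule.smul_mem _ _ (add_mem (Submodule.subset_span ⟨f, hf, rfl⟩)
    (Submodule.subset_span ⟨-f, neg_mem hf, rfl⟩))

lemma span_le_span_image_span (hrs : s ≠ -r)
    (hΦ : ∀ f : X → ℝ, ∀ x, Φ f x = r * max (f x) 0 + s * max (-(f x)) 0)
    {G : Set (X → ℝ)} (hG : ∀ g ∈ G, 0 ≤ g) :
    Submodule.span ℝ G ≤ Submodule.span ℝ (Φ '' Submodule.span ℝ G) := by
  rw [Submodule.span_le]
  intro g hg
  have : g = fun x => |g x| := funext fun x => (abs_of_nonneg (hG g hg x)).symm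
  rw [this]
  exact abs_mem_span_image hrs hΦ (Submodule.subset_span hg)

lemma max_zero_mem_span_image_span (hrs : s ≠ -r)
    (hΦ : ∀ f : X → ℝ, ∀ x, Φ f x = r * max (f x) 0 + s * max (-(f x)) 0)
    {G : Set (X → ℝ)} (hG : ∀ g ∈ G, 0 ≤ g) {f : X → ℝ} (hf : f ∈ Submodule.span ℝ G) :
    (fun x => max (f x) 0) ∈ Submodule.span ℝ (Φ '' Submodule.span ℝ G) := by
  have key : (fun x => max (f x) 0) = (2⁻¹ : ℝ) • (f + fun x => |f x|) := by
    funext x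
    simp only [Pi.smul_apply, Pi.add_apply, smul_eq_mul, max_def, abs_eq_max_neg]
    split_ifs <;> linarith
  rw [key]
  exact Submodule.smul_mem _ _
    (add_mem (span_le_span_image_span hrs hΦ hG hf) (abs_mem_span_image hrs hΦ hf))

end Activation

section Homogeneous

def posHomogeneous (E : Type*) [SMul ℝ E] : Submodule ℝ (E → ℝ) where
  carrier := {f | ∀ t : ℝ, 0 ≤ t → ∀ x, f (t • x) = t * f x}
  zero_mem' _ _ _ := by simp
  add_mem' hf hg t ht x := by simp [hf t ht x, hg t ht x, mul_add]
  smul_mem' c f hf t ht x := by simp [hf t ht x, mul_left_comm]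

variable {E : Type*} [SMul ℝ E]

lemma max_zero_mem_posHomogeneous {f : E → ℝ} (hf : f ∈ posHomogeneous E) :
    (fun x => max (f x) 0) ∈ posHomogeneous E := fun t ht x => by
  simp only [hf t ht x, mul_max_of_nonneg _ _ ht, mul_zero]

lemma span_image_le_posHomogeneous {r s : ℝ} {Φ : (E → ℝ) → (E → ℝ)}
    (hΦ : ∀ f : E → ℝ, ∀ x, Φ f x = r * max (f x) 0 + s * max (-(f x)) 0)
    {V : Submodule ℝ (E → ℝ)} (hV : V ≤ posHomogeneous E) :
    Submodule.span ℝ (Φ '' V) ≤ posHomogeneous E := by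
  rw [Submodule.span_le]
  rintro _ ⟨f, hf, rfl⟩
  have hpos := max_zero_mem_posHomogeneous (hV hf)
  have hneg := max_zero_mem_posHomogeneous (neg_mem (hV hf))
  have : Φ f = r • (fun x => max (f x) 0) + s • (fun x => max ((-f) x) 0) := by
    funext x; simp [hΦ]
  rw [this]
  exact add_mem (Submodule.smul_mem _ _ hpos) (Submodule.smul_mem _ _ hneg)

end Homogeneous

section Coordinates

def coordRelus (ι : Type*) : Set ((ι → ℝ) → ℝ) :=
  {f | ∃ i : ι, f = fun x => max (x i) 0} ∪ {f | ∃ i : ι, f = fun x => max (-(x i)) 0}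

lemma coordRelus_nonneg {ι : Type*} : ∀ g ∈ coordRelus ι, 0 ≤ g := by
  rintro _ (⟨i, rfl⟩ | ⟨i, rfl⟩) x <;> exact le_max_right _ _

lemma span_coordRelus_le_posHomogeneous {ι : Type*} :
    Submodule.span ℝ (coordRelus ι) ≤ posHomogeneous (ι → ℝ) := by
  rw [Submodule.span_le]
  have hcoord : ∀ i : ι, (fun x : ι → ℝ => x i) ∈ posHomogeneous (ι → ℝ) := fun i t _ x => rfl
  rintro _ (⟨i, rfl⟩ | ⟨i, rfl⟩)
  · exact max_zero_mem_posHomogeneous (hcoord i)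
  · exact max_zero_mem_posHomogeneous (neg_mem (hcoord i))

variable {ι : Type*} [Fintype ι]

def sumAbs (x : ι → ℝ) : ℝ := ∑ i, |x i|

lemma sumAbs_nonneg (x : ι → ℝ) : 0 ≤ sumAbs x := sum_nonneg fun i _ => abs_nonneg (x i)

lemma abs_le_sumAbs (x : ι → ℝ) (i : ι) : |x i| ≤ sumAbs x :=
  single_le_sum (f := fun j => |x j|) (fun j _ => abs_nonneg (x j)) (mem_univ i)

lemma sumAbs_smul (t : ℝ) (x : ι → ℝ) : sumAbs (t • x) = |t| * sumAbs x := by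
  simp [sumAbs, abs_mul, mul_sum]

lemma eq_zero_of_sumAbs_eq_zero {x : ι → ℝ} (hx : sumAbs x = 0) : x = 0 :=
  funext fun i => abs_eq_zero.mp <|
    (sum_eq_zero_iff_of_nonneg fun j _ => abs_nonneg (x j)).mp hx i (mem_univ i)

lemma continuous_sumAbs : Continuous (sumAbs : (ι → ℝ) → ℝ) := by
  unfold sumAbs; fun_prop

lemma isCompact_sumAbs_eq_one : IsCompact {x : ι → ℝ | sumAbs x = 1} := by
  refine Metric.isCompact_of_isClosed_isBounded
    (isClosed_eq continuous_sumAbs continuous_const)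
    ((Metric.isBounded_closedBall (x := 0) (r := 1)).subset ?_)
  intro x hx
  rw [Metric.mem_closedBall, dist_zero_right, pi_norm_le_iff_of_nonneg zero_le_one]
  exact fun i => (abs_le_sumAbs x i).trans_eq hx

lemma dotProduct_add_mul_sumAbs_mem_span (a : ι → ℝ) (β : ℝ) :
    (fun x => a ⬝ᵥ x + β * sumAbs x) ∈ Submodule.span ℝ (coordRelus ι) := by
  have key : (fun x => a ⬝ᵥ x + β * sumAbs x) =
      ∑ i, ((a i + β) • (fun x : ι → ℝ => max (x i) 0)
        + (β - a i) • (fun x : ι → ℝ => max (-(x i)) 0)) := by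
    funext x
    simp only [dotProduct, sumAbs, mul_sum, ← sum_add_distrib, Finset.sum_apply, Pi.add_apply,
      Pi.smul_apply, smul_eq_mul]
    refine sum_congr rfl fun i _ => ?_
    rcases le_total (x i) 0 with h | h
    · rw [abs_of_nonpos h, max_eq_right h, max_eq_left (neg_nonneg.mpr h)]; ring
    · rw [abs_of_nonneg h, max_eq_left h, max_eq_right (neg_nonpos.mpr h)]; ring
  rw [key]
  exact sum_mem fun i _ => add_mem
    (Submodule.smul_mem _ _ (Submodule.subset_span (Or.inl ⟨i, rfl⟩)))
    (Submodule.smul_mem _ _ (Submodule.subset_span (Or.inr ⟨i, rfl⟩)))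

lemma abs_le_mul_sumAbs_of_mem_posHomogeneous {f : (ι → ℝ) → ℝ}
    (hf : f ∈ posHomogeneous (ι → ℝ)) {η : ℝ} (hK : ∀ y, sumAbs y = 1 → |f y| ≤ η)
    (x : ι → ℝ) : |f x| ≤ η * sumAbs x := by
  rcases (sumAbs_nonneg x).eq_or_lt with h0 | hpos
  · have hf0 : f 0 = 0 := by simpa using hf 0 le_rfl 0
    rw [← h0, eq_zero_of_sumAbs_eq_zero h0.symm, hf0, abs_zero, mul_zero]
  · have hy : sumAbs ((sumAbs x)⁻¹ • x) = 1 := by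
      rw [sumAbs_smul, abs_inv, abs_of_pos hpos, inv_mul_cancel₀ hpos.ne']
    calc |f x| = |f (sumAbs x • (sumAbs x)⁻¹ • x)| := by
          rw [smul_smul, mul_inv_cancel₀ hpos.ne', one_smul]
      _ = sumAbs x * |f ((sumAbs x)⁻¹ • x)| := by
          rw [hf _ hpos.le, abs_mul, abs_of_pos hpos]
      _ ≤ η * sumAbs x := by rw [mul_comm]; exact mul_le_mul_of_nonneg_right (hK _ hy) hpos.le

end Coordinates

section Homogenize

variable {ι : Type*} [Fintype ι]

/-- The perspective `x ↦ ‖x‖₁ g(⟪a, x⟫ / ‖x‖₁)` of `g`: it turns the ridge function `g ∘ ⟪a, ·⟫`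
on the unit `ℓ¹`-sphere into a positively homogeneous function on `ℝⁿ`. -/
noncomputable def homogenize (a : ι → ℝ) : (ℝ → ℝ) →ₗ[ℝ] ((ι → ℝ) → ℝ) where
  toFun g x := sumAbs x * g (a ⬝ᵥ x / sumAbs x)
  map_add' g g' := by funext x; simp [mul_add]
  map_smul' c g := by funext x; simp [mul_left_comm]

lemma homogenize_apply_of_sumAbs_eq_one (a : ι → ℝ) (g : ℝ → ℝ) {x : ι → ℝ}
    (hx : sumAbs x = 1) : homogenize a g x = g (a ⬝ᵥ x) := by
  simp [homogenize, hx]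

lemma homogenize_relu (a : ι → ℝ) (τ : ℝ) :
    homogenize a (fun t => max (t - τ) 0) = fun x => max (a ⬝ᵥ x + -τ * sumAbs x) 0 := by
  funext x
  show sumAbs x * max (a ⬝ᵥ x / sumAbs x - τ) 0 = _
  rcases (sumAbs_nonneg x).eq_or_lt with h0 | hpos
  · obtain rfl := eq_zero_of_sumAbs_eq_zero h0.symm
    simp [← h0]
  · rw [mul_max_of_nonneg _ _ hpos.le, mul_zero, mul_sub, mul_div_cancel₀ _ hpos.ne']
    ring_nf

variable {r s : ℝ} {Φ : ((ι → ℝ) → ℝ) → ((ι → ℝ) → ℝ)}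

lemma exists_mem_span_image_near_comp_dotProduct (hrs : s ≠ -r)
    (hΦ : ∀ f : (ι → ℝ) → ℝ, ∀ x, Φ f x = r * max (f x) 0 + s * max (-(f x)) 0)
    {ψ : ℝ → ℝ} (hψ : Continuous ψ) (a : ι → ℝ) {η : ℝ} (hη : 0 < η) :
    ∃ u ∈ Submodule.span ℝ (Φ '' Submodule.span ℝ (coordRelus ι)),
      ∀ x, sumAbs x = 1 → |ψ (a ⬝ᵥ x) - u x| ≤ η := by
  set R := sumAbs a + 1
  have hR : 0 < R := by positivity [sumAbs_nonneg a]
  obtain ⟨p, hp, hψp⟩ := exists_mem_reluSpan_near (neg_lt_self hR) hψ.continuousOn hη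
  have hmap : reluSpan.map (homogenize a) ≤
      Submodule.span ℝ (Φ '' Submodule.span ℝ (coordRelus ι)) := by
    refine (Submodule.map_span_le _ _ _).mpr ?_
    rintro _ ⟨τ, rfl⟩
    rw [homogenize_relu]
    exact max_zero_mem_span_image_span hrs hΦ coordRelus_nonneg
      (dotProduct_add_mul_sumAbs_mem_span a (-τ))
  refine ⟨homogenize a p, hmap ⟨p, hp, rfl⟩, fun x hx => ?_⟩
  rw [homogenize_apply_of_sumAbs_eq_one a p hx]
  refine hψp _ (abs_le.mp ?_)
  calc |a ⬝ᵥ x| ≤ ∑ i, |a i| * |x i| := (abs_sum_le_sum_abs _ _).trans_eq (by simp [abs_mul])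
    _ ≤ ∑ i, |a i| * 1 := by
        gcongr with i; exact (abs_le_sumAbs x i).trans_eq hx
    _ ≤ R := by simp [R, sumAbs]

end Homogenize

section StoneWeierstrass

open scoped Pointwise

variable {ι : Type*} [Fintype ι]

noncomputable def expDot (a : ι → ℝ) : C(ι → ℝ, ℝ) := ⟨fun x => Real.exp (a ⬝ᵥ x), by fun_prop⟩

lemma expDot_add (a b : ι → ℝ) : expDot (a + b) = expDot a * expDot b := by
  ext x; simp [expDot, add_dotProduct, Real.exp_add]

noncomputable def expDotSubalgebra (ι : Type*) [Fintype ι] : Subalgebra ℝ C(ι → ℝ, ℝ) :=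
  (Submodule.span ℝ (Set.range expDot)).toSubalgebra
    (Submodule.subset_span ⟨0, by ext; simp [expDot]⟩)
    fun p q hp hq => by
      have hmul : Set.range (expDot (ι := ι)) * Set.range expDot ⊆ Set.range expDot := by
        rintro _ ⟨_, ⟨a, rfl⟩, _, ⟨b, rfl⟩, rfl⟩
        exact ⟨a + b, expDot_add a b⟩
      have := Submodule.mul_mem_mul hp hq
      rw [Submodule.span_mul_span] at this
      exact Submodule.span_mono hmul this

lemma expDotSubalgebra_separatesPoints : (expDotSubalgebra ι).SeparatesPoints := by
  classical
  intro x y hxy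
  obtain ⟨i, hi⟩ := Function.ne_iff.mp hxy
  refine ⟨_, ⟨expDot (Pi.single i 1), Submodule.subset_span ⟨_, rfl⟩, rfl⟩, ?_⟩
  simpa [expDot, single_dotProduct] using hi

def approxOn {X : Type*} [TopologicalSpace X] (W : Submodule ℝ (X → ℝ)) (K : Set X) :
    Submodule ℝ C(X, ℝ) where
  carrier := {g | ∀ η > 0, ∃ u ∈ W, ∀ x ∈ K, |g x - u x| ≤ η}
  zero_mem' η hη := ⟨0, zero_mem W, fun x _ => by simpa using hη.le⟩
  add_mem' {g g'} hg hg' η hη := by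
    obtain ⟨u, hu, hgu⟩ := hg (η / 2) (half_pos hη)
    obtain ⟨u', hu', hgu'⟩ := hg' (η / 2) (half_pos hη)
    refine ⟨u + u', add_mem hu hu', fun x hx => ?_⟩
    calc |(g + g') x - (u + u') x| = |(g x - u x) + (g' x - u' x)| := by simp; ring_nf
      _ ≤ |g x - u x| + |g' x - u' x| := abs_add_le _ _
      _ ≤ η := by linarith [hgu x hx, hgu' x hx]
  smul_mem' c g hg η hη := by
    obtain ⟨u, hu, hgu⟩ := hg (η / (|c| + 1)) (by positivity)
    refine ⟨c • u, Submodule.smul_mem _ c hu, fun x hx => ?_⟩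
    calc |(c • g) x - (c • u) x| = |c| * |g x - u x| := by simp [← mul_sub, abs_mul]
      _ ≤ (|c| + 1) * (η / (|c| + 1)) := by
          gcongr
          exacts [le_add_of_nonneg_right zero_le_one, hgu x hx]
      _ = η := by field_simp

variable {r s : ℝ} {Φ : ((ι → ℝ) → ℝ) → ((ι → ℝ) → ℝ)}

lemma expDotSubalgebra_le_approxOn (hrs : s ≠ -r)
    (hΦ : ∀ f : (ι → ℝ) → ℝ, ∀ x, Φ f x = r * max (f x) 0 + s * max (-(f x)) 0) :
    Subalgebra.toSubmodule (expDotSubalgebra ι) ≤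
      approxOn (Submodule.span ℝ (Φ '' Submodule.span ℝ (coordRelus ι))) {x | sumAbs x = 1} := by
  rw [expDotSubalgebra, Submodule.toSubalgebra_toSubmodule, Submodule.span_le]
  rintro _ ⟨a, rfl⟩ η hη
  exact exists_mem_span_image_near_comp_dotProduct hrs hΦ Real.continuous_exp a hη

end StoneWeierstrass

theorem stmt_12_general (n : ℕ) (r s : ℝ) (hrs : s ≠ -r)
    (Φ : ((Fin n → ℝ) → ℝ) → ((Fin n → ℝ) → ℝ))
    (hΦ : ∀ f : (Fin n → ℝ) → ℝ, ∀ x : Fin n → ℝ,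
      Φ f x = r * max (f x) 0 + s * max (-(f x)) 0)
    (h : (Fin n → ℝ) → ℝ) (hcont : Continuous h)
    (hhom : ∀ t : ℝ, 0 ≤ t → ∀ x : Fin n → ℝ, h (t • x) = t * h x)
    (ε : ℝ) (hε : 0 < ε) :
    ∃ u ∈ Submodule.span ℝ (Φ '' ↑(Submodule.span ℝ
        ({f : (Fin n → ℝ) → ℝ | ∃ i : Fin n, f = fun x => max (x i) 0} ∪
         {f : (Fin n → ℝ) → ℝ | ∃ i : Fin n, f = fun x => max (-(x i)) 0}))),
      ∀ x : Fin n → ℝ, (∀ i, |x i| ≤ 1) → |h x - u x| ≤ ε := by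
  set η := ε / (n + 1)
  have hη : 0 < η := by positivity
  obtain ⟨g, hgA, hg⟩ :=
    ContinuousMap.exists_mem_subalgebra_near_continuous_of_isCompact_of_separatesPoints
      expDotSubalgebra_separatesPoints ⟨h, hcont⟩ isCompact_sumAbs_eq_one (half_pos hη)
  obtain ⟨u, huW, hgu⟩ := expDotSubalgebra_le_approxOn hrs hΦ hgA (η / 2) (half_pos hη)
  refine ⟨u, huW, fun x hx => ?_⟩
  have hK : ∀ y, sumAbs y = 1 → |(h - u) y| ≤ η := fun y hy => by
    have hgh : |g y - h y| < η / 2 := hg y hy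
    calc |(h - u) y| ≤ |h y - g y| + |g y - u y| := abs_sub_le _ _ _
      _ ≤ η := by rw [abs_sub_comm]; linarith [hgu y hy]
  have hhu : h - u ∈ posHomogeneous (Fin n → ℝ) := sub_mem hhom
    (span_image_le_posHomogeneous hΦ span_coordRelus_le_posHomogeneous huW)
  calc |h x - u x| ≤ η * sumAbs x := abs_le_mul_sumAbs_of_mem_posHomogeneous hhu hK x
    _ ≤ η * (n + 1) := by
        gcongr
        calc sumAbs x ≤ ∑ _i : Fin n, (1 : ℝ) := sum_le_sum fun i _ => hx i
          _ ≤ n + 1 := by simp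
    _ = ε := div_mul_cancel₀ ε (by positivity)

/-- With `e₁, …, e_n` the coordinate projections on `ℝⁿ` and
`Φ(f)(x) = r·(f x)⁺ + s·(f x)⁻` (`s ≠ -r`), every continuous positively homogeneous
`h : ℝⁿ → ℝ` can be uniformly approximated on `[-1,1]ⁿ` by elements of
`span Φ(span {e₁⁺, e₁⁻, …, e_n⁺, e_n⁻})`. -/
theorem stmt_12 (n : ℕ) (hn : 1 ≤ n) (r s : ℝ) (hrs : s ≠ -r)
    (Φ : ((Fin n → ℝ) → ℝ) → ((Fin n → ℝ) → ℝ))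
    (hΦ : ∀ f : (Fin n → ℝ) → ℝ, ∀ x : Fin n → ℝ,
      Φ f x = r * max (f x) 0 + s * max (-(f x)) 0)
    (h : (Fin n → ℝ) → ℝ) (hcont : Continuous h)
    (hhom : ∀ t : ℝ, 0 ≤ t → ∀ x : Fin n → ℝ, h (t • x) = t * h x)
    (ε : ℝ) (hε : 0 < ε) :
    ∃ u ∈ Submodule.span ℝ (Φ '' ↑(Submodule.span ℝ
        ({f : (Fin n → ℝ) → ℝ | ∃ i : Fin n, f = fun x => max (x i) 0} ∪
         {f : (Fin n → ℝ) → ℝ | ∃ i : Fin n, f = fun x => max (-(x i)) 0}))),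
      ∀ x : Fin n → ℝ, (∀ i, |x i| ≤ 1) → |h x - u x| ≤ ε :=
  stmt_12_general n r s hrs Φ hΦ h hcont hhom ε hε
end

section
/- Let X be a locally compact, σ-compact Hausdorff topological space, and let E ⊆ C(X) be a linear subspace closed under the pointwise lattice operations ⊔ and ⊓ (a sublattice) such that every element of E has compact support and E is dense in C(X) with the compact-open topology. Then for every continuous f : X → ℝ with f ≥ 0 there exists a sequence (e_n) in E with 0 ≤ e_n ≤ f and e_n ≤ e_{n+1} for all n, which converges relatively uniformly to f: there is a continuous g : X → ℝ such that for every ε > 0 there is N with |f(x) − e_n(x)| ≤ ε·g(x) for all n ≥ N and all x ∈ X. -/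
/-!
Running maxima of elements `aₙ ∈ E ∩ [0, f]` that are `1/(n+1)`-close to `f` on the `n`-th set
of a compact exhaustion form a monotone sequence converging to `f` uniformly on compact sets.
Compact convergence of such a sequence is already relatively uniform: if `φ ≥ 0` is continuous
and tends to infinity at infinity (a locally finite sum of Urysohn functions), then off a compact
set `φ > 1/ε`, so there `f - eₙ ≤ f ≤ ε f φ`, and `1 + f φ` serves as regulator.
-/

open Set Filter Topology

section

variable {X : Type*} [TopologicalSpace X]

theorem exists_continuous_nonneg_tendsto_cocompact_atTop [T2Space X] [LocallyCompactSpace X]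
    [SigmaCompactSpace X] :
    ∃ φ : C(X, ℝ), 0 ≤ φ ∧ Tendsto φ (cocompact X) atTop := by
  let K := CompactExhaustion.choice X
  have hUrysohn (n : ℕ) : ∃ θ : C(X, ℝ), EqOn θ 0 (K n) ∧ EqOn θ 1 (interior (K (n + 1)))ᶜ ∧
      ∀ x, θ x ∈ Icc (0 : ℝ) 1 :=
    exists_continuous_zero_one_of_isClosed (K.isCompact n).isClosed isOpen_interior.isClosed_compl
      (disjoint_compl_right.mono_left (K.subset_interior_succ n))
  choose θ hθ0 hθ1 hθ01 using hUrysohn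
  let term (n : ℕ) (x : X) : ℝ := n * θ n x
  have hterm_nonneg (n : ℕ) (x : X) : 0 ≤ term n x := mul_nonneg n.cast_nonneg (hθ01 n x).1
  have hlf : LocallyFinite fun n ↦ Function.support (term n) := by
    intro x
    obtain ⟨m, hm⟩ := K.exists_mem x
    refine ⟨interior (K (m + 1)), isOpen_interior.mem_nhds (K.subset_interior_succ m hm),
      (finite_Iio (m + 1)).subset fun n ⟨y, hy, hyK⟩ ↦ mem_Iio.2 <| lt_of_not_ge fun hmn ↦
        hy (by simp [term, hθ0 n (K.subset hmn (interior_subset hyK))])⟩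
  refine ⟨⟨fun x ↦ ∑ᶠ n, term n x,
    continuous_finsum (fun n ↦ continuous_const.mul (θ n).continuous) hlf⟩,
    fun x ↦ finsum_nonneg (hterm_nonneg · x), tendsto_atTop.2 fun b ↦ ?_⟩
  obtain ⟨n, hn⟩ := exists_nat_ge b
  filter_upwards [(K.isCompact (n + 1)).compl_mem_cocompact] with x hx
  have hθx : θ n x = 1 := hθ1 n fun h ↦ hx (interior_subset h)
  calc b ≤ term n x := by simpa [term, hθx] using hn
    _ ≤ ∑ᶠ m, term m x := single_le_finsum n (hlf.point_finite x) (hterm_nonneg · x)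

def TendstoRelativelyUniformly (e : ℕ → C(X, ℝ)) (f : C(X, ℝ)) : Prop :=
  ∃ g : C(X, ℝ), ∀ ε : ℝ, 0 < ε → ∃ N : ℕ, ∀ n ≥ N, ∀ x : X, |f x - e n x| ≤ ε * g x

theorem tendstoRelativelyUniformly_of_tendsto [T2Space X] [LocallyCompactSpace X]
    [SigmaCompactSpace X] {e : ℕ → C(X, ℝ)} {f : C(X, ℝ)}
    (he : ∀ n, 0 ≤ e n ∧ e n ≤ f) (hlim : Tendsto e atTop (𝓝 f)) :
    TendstoRelativelyUniformly e f := by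
  obtain ⟨φ, hφ0, hφ⟩ := exists_continuous_nonneg_tendsto_cocompact_atTop (X := X)
  have hf : 0 ≤ f := (he 0).1.trans (he 0).2
  refine ⟨1 + f * φ, fun ε hε ↦ ?_⟩
  obtain ⟨L, hL, hLφ⟩ := mem_cocompact.1 (hφ.eventually_gt_atTop ε⁻¹)
  obtain ⟨N, hN⟩ := eventually_atTop.1 <| Metric.tendstoUniformlyOn_iff.1
    (ContinuousMap.tendsto_iff_forall_isCompact_tendstoUniformlyOn.1 hlim L hL) ε hε
  refine ⟨N, fun n hn x ↦ ?_⟩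
  by_cases hx : x ∈ L
  · calc |f x - e n x| = dist (f x) (e n x) := (Real.dist_eq _ _).symm
      _ ≤ ε := (hN n hn x hx).le
      _ ≤ ε * (1 + f x * φ x) :=
        le_mul_of_one_le_right hε.le (le_add_of_nonneg_right (mul_nonneg (hf x) (hφ0 x)))
  · have hεφ : 1 < ε * φ x := (inv_lt_iff_one_lt_mul₀' hε).1 (hLφ hx)
    have hef : e n x ≤ f x := (he n).2 x
    calc |f x - e n x| = f x - e n x := abs_of_nonneg (sub_nonneg.2 hef)
      _ ≤ f x := sub_le_self _ ((he n).1 x)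
      _ ≤ f x * (ε * φ x) := le_mul_of_one_le_right (hf x) hεφ.le
      _ ≤ ε * (1 + f x * φ x) := by nlinarith

theorem Dense.exists_mem_forall_abs_sub_lt {E : Set C(X, ℝ)} (hE : Dense E) (f : C(X, ℝ))
    {K : Set X} (hK : IsCompact K) {ε : ℝ} (hε : 0 < ε) : ∃ u ∈ E, ∀ x ∈ K, |u x - f x| < ε := by
  have hb := nhds_basis_uniformity' ContinuousMap.hasBasis_compactConvergenceUniformity (x := f)
  obtain ⟨u, huE, hu⟩ := (mem_closure_iff_nhds_basis hb).1 (hE f) (K, {p | dist p.1 p.2 < ε})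
    ⟨hK, Metric.dist_mem_uniformity hε⟩
  exact ⟨u, huE, fun x hx ↦ by simpa [Real.dist_eq, abs_sub_comm] using hu x hx⟩

variable (E : Submodule ℝ C(X, ℝ))

theorem Submodule.exists_mem_Icc_forall_sub_le (hsup : ∀ u ∈ E, ∀ v ∈ E, u ⊔ v ∈ E)
    (hinf : ∀ u ∈ E, ∀ v ∈ E, u ⊓ v ∈ E) (hcs : ∀ u ∈ E, HasCompactSupport (u : X → ℝ))
    (hdense : Dense (E : Set C(X, ℝ))) {f : C(X, ℝ)} (hf : 0 ≤ f) {K : Set X}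
    (hK : IsCompact K) {ε : ℝ} (hε : 0 < ε) :
    ∃ e ∈ E, e ∈ Icc 0 f ∧ ∀ x ∈ K, f x - e x ≤ ε := by
  set δ := ε / 4 with hδ
  have hδ0 : 0 < δ := by positivity
  obtain ⟨u, huE, hu⟩ := hdense.exists_mem_forall_abs_sub_lt f hK hδ0
  set T := tsupport (u : X → ℝ)
  have hTK : IsCompact (T ∪ K) := (hcs u huE).union hK
  obtain ⟨v, hvE, hv⟩ := hdense.exists_mem_forall_abs_sub_lt (.const X 2) hTK one_pos
  obtain ⟨w, hwE, hw⟩ := hdense.exists_mem_forall_abs_sub_lt f hTK hδ0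
  set p := v ⊔ 0
  have hpE : p ∈ E := hsup _ hvE _ E.zero_mem
  have hp0 (x) : 0 ≤ p x := le_sup_right
  have hp (x) (hx : x ∈ T ∪ K) : p x ∈ Icc 1 3 := by
    have := abs_sub_lt_iff.1 (hv x hx)
    simp only [p, ContinuousMap.sup_apply, ContinuousMap.zero_apply,
      ContinuousMap.const_apply] at this ⊢
    exact ⟨le_max_of_le_left (by linarith), max_le (by linarith) (by norm_num)⟩
  -- Clamping by `u` makes `e₀ ≤ 0` off the compact set `T`, beyond the control of `w`; on `T`
  -- subtracting `δ • p ≥ δ` pushes `w ≤ f + δ` below `f`.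
  set e₀ := w ⊓ u - δ • p
  have he₀ (x) : e₀ x = min (w x) (u x) - δ * p x := rfl
  refine ⟨e₀ ⊔ 0, hsup _ (E.sub_mem (hinf _ hwE _ huE) (E.smul_mem δ hpE)) _ E.zero_mem,
    ⟨le_sup_right, sup_le (fun x ↦ ?_) hf⟩, fun x hx ↦ ?_⟩
  · show e₀ x ≤ f x
    rw [he₀]
    by_cases hxT : x ∈ T
    · have hwx := (abs_sub_lt_iff.1 (hw x (.inl hxT))).1
      nlinarith [min_le_left (w x) (u x), (hp x (.inl hxT)).1]
    · have hux : u x = 0 := image_eq_zero_of_notMem_tsupport hxT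
      have hfx : 0 ≤ f x := hf x
      nlinarith [min_le_right (w x) (u x), mul_nonneg hδ0.le (hp0 x)]
  · have hwx := (abs_sub_lt_iff.1 (hw x (.inr hx))).2
    have hux := (abs_sub_lt_iff.1 (hu x hx)).2
    have hmin : f x - δ ≤ min (w x) (u x) := le_min (by linarith) (by linarith)
    have hδp : δ * p x ≤ δ * 3 := mul_le_mul_of_nonneg_left (hp x (.inr hx)).2 hδ0.le
    calc f x - (e₀ ⊔ 0) x ≤ f x - e₀ x := sub_le_sub_left le_sup_left _
      _ ≤ ε := by rw [he₀]; linarith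

theorem Submodule.exists_monotone_tendsto [WeaklyLocallyCompactSpace X] [SigmaCompactSpace X]
    (hsup : ∀ u ∈ E, ∀ v ∈ E, u ⊔ v ∈ E) (hinf : ∀ u ∈ E, ∀ v ∈ E, u ⊓ v ∈ E)
    (hcs : ∀ u ∈ E, HasCompactSupport (u : X → ℝ)) (hdense : Dense (E : Set C(X, ℝ)))
    {f : C(X, ℝ)} (hf : 0 ≤ f) :
    ∃ e : ℕ → C(X, ℝ), (∀ n, e n ∈ E) ∧ (∀ n, 0 ≤ e n ∧ e n ≤ f) ∧ Monotone e ∧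
      Tendsto e atTop (𝓝 f) := by
  let K := CompactExhaustion.choice X
  choose a haE ha hK using fun n : ℕ ↦ E.exists_mem_Icc_forall_sub_le hsup hinf hcs hdense hf
    (K.isCompact n) (Nat.one_div_pos_of_nat (α := ℝ) (n := n))
  refine ⟨partialSups a, fun n ↦ ?_, fun n ↦ ⟨(ha 0).1.trans (le_partialSups_of_le a n.zero_le),
    partialSups_le a n f fun k _ ↦ (ha k).2⟩, (partialSups a).monotone, ?_⟩
  · induction n with
    | zero => simpa using haE 0
    | succ n ih => simpa using hsup _ ih _ (haE (n + 1))
  · refine ContinuousMap.tendsto_iff_forall_isCompact_tendstoUniformlyOn.2 fun L hL ↦ ?_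
    obtain ⟨m, hLm⟩ := K.exists_superset_of_isCompact hL
    refine Metric.tendstoUniformlyOn_iff.2 fun ε hε ↦ ?_
    obtain ⟨N, hN⟩ := exists_nat_one_div_lt hε
    filter_upwards [eventually_ge_atTop (max m N)] with n hn x hx
    have han : a n x ≤ partialSups a n x := le_partialSups a n x
    have hnf : partialSups a n x ≤ f x := partialSups_le a n f (fun k _ ↦ (ha k).2) x
    calc dist (f x) (partialSups a n x) = f x - partialSups a n x := by
          rw [Real.dist_eq, abs_of_nonneg (sub_nonneg.2 hnf)]
      _ ≤ f x - a n x := by linarith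
      _ ≤ 1 / (n + 1) := hK n x (K.subset (le_of_max_le_left hn) (hLm hx))
      _ ≤ 1 / (N + 1) := Nat.one_div_le_one_div (le_of_max_le_right hn)
      _ < ε := hN

end

/-- Let `X` be a locally compact σ-compact Hausdorff space and let
`E ⊆ C(X)` be a dense sublattice all of whose elements have compact support. Then every
`0 ≤ f ∈ C(X)` is the relatively uniform limit of an increasing sequence in
`E ∩ [0, f]`. -/
theorem stmt_13 (X : Type*) [TopologicalSpace X] [T2Space X] [LocallyCompactSpace X]
    [SigmaCompactSpace X]
    (E : Set C(X, ℝ)) (hzero : (0 : C(X, ℝ)) ∈ E)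
    (hadd : ∀ x ∈ E, ∀ y ∈ E, x + y ∈ E) (hsmul : ∀ (c : ℝ), ∀ x ∈ E, c • x ∈ E)
    (hsup : ∀ x ∈ E, ∀ y ∈ E, x ⊔ y ∈ E) (hinf : ∀ x ∈ E, ∀ y ∈ E, x ⊓ y ∈ E)
    (hcs : ∀ e ∈ E, HasCompactSupport (e : X → ℝ))
    (hdense : Dense E)
    (f : C(X, ℝ)) (hf : 0 ≤ f) :
    ∃ e : ℕ → C(X, ℝ), (∀ n : ℕ, e n ∈ E) ∧ (∀ n : ℕ, 0 ≤ e n ∧ e n ≤ f) ∧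
      (∀ n : ℕ, e n ≤ e (n + 1)) ∧
      ∃ g : C(X, ℝ), ∀ ε : ℝ, 0 < ε → ∃ N : ℕ, ∀ n ≥ N, ∀ x : X,
        |f x - e n x| ≤ ε * g x := by
  let S : Submodule ℝ C(X, ℝ) :=
    { carrier := E
      add_mem' := fun hx hy ↦ hadd _ hx _ hy
      zero_mem' := hzero
      smul_mem' := hsmul }
  obtain ⟨e, heE, he, hmono, hlim⟩ := S.exists_monotone_tendsto hsup hinf hcs hdense hf
  exact ⟨e, heE, he, fun n ↦ hmono n.le_succ, tendstoRelativelyUniformly_of_tendsto he hlim⟩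
end

section
/- Let X be a compact Hausdorff space and let F be a linear subspace of C(X) containing the constant function 1. Let U ⊆ ℝ be a nonempty open interval and let φ : U → ℝ be continuous and not affine (there are no a, b ∈ ℝ with φ(t) = a·t + b for all t ∈ U). Assume that φ ∘ f ∈ F for every f ∈ F with f(X) ⊆ U. Then the sup-norm closure of F is closed under pointwise multiplication and under the pointwise lattice operation ⊔ (it is a subalgebra and a sublattice of C(X)); moreover, if F separates the points of X, then F is dense in C(X). -/
/-!
Since `φ` is not affine on `U`, its graph contains three non-collinear points, and so does the graph
of a mollification `Ψ = ρ ⋆ ψ` of a continuous extension `ψ` of `φ` from a compact subinterval of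
`U`, provided the bump `ρ` is narrow enough; hence `Ψ'' p ≠ 0` for some `p`. For small `g ∈ F`,
`Ψ (p + g)` is the integral of the functions `ρ s • φ (p + g - s)`, which lie in `F`, so it lies in
the closure of `F`. By Taylor's formula `2 (Ψ (p + ε f) - Ψ p - ε Ψ' p f) / (ε² Ψ'' p) → f²`
uniformly as `ε → 0`, so the closure of `F` contains the squares of elements of `F`; by
polarization it is a closed subalgebra, and the lattice and density claims follow from the
Stone–Weierstrass theorem.
-/

open MeasureTheory Set Filter Topology Convolution Metric ContinuousLinearMap

def collinearityDefect (g : ℝ → ℝ) (u v w : ℝ) : ℝ :=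
  (g w - g u) * (v - u) - (g v - g u) * (w - u)

theorem exists_collinearityDefect_ne_zero_of_not_affine {U : Set ℝ} {φ : ℝ → ℝ}
    (h : ¬∃ a b : ℝ, ∀ t ∈ U, φ t = a * t + b) :
    ∃ u ∈ U, ∃ v ∈ U, ∃ w ∈ U, collinearityDefect φ u v w ≠ 0 := by
  by_contra! hcol
  apply h
  obtain rfl | ⟨u, hu⟩ := U.eq_empty_or_nonempty
  · exact ⟨0, 0, by simp⟩
  by_cases hv : ∃ v ∈ U, v ≠ u
  · obtain ⟨v, hv, hvu⟩ := hv
    have hvu' : v - u ≠ 0 := sub_ne_zero.2 hvu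
    refine ⟨(φ v - φ u) / (v - u), φ u - (φ v - φ u) / (v - u) * u, fun t ht => ?_⟩
    have := hcol u hu v hv t ht
    unfold collinearityDefect at this
    field_simp
    linarith
  · push Not at hv
    exact ⟨0, φ u, fun t ht => by simp [hv t ht]⟩

theorem IsOpen.exists_Icc_sub_add_subset {U : Set ℝ} (hU : IsOpen U) (hc : U.OrdConnected)
    {m M : ℝ} (hm : m ∈ U) (hM : M ∈ U) : ∃ η > 0, Icc (m - η) (M + η) ⊆ U := by
  obtain ⟨ε, hε, hεU⟩ := isOpen_iff.1 hU m hm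
  obtain ⟨ε', hε', hε'U⟩ := isOpen_iff.1 hU M hM
  have hη : 0 < min ε ε' := lt_min hε hε'
  refine ⟨min ε ε' / 2, by positivity, hc.out (hεU ?_) (hε'U ?_)⟩ <;>
    simp [abs_of_pos hη] <;> linarith [min_le_left ε ε', min_le_right ε ε']

theorem exists_iteratedDeriv_two_ne_zero {Ψ : ℝ → ℝ} (hΨ : ContDiff ℝ 2 Ψ) {s : Set ℝ}
    (hs : IsOpen s) (hs' : IsPreconnected s) {u v w : ℝ} (hu : u ∈ s) (hv : v ∈ s) (hw : w ∈ s)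
    (h : collinearityDefect Ψ u v w ≠ 0) : ∃ p ∈ s, iteratedDeriv 2 Ψ p ≠ 0 := by
  by_contra! h2
  obtain ⟨a, ha⟩ := hs.exists_is_const_of_deriv_eq_zero hs'
    (hΨ.differentiable_iteratedDeriv 1 (by norm_num)).differentiableOn
    fun p hp => by simpa [iteratedDeriv_succ] using h2 p hp
  obtain ⟨b, hb⟩ := hs.exists_eq_add_of_deriv_eq hs'
    (hΨ.differentiable (by norm_num)).differentiableOn
    (differentiable_id.const_mul a).differentiableOn
    fun p hp => by simpa [iteratedDeriv_one] using ha p hp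
  apply h
  simp only [collinearityDefect, hb hu, hb hv, hb hw, id]
  ring

theorem isLittleO_taylor_two {Ψ : ℝ → ℝ} (hΨ : ContDiff ℝ 2 Ψ) (p : ℝ) :
    (fun h => Ψ (p + h) - (Ψ p + deriv Ψ p * h + iteratedDeriv 2 Ψ p / 2 * h ^ 2)) =o[𝓝 0]
      fun h => h ^ 2 := by
  have :=
    (taylor_isLittleO_univ hΨ).comp_tendsto ((continuous_const_add p).tendsto' 0 p (add_zero p))
  refine this.congr' (Eventually.of_forall fun h => ?_) (Eventually.of_forall fun h => by simp)
  simp [taylor_within_apply]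
  ring

theorem abs_two_div_mul_sub_sub_sq_le {y₀ y d c ε t κ : ℝ} (hc : c ≠ 0) (hε : ε ≠ 0)
    (h : |y - (y₀ + d * (ε * t) + c / 2 * (ε * t) ^ 2)| ≤ κ * (ε * t) ^ 2) :
    |2 / (c * ε ^ 2) * (y - y₀ - ε * d * t) - t * t| ≤ 2 * κ / |c| * t ^ 2 := by
  have hrem : 2 / (c * ε ^ 2) * (y - y₀ - ε * d * t) - t * t =
      2 / (c * ε ^ 2) * (y - (y₀ + d * (ε * t) + c / 2 * (ε * t) ^ 2)) := by
    field_simp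
    ring
  have hε2 : 0 < ε ^ 2 := by positivity
  rw [hrem, abs_mul, abs_div, abs_mul, abs_two, abs_of_pos hε2]
  calc 2 / (|c| * ε ^ 2) * |y - (y₀ + d * (ε * t) + c / 2 * (ε * t) ^ 2)|
      ≤ 2 / (|c| * ε ^ 2) * (κ * (ε * t) ^ 2) := by gcongr
    _ = 2 * κ / |c| * t ^ 2 := by field_simp

theorem exists_contDiffBump_collinearityDefect_convolution_ne_zero {ψ : ℝ → ℝ}
    (hψ : Continuous ψ) {u v w : ℝ} (h : collinearityDefect ψ u v w ≠ 0) {r : ℝ} (hr : 0 < r) :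
    ∃ ρ : ContDiffBump (0 : ℝ), ρ.rOut ≤ r ∧
      collinearityDefect (ρ.normed volume ⋆[lsmul ℝ ℝ] ψ) u v w ≠ 0 := by
  let ρ : ℕ → ContDiffBump (0 : ℝ) := fun n =>
    ⟨r / (2 * (n + 1)), r / (n + 1), by positivity, by gcongr; linarith⟩
  have hρ : Tendsto (fun n => (ρ n).rOut) atTop (𝓝 0) := by
    simpa [ρ, div_eq_mul_inv] using tendsto_one_div_add_atTop_nhds_zero_nat.const_mul r
  have hconv : Tendsto (fun n => (ρ n).normed volume ⋆[lsmul ℝ ℝ] ψ) atTop (𝓝 ψ) :=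
    tendsto_pi_nhds.2 fun t => ContDiffBump.convolution_tendsto_right_of_continuous hρ hψ t
  have hcont : Continuous fun g : ℝ → ℝ => collinearityDefect g u v w := by
    unfold collinearityDefect; fun_prop
  obtain ⟨n, hn⟩ := ((hcont.tendsto ψ).comp hconv |>.eventually_ne h).exists
  refine ⟨ρ n, ?_, hn⟩
  show r / (n + 1) ≤ r
  exact div_le_self hr.le (by linarith [n.cast_nonneg (α := ℝ)])

theorem exists_contDiffBump_iteratedDeriv_convolution_ne_zero {U : Set ℝ} (hU : IsOpen U)
    (hc : U.OrdConnected) {φ : ℝ → ℝ} (hφ : ContinuousOn φ U)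
    (h : ¬∃ a b : ℝ, ∀ t ∈ U, φ t = a * t + b) :
    ∃ ψ : ℝ → ℝ, Continuous ψ ∧ ∃ ρ : ContDiffBump (0 : ℝ), ∃ p δ : ℝ, 0 < δ ∧
      iteratedDeriv 2 (ρ.normed volume ⋆[lsmul ℝ ℝ] ψ) p ≠ 0 ∧
      closedBall p (δ + ρ.rOut) ⊆ U ∧ EqOn ψ φ (closedBall p (δ + ρ.rOut)) := by
  obtain ⟨u, hu, v, hv, w, hw, hφuvw⟩ := exists_collinearityDefect_ne_zero_of_not_affine h
  set m := min u (min v w)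
  set M := max u (max v w)
  have hm : m ∈ U := by simp only [m, min_def]; split_ifs <;> assumption
  have hM : M ∈ U := by simp only [M, max_def]; split_ifs <;> assumption
  obtain ⟨η, hη, hK⟩ := hU.exists_Icc_sub_add_subset hc hm hM
  have hmM : m - η ≤ M + η := by
    linarith [min_le_left u (min v w), le_max_left u (max v w)]
  set ψ := IccExtend hmM ((Icc (m - η) (M + η)).domRestrict φ)
  have hψ : Continuous ψ := continuous_IccExtend_iff.2 (hφ.mono hK).domRestrict
  have hψφ : EqOn ψ φ (Icc (m - η) (M + η)) := fun t ht => IccExtend_of_mem _ _ ht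
  have hIcc : ∀ t, m ≤ t ∧ t ≤ M →
      t ∈ Icc (m - η) (M + η) ∧ t ∈ Ioo (m - η / 2) (M + η / 2) :=
    fun t ht => ⟨⟨by linarith, by linarith⟩, by linarith, by linarith⟩
  have hu' := hIcc u (by simp [m, M])
  have hv' := hIcc v (by simp [m, M])
  have hw' := hIcc w (by simp [m, M])
  obtain ⟨ρ, hρ, hρψ⟩ := exists_contDiffBump_collinearityDefect_convolution_ne_zero hψ
    (u := u) (v := v) (w := w) (by rwa [collinearityDefect, hψφ hu'.1, hψφ hv'.1, hψφ hw'.1])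
    (by positivity : 0 < η / 4)
  have hΨ : ContDiff ℝ 2 (ρ.normed volume ⋆[lsmul ℝ ℝ] ψ) :=
    ρ.hasCompactSupport_normed.contDiff_convolution_left _ ρ.contDiff_normed hψ.locallyIntegrable
  obtain ⟨p, hp, hp2⟩ := exists_iteratedDeriv_two_ne_zero hΨ isOpen_Ioo isPreconnected_Ioo
    hu'.2 hv'.2 hw'.2 hρψ
  have hball : closedBall p (η / 4 + ρ.rOut) ⊆ Icc (m - η) (M + η) := by
    rw [Real.closedBall_eq_Icc]
    exact Icc_subset_Icc (by linarith [hp.1]) (by linarith [hp.2])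
  exact ⟨ψ, hψ, ρ, p, η / 4, by positivity, hp2, hball.trans hK, hψφ.mono hball⟩

theorem Submodule.integral_mem_of_isClosed {α E : Type*} [MeasurableSpace α] {μ : Measure α}
    [NormedAddCommGroup E] [NormedSpace ℝ E] [CompleteSpace E] {G : Submodule ℝ E}
    (hG : IsClosed (G : Set E)) {v : α → E} (hv : ∀ a, v a ∈ G) : ∫ a, v a ∂μ ∈ G := by
  have : CompleteSpace G := hG.completeSpace_coe
  lift v to α → G using hv
  by_cases hint : Integrable (fun a => (v a : E)) μ
  · have : Integrable v μ := (G.subtypeₗᵢ.lipschitz.integrable_comp_iff_of_antilipschitz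
      G.subtypeₗᵢ.antilipschitz rfl).1 hint
    convert (∫ a, v a ∂μ).2
    exact G.subtypeL.integral_comp_comm this
  · rw [integral_undef hint]
    exact G.zero_mem

theorem Submodule.mul_mem_closure_of_mul_self_mem {A : Type*} [CommRing A] [Algebra ℝ A]
    [TopologicalSpace A] [IsTopologicalRing A] [ContinuousConstSMul ℝ A] (F : Submodule ℝ A)
    (hsq : ∀ f ∈ F, f * f ∈ closure (F : Set A)) :
    ∀ f ∈ closure (F : Set A), ∀ g ∈ closure (F : Set A), f * g ∈ closure (F : Set A) := by
  rw [← F.topologicalClosure_coe] at hsq ⊢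
  have hF : ∀ f ∈ (F : Set A), ∀ g ∈ (F : Set A), f * g ∈ (F.topologicalClosure : Set A) := by
    intro f hf g hg
    have hpol : f * g = (2 : ℝ)⁻¹ • ((f + g) * (f + g) - f * f - g * g) := by
      rw [show (f + g) * (f + g) - f * f - g * g = (2 : ℝ) • (f * g) by
        rw [two_smul]; ring, inv_smul_smul₀ two_ne_zero]
    rw [hpol]
    exact F.topologicalClosure.smul_mem _ <| sub_mem (sub_mem (hsq _ (add_mem hf hg)) (hsq f hf))
      (hsq g hg)
  intro f hf g hg
  simpa [F.isClosed_topologicalClosure.closure_eq] using map_mem_closure₂ continuous_mul hf hg hF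

section ContinuousMap

variable {X : Type*} [TopologicalSpace X] [CompactSpace X]

theorem ContinuousMap.exists_mem_convolution_comp {G : Submodule ℝ C(X, ℝ)}
    (hG : IsClosed (G : Set C(X, ℝ))) {ρ ψ : ℝ → ℝ} (hρ : Continuous ρ)
    (hρs : HasCompactSupport ρ) (hψ : Continuous ψ) (f : C(X, ℝ))
    (hf : ∀ s ∈ Function.support ρ, ∃ h ∈ G, ∀ x, h x = ψ (f x - s)) :
    ∃ h ∈ G, ∀ x, h x = (ρ ⋆[lsmul ℝ ℝ] ψ) (f x) := by
  let W : C(ℝ × X, ℝ) := ⟨fun q => ρ q.1 * ψ (f q.2 - q.1), by fun_prop⟩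
  have hWs : HasCompactSupport W.curry :=
    hρs.mono fun s hs => by
      rw [Function.mem_support] at hs ⊢
      contrapose! hs
      ext x
      simp [W, hs]
  have hWG : ∀ s, W.curry s ∈ G := by
    intro s
    by_cases hs : ρ s = 0
    · convert G.zero_mem
      ext x
      simp [W, hs]
    · obtain ⟨h, hG, hh⟩ := hf s hs
      convert G.smul_mem (ρ s) hG
      ext x
      simp [W, hh]
  refine ⟨∫ s, W.curry s, G.integral_mem_of_isClosed hG hWG, fun x => ?_⟩
  rw [ContinuousMap.integral_apply (W.curry.continuous.integrable_of_hasCompactSupport hWs),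
    convolution_def]
  simp [W]

theorem Submodule.eventually_exists_mem_closure_convolution_comp {F : Submodule ℝ C(X, ℝ)}
    (hone : 1 ∈ F) {U : Set ℝ} {φ ψ : ℝ → ℝ}
    (hcomp : ∀ f ∈ F, (∀ x, f x ∈ U) → ∃ h ∈ F, ∀ x, h x = φ (f x))
    (hψ : Continuous ψ) (ρ : ContDiffBump (0 : ℝ)) {p δ : ℝ} (hδ : 0 < δ)
    (hU : closedBall p (δ + ρ.rOut) ⊆ U) (hψφ : EqOn ψ φ (closedBall p (δ + ρ.rOut))) :
    ∀ᶠ g in 𝓝 (0 : C(X, ℝ)), g ∈ F →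
      ∃ h ∈ F.topologicalClosure, ∀ x, h x = (ρ.normed volume ⋆[lsmul ℝ ℝ] ψ) (p + g x) := by
  filter_upwards [closedBall_mem_nhds 0 hδ] with g hgδ hg
  rw [mem_closedBall_zero_iff] at hgδ
  obtain ⟨h, hhG, hh⟩ := ContinuousMap.exists_mem_convolution_comp (ρ := ρ.normed volume)
    F.isClosed_topologicalClosure ρ.continuous_normed ρ.hasCompactSupport_normed hψ (p • 1 + g)
    fun s hs => by
      rw [ρ.support_normed_eq, mem_ball_zero_iff] at hs
      have hball : ∀ x, p + g x - s ∈ closedBall p (δ + ρ.rOut) := fun x => by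
        rw [mem_closedBall, dist_eq_norm, add_sub_assoc, add_sub_cancel_left]
        exact (norm_sub_le _ _).trans (add_le_add ((g.norm_coe_le_norm x).trans hgδ) hs.le)
      obtain ⟨h, hhF, hh⟩ := hcomp ((p - s) • 1 + g) (add_mem (F.smul_mem _ hone) hg)
        fun x => hU (by simpa [add_sub_right_comm] using hball x)
      exact ⟨h, F.le_topologicalClosure hhF, fun x => by
        simp [hh, hψφ (hball x), sub_add_eq_add_sub]⟩
  exact ⟨h, hhG, by simpa using hh⟩

theorem ContinuousMap.mul_self_mem_of_comp_mem {G : Submodule ℝ C(X, ℝ)}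
    (hG : IsClosed (G : Set C(X, ℝ))) (hone : 1 ∈ G) {Ψ : ℝ → ℝ} (hΨ : ContDiff ℝ 2 Ψ) {p : ℝ}
    (hp : iteratedDeriv 2 Ψ p ≠ 0) {f : C(X, ℝ)} (hf : f ∈ G)
    (hcomp : ∀ᶠ ε in 𝓝[>] 0, ∃ h ∈ G, ∀ x, h x = Ψ (p + ε * f x)) : f * f ∈ G := by
  set c := iteratedDeriv 2 Ψ p
  rw [← SetLike.mem_coe, ← hG.closure_eq, Metric.mem_closure_iff]
  intro τ hτ
  set κ := τ * |c| / (4 * (‖f‖ ^ 2 + 1))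
  obtain ⟨δ, hδ, hR⟩ :=
    Metric.eventually_nhds_iff.1 ((isLittleO_taylor_two hΨ p).def (by positivity : 0 < κ))
  have hsmall : ∀ᶠ ε in 𝓝[>] (0 : ℝ), 0 < ε ∧ ε * ‖f‖ < δ :=
    (eventually_mem_nhdsWithin (a := (0 : ℝ)) (s := Ioi 0)).and <|
      ((continuous_mul_const ‖f‖).tendsto' 0 0 (zero_mul _)).mono_left nhdsWithin_le_nhds
        |>.eventually (eventually_lt_nhds hδ)
  obtain ⟨ε, ⟨h, hhG, hh⟩, hε, hεf⟩ := (hcomp.and hsmall).exists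
  refine ⟨(2 / (c * ε ^ 2)) • (h - Ψ p • 1 - (ε * deriv Ψ p) • f),
    G.smul_mem _ (G.sub_mem (G.sub_mem hhG (G.smul_mem _ hone)) (G.smul_mem _ hf)), ?_⟩
  rw [dist_comm, dist_eq_norm]
  refine lt_of_le_of_lt ((ContinuousMap.norm_le _ (by positivity)).2 fun x => ?_)
    (half_lt_self hτ)
  have hx : |f x| ≤ ‖f‖ := by simpa using f.norm_coe_le_norm x
  have hRx : |Ψ (p + ε * f x) - (Ψ p + deriv Ψ p * (ε * f x) + c / 2 * (ε * f x) ^ 2)| ≤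
      κ * (ε * f x) ^ 2 := by
    have hεx : dist (ε * f x) 0 < δ := by
      rw [Real.dist_0_eq_abs, abs_mul, abs_of_pos hε]
      exact lt_of_le_of_lt (by gcongr) hεf
    simpa only [Real.norm_eq_abs, abs_pow, sq_abs] using hR hεx
  simp only [ContinuousMap.sub_apply, ContinuousMap.smul_apply, ContinuousMap.mul_apply,
    ContinuousMap.one_apply, hh, smul_eq_mul, mul_one]
  calc _ ≤ 2 * κ / |c| * f x ^ 2 := abs_two_div_mul_sub_sub_sq_le hp hε.ne' hRx
    _ ≤ 2 * κ / |c| * ‖f‖ ^ 2 :=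
      mul_le_mul_of_nonneg_left (sq_le_sq' (abs_le.1 hx).1 (abs_le.1 hx).2) (by positivity)
    _ ≤ τ / 2 := by
      rw [show 2 * κ / |c| * ‖f‖ ^ 2 = τ / 2 * (‖f‖ ^ 2 / (‖f‖ ^ 2 + 1)) by
        simp only [κ]; field_simp [abs_pos.2 hp]; ring]
      exact mul_le_of_le_one_right (by positivity) (div_le_one_of_le₀ (by linarith) (by positivity))

theorem ContinuousMap.sup_mem_closure_and_dense_of_mul_mem
    (F : Submodule ℝ C(X, ℝ)) (hone : 1 ∈ F)
    (hmul : ∀ f ∈ closure (F : Set C(X, ℝ)), ∀ g ∈ closure (F : Set C(X, ℝ)),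
      f * g ∈ closure (F : Set C(X, ℝ))) :
    (∀ f ∈ closure (F : Set C(X, ℝ)), ∀ g ∈ closure (F : Set C(X, ℝ)),
      f ⊔ g ∈ closure (F : Set C(X, ℝ))) ∧
    ((∀ x y : X, x ≠ y → ∃ f ∈ F, f x ≠ f y) → Dense (F : Set C(X, ℝ))) := by
  let A : Subalgebra ℝ C(X, ℝ) := F.topologicalClosure.toSubalgebra
    (F.le_topologicalClosure hone) fun f g hf hg => hmul f hf g hg
  have hA : (A : Set C(X, ℝ)) = closure F := F.topologicalClosure_coe
  have hAclosed : IsClosed (A : Set C(X, ℝ)) := hA ▸ isClosed_closure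
  refine ⟨fun f hf g hg => hA ▸ sup_mem_closed_subalgebra A hAclosed ⟨f, hf⟩ ⟨g, hg⟩,
    fun hsep => ?_⟩
  have htop := subalgebra_topologicalClosure_eq_top_of_separatesPoints A fun x y hxy => by
    obtain ⟨f, hf, hfxy⟩ := hsep x y hxy
    exact ⟨f, ⟨f, subset_closure hf, rfl⟩, hfxy⟩
  rw [dense_iff_closure_eq, ← hA, ← hAclosed.closure_eq]
  exact congrArg SetLike.coe htop

end ContinuousMap

theorem stmt_15_general (X : Type*) [TopologicalSpace X] [CompactSpace X]
    (F : Submodule ℝ C(X, ℝ)) (hone : (1 : C(X, ℝ)) ∈ F)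
    (U : Set ℝ) (hUopen : IsOpen U) (hUconn : U.OrdConnected)
    (φ : ℝ → ℝ) (hφ : ContinuousOn φ U)
    (hnotaff : ¬∃ a b : ℝ, ∀ t ∈ U, φ t = a * t + b)
    (hcomp : ∀ f ∈ F, (∀ x : X, f x ∈ U) → ∃ h ∈ F, ∀ x : X, h x = φ (f x)) :
    ((∀ f ∈ closure (F : Set C(X, ℝ)), ∀ g ∈ closure (F : Set C(X, ℝ)),
        f * g ∈ closure (F : Set C(X, ℝ))) ∧
      (∀ f ∈ closure (F : Set C(X, ℝ)), ∀ g ∈ closure (F : Set C(X, ℝ)),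
        f ⊔ g ∈ closure (F : Set C(X, ℝ)))) ∧
      ((∀ x y : X, x ≠ y → ∃ f ∈ F, f x ≠ f y) → Dense (F : Set C(X, ℝ))) := by
  obtain ⟨ψ, hψ, ρ, p, δ, hδ, hp, hU, hψφ⟩ :=
    exists_contDiffBump_iteratedDeriv_convolution_ne_zero hUopen hUconn hφ hnotaff
  have hcompΨ := F.eventually_exists_mem_closure_convolution_comp hone hcomp hψ ρ hδ hU hψφ
  have hsq : ∀ f ∈ F, f * f ∈ closure (F : Set C(X, ℝ)) := fun f hf =>
    ContinuousMap.mul_self_mem_of_comp_mem F.isClosed_topologicalClosure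
      (F.le_topologicalClosure hone)
      (ρ.hasCompactSupport_normed.contDiff_convolution_left _ ρ.contDiff_normed
        hψ.locallyIntegrable) hp (F.le_topologicalClosure hf)
      ((((continuous_id.smul continuous_const).tendsto' 0 0 (zero_smul ℝ f)).mono_left
        nhdsWithin_le_nhds).eventually hcompΨ |>.mono fun ε hε => by
          simpa using hε (F.smul_mem ε hf))
  have hmul := F.mul_mem_closure_of_mul_self_mem hsq
  obtain ⟨hsup, hdense⟩ := ContinuousMap.sup_mem_closure_and_dense_of_mul_mem F hone hmul
  exact ⟨⟨hmul, hsup⟩, hdense⟩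

/-- Let `X` be compact Hausdorff, `F ≤ C(X)` a subspace containing
`1`, `U` a nonempty open interval, and `φ : U → ℝ` continuous and not affine on `U`.
If `φ ∘ f ∈ F` whenever `f ∈ F` has range in `U`, then the sup-norm closure of `F` is
a subalgebra and a sublattice of `C(X)`; moreover if `F` separates points then `F` is
dense. -/
theorem stmt_15 (X : Type*) [TopologicalSpace X] [CompactSpace X] [T2Space X]
    (F : Submodule ℝ C(X, ℝ)) (hone : (1 : C(X, ℝ)) ∈ F)
    (U : Set ℝ) (hUopen : IsOpen U) (hUconn : U.OrdConnected) (hUne : U.Nonempty)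
    (φ : ℝ → ℝ) (hφ : ContinuousOn φ U)
    (hnotaff : ¬∃ a b : ℝ, ∀ t ∈ U, φ t = a * t + b)
    (hcomp : ∀ f ∈ F, (∀ x : X, f x ∈ U) → ∃ h ∈ F, ∀ x : X, h x = φ (f x)) :
    ((∀ f ∈ closure (F : Set C(X, ℝ)), ∀ g ∈ closure (F : Set C(X, ℝ)),
        f * g ∈ closure (F : Set C(X, ℝ))) ∧
      (∀ f ∈ closure (F : Set C(X, ℝ)), ∀ g ∈ closure (F : Set C(X, ℝ)),
        f ⊔ g ∈ closure (F : Set C(X, ℝ)))) ∧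
      ((∀ x y : X, x ≠ y → ∃ f ∈ F, f x ≠ f y) → Dense (F : Set C(X, ℝ))) :=
  stmt_15_general X F hone U hUopen hUconn φ hφ hnotaff hcomp
end

section
/- Let X be a completely regular Hausdorff (Tychonoff) topological space and let F be a linear subspace of C(X) containing the constant function 1. Let φ : ℝ → ℝ be continuous and not affine (there are no a, b ∈ ℝ with φ(t) = a·t + b for all t ∈ ℝ), and assume φ ∘ f ∈ F for every f ∈ F. Then the closure of F in the compact-open topology is closed under pointwise multiplication and under the pointwise lattice operation ⊔ (it is a subalgebra and a sublattice of C(X)); moreover, if F separates the points of X, then F is dense in C(X). -/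
/-!
Let `G` be the closure of `F`. The functions `ψ ∈ C(ℝ)` that operate on `G` (`ψ ∘ f ∈ G` for all
`f ∈ G`) form a closed subspace of `C(ℝ)` which is invariant under affine changes of variable
`t ↦ a t + b` (as `G` contains the constants) and contains the non-affine `φ`. Such a subspace is
stable under the smoothing `ψ ↦ (t ↦ ∫ₜ^{t+ε} ψ)`, since these integrals are locally uniform limits
of Riemann sums of translates. Smoothing `φ` twice gives a `C²` member whose second derivative, a
second difference of `φ`, is nonzero at some `c`; its second difference quotients at `c` then tend
to a nonzero multiple of `t ↦ t²`. So squares, hence products, of elements of `G` lie in `G`.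

Now the functions operating on `G` form a closed subalgebra of `C(ℝ)` containing the identity, so
they are all of `C(ℝ)` by the Stone–Weierstrass theorem on compact sets. In particular `|·|`
operates on `G`, which gives the lattice operations, and Stone–Weierstrass once more gives density.
-/

open Set Filter intervalIntegral

theorem exists_secondDiff_ne_zero_of_not_affine {φ : ℝ → ℝ} (hφ : Continuous φ)
    (hna : ¬∃ a b : ℝ, ∀ t, φ t = a * t + b) :
    ∃ c ε : ℝ, 0 < ε ∧ φ (c + 2 * ε) - 2 * φ (c + ε) + φ c ≠ 0 := by
  by_contra! h
  have hmid : ∀ x y, x < y → φ (2⁻¹ * (x + y)) = 2⁻¹ * (φ x + φ y) := fun x y hxy => by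
    have := h x ((y - x) / 2) (by linarith)
    rw [show x + 2 * ((y - x) / 2) = y by ring,
      show x + (y - x) / 2 = 2⁻¹ * (x + y) by ring] at this
    linarith
  let L : ℝ →ᵃ[ℝ] ℝ := AffineMap.ofMapMidpoint φ (fun x y => by
    simp only [midpoint_eq_smul_add, smul_eq_mul, invOf_eq_inv]
    rcases lt_trichotomy x y with hxy | rfl | hxy
    · exact hmid x y hxy
    · ring_nf
    · rw [add_comm x, add_comm (φ x)]; exact hmid y x hxy) hφ
  refine hna ⟨L.linear 1, L 0, fun t => ?_⟩
  have hlin : L.linear t = L.linear 1 * t := by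
    rw [mul_comm, ← smul_eq_mul, ← map_smul, smul_eq_mul, mul_one]
  have hL : L t = L.linear t + L 0 := by simpa using L.map_vadd 0 t
  rw [← hlin]
  exact hL

theorem abs_integral_sub_riemannSum_le {ψ : ℝ → ℝ} (hψ : Continuous ψ) {a h ω : ℝ} (m : ℕ)
    (hh : 0 ≤ h)
    (hω : ∀ k < m, ∀ s ∈ Icc (a + k * h) (a + (k + 1) * h), |ψ s - ψ (a + k * h)| ≤ ω) :
    |(∫ s in a..a + m * h, ψ s) - h * ∑ k ∈ Finset.range m, ψ (a + k * h)| ≤ m * h * ω := by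
  have hsplit := sum_integral_adjacent_intervals (a := fun k : ℕ => a + k * h) (n := m)
    (μ := MeasureTheory.volume) (fun k _ => hψ.intervalIntegrable _ _)
  push_cast at hsplit
  simp only [zero_mul, add_zero] at hsplit
  have hrect : ∀ k : ℕ, h * ψ (a + k * h) = ∫ _ in a + k * h..a + (k + 1) * h, ψ (a + k * h) := by
    intro k; rw [integral_const, smul_eq_mul]; ring
  rw [← hsplit, Finset.mul_sum, ← Finset.sum_sub_distrib]
  calc _ ≤ ∑ k ∈ Finset.range m, |(∫ s in a + k * h..a + (k + 1) * h, ψ s) - h * ψ (a + k * h)| :=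
        Finset.abs_sum_le_sum_abs _ _
    _ ≤ ∑ _k ∈ Finset.range m, ω * h := Finset.sum_le_sum fun k hk => by
        rw [hrect, ← integral_sub (hψ.intervalIntegrable _ _) intervalIntegrable_const]
        have := norm_integral_le_of_norm_le_const (C := ω) (a := a + k * h) (b := a + (k + 1) * h)
          (f := fun s => ψ s - ψ (a + k * h)) fun s hs => by
            rw [uIoc_of_le (by nlinarith)] at hs
            exact hω k (Finset.mem_range.mp hk) s (Ioc_subset_Icc_self hs)
        rwa [show a + (k + 1) * h - (a + k * h) = h by ring, abs_of_nonneg hh] at this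
    _ = m * h * ω := by simp; ring

theorem abs_secondDiff_sub_le {ψ ψ₁ ψ₂ : ℝ → ℝ} (h1 : ∀ t, HasDerivAt ψ (ψ₁ t) t)
    (h2 : ∀ t, HasDerivAt ψ₁ (ψ₂ t) t) {c δ η : ℝ}
    (hψ₂ : ∀ s, |s| ≤ η → |ψ₂ (c + s) - ψ₂ c| ≤ δ) {u : ℝ} (hu : |u| ≤ η) :
    |ψ (c + u) + ψ (c - u) - 2 * ψ c - u ^ 2 * ψ₂ c| ≤ 2 * δ * u ^ 2 := by
  have habs {s r : ℝ} (hr : r ∈ uIcc 0 s) : |r| ≤ |s| := by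
    simpa using abs_sub_left_of_mem_uIcc hr
  have hD₁ {s : ℝ} (hs : |s| ≤ η) : |ψ₁ (c + s) - ψ₁ (c - s) - 2 * s * ψ₂ c| ≤ 2 * δ * |s| := by
    have := (convex_uIcc 0 s).norm_image_sub_le_of_norm_hasDerivWithin_le
      (f := fun r => ψ₁ (c + r) - ψ₁ (c - r) - 2 * r * ψ₂ c)
      (f' := fun r => ψ₂ (c + r) + ψ₂ (c - r) - 2 * ψ₂ c) (C := 2 * δ)
      (fun r _ => by
        have := (((h2 (c + r)).comp_const_add c r).sub ((h2 (c - r)).comp_const_sub c r)).sub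
          ((hasDerivAt_id r).const_mul (2 * ψ₂ c))
        convert this.hasDerivWithinAt using 1
        · ext r; simp only [Pi.sub_apply, id]; ring
        · ring)
      (fun r hr => by
        have hr' : |r| ≤ η := (habs hr).trans hs
        calc ‖ψ₂ (c + r) + ψ₂ (c - r) - 2 * ψ₂ c‖
            = |(ψ₂ (c + r) - ψ₂ c) + (ψ₂ (c + -r) - ψ₂ c)| := by
              rw [Real.norm_eq_abs, ← sub_eq_add_neg]; congr 1; ring
          _ ≤ 2 * δ := (abs_add_le _ _).trans
              (by linarith [hψ₂ r hr', hψ₂ (-r) ((abs_neg r).trans_le hr')]))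
      left_mem_uIcc right_mem_uIcc
    simpa using this
  have := (convex_uIcc 0 u).norm_image_sub_le_of_norm_hasDerivWithin_le
    (f := fun s => ψ (c + s) + ψ (c - s) - s ^ 2 * ψ₂ c)
    (f' := fun s => ψ₁ (c + s) - ψ₁ (c - s) - 2 * s * ψ₂ c) (C := 2 * δ * |u|)
    (fun s _ => by
      have := (((h1 (c + s)).comp_const_add c s).add ((h1 (c - s)).comp_const_sub c s)).sub
        ((hasDerivAt_pow 2 s).mul_const (ψ₂ c))
      convert this.hasDerivWithinAt using 1
      · ext s; simp only [Pi.add_apply, Pi.sub_apply]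
      · push_cast; ring)
    (fun s hs => by
      have := hD₁ ((habs hs).trans hu)
      rw [Real.norm_eq_abs]
      have hδ : 0 ≤ δ := (abs_nonneg _).trans (hψ₂ 0 (by simpa using (abs_nonneg u).trans hu))
      exact this.trans (mul_le_mul_of_nonneg_left (habs hs) (by positivity)))
    left_mem_uIcc right_mem_uIcc
  simp only [add_zero, sub_zero, zero_pow two_ne_zero, zero_mul, Real.norm_eq_abs] at this
  calc _ = |ψ (c + u) + ψ (c - u) - u ^ 2 * ψ₂ c - (ψ c + ψ c)| := by congr 1; ring
    _ ≤ 2 * δ * |u| * |u| := this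
    _ = 2 * δ * u ^ 2 := by rw [mul_assoc, abs_mul_abs_self, sq]

theorem Submodule.mul_mem_of_forall_sq_mem {A : Type*} [CommRing A] [Algebra ℝ A]
    {G : Submodule ℝ A} (hsq : ∀ f ∈ G, f ^ 2 ∈ G) {f g : A} (hf : f ∈ G) (hg : g ∈ G) :
    f * g ∈ G := by
  rw [← G.smul_mem_iff (two_ne_zero' ℝ)]
  convert G.sub_mem (G.sub_mem (hsq _ (G.add_mem hf hg)) (hsq f hf)) (hsq g hg) using 1
  rw [two_smul]
  ring

namespace ContinuousMap

variable {X : Type*} [TopologicalSpace X]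

theorem mem_closure_iff_forall_isCompact {M : Set C(X, ℝ)} {f : C(X, ℝ)} :
    f ∈ closure M ↔
      ∀ K : Set X, IsCompact K → ∀ ε > 0, ∃ g ∈ M, ∀ x ∈ K, dist (g x) (f x) < ε := by
  have hb := (Metric.uniformity_basis_dist (α := ℝ)).compactConvergenceUniformity (α := X)
  rw [mem_closure_iff_nhds_basis (nhds_basis_uniformity' hb)]
  constructor
  · intro H K hK ε hε
    obtain ⟨g, hgM, hg⟩ := H (K, ε) ⟨hK, hε⟩
    exact ⟨g, hgM, fun x hx => by simpa [dist_comm] using hg x hx⟩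
  · rintro H ⟨K, ε⟩ ⟨hK, hε⟩
    obtain ⟨g, hgM, hg⟩ := H K hK ε hε
    exact ⟨g, hgM, fun x hx => by simpa [dist_comm] using hg x hx⟩

theorem dense_of_separatesPoints {A : Subalgebra ℝ C(X, ℝ)} (hA : A.SeparatesPoints) :
    Dense (A : Set C(X, ℝ)) := fun f => by
  refine mem_closure_iff_forall_isCompact.mpr fun K hK ε hε => ?_
  obtain ⟨g, hgA, hg⟩ :=
    exists_mem_subalgebra_near_continuous_of_isCompact_of_separatesPoints hA f hK hε
  exact ⟨g, hgA, fun x hx => by simpa [dist_eq_norm] using hg x hx⟩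

def affine (a b : ℝ) : C(ℝ, ℝ) := ⟨fun t => a * t + b, by fun_prop⟩

@[simp] lemma affine_apply (a b t : ℝ) : affine a b t = a * t + b := rfl

theorem hasDerivAt_integral_self_add (ψ : C(ℝ, ℝ)) (ε t : ℝ) :
    HasDerivAt (fun u => ∫ s in u..u + ε, ψ s) (ψ (t + ε) - ψ t) t := by
  have hprim (b : ℝ) : HasDerivAt (fun u => ∫ s in (0 : ℝ)..u, ψ s) (ψ b) b :=
    (ψ.continuous.integral_hasStrictDerivAt 0 b).hasDerivAt
  have hshift : HasDerivAt (fun u => ∫ s in (0 : ℝ)..u + ε, ψ s) (ψ (t + ε)) t := by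
    simpa using (hprim (t + ε)).comp_add_const t ε
  refine (hshift.sub (hprim t)).congr_of_eventuallyEq (Eventually.of_forall fun u => ?_)
  exact (integral_interval_sub_left (ψ.continuous.intervalIntegrable _ _)
    (ψ.continuous.intervalIntegrable _ _)).symm

noncomputable def movingIntegral (ψ : C(ℝ, ℝ)) (ε : ℝ) : C(ℝ, ℝ) :=
  ⟨fun t => ∫ s in t..t + ε, ψ s, continuous_iff_continuousAt.mpr fun t =>
    (hasDerivAt_integral_self_add ψ ε t).continuousAt⟩

lemma movingIntegral_apply (ψ : C(ℝ, ℝ)) (ε t : ℝ) :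
    movingIntegral ψ ε t = ∫ s in t..t + ε, ψ s := rfl

lemma hasDerivAt_movingIntegral (ψ : C(ℝ, ℝ)) (ε t : ℝ) :
    HasDerivAt (movingIntegral ψ ε) (ψ (t + ε) - ψ t) t :=
  hasDerivAt_integral_self_add ψ ε t

section AffineInvariant

variable {S : Submodule ℝ C(ℝ, ℝ)}

theorem movingIntegral_mem (hS : IsClosed (S : Set C(ℝ, ℝ)))
    (htrans : ∀ ψ ∈ S, ∀ b, ψ.comp (affine 1 b) ∈ S) {ψ : C(ℝ, ℝ)} (hψ : ψ ∈ S) {ε : ℝ}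
    (hε : 0 < ε) :
    movingIntegral ψ ε ∈ S := by
  rw [← SetLike.mem_coe, ← hS.closure_eq, mem_closure_iff_forall_isCompact]
  intro K hK δ hδ
  obtain ⟨R, -, hR⟩ := hK.isBounded.exists_pos_norm_le
  obtain ⟨η, hη, hψη⟩ := Metric.uniformContinuousOn_iff_le.mp
    ((isCompact_Icc (a := -R) (b := R + ε)).uniformContinuousOn_of_continuous
      ψ.continuous.continuousOn) (δ / (2 * ε)) (by positivity)
  obtain ⟨m, hm⟩ := exists_nat_gt (ε / η)
  have hm0 : (0 : ℝ) < m := lt_trans (by positivity) hm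
  set h := ε / m with hh
  have hmh : m * h = ε := by rw [hh]; field_simp
  have hh0 : 0 ≤ h := by positivity
  have hhη : h ≤ η := by
    rw [hh, div_le_iff₀ hm0]; rw [div_lt_iff₀ hη] at hm; linarith
  refine ⟨h • ∑ k ∈ Finset.range m, ψ.comp (affine 1 (k * h)),
    S.smul_mem _ (S.sum_mem fun k _ => htrans ψ hψ _), fun t ht => ?_⟩
  have htR := abs_le.mp (Real.norm_eq_abs t ▸ hR t ht)
  have hriemann :=
    abs_integral_sub_riemannSum_le ψ.continuous (a := t) (h := h) (ω := δ / (2 * ε)) m hh0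
      fun k hk s hs => by
        have hkh : 0 ≤ k * h := by positivity
        have hk1h : (k + 1) * h ≤ ε :=
          hmh ▸ mul_le_mul_of_nonneg_right (by exact_mod_cast hk) hh0
        rw [← Real.dist_eq]
        refine hψη s ⟨?_, ?_⟩ _ ⟨?_, ?_⟩ ?_
        · linarith [hs.1]
        · linarith [hs.2]
        · linarith
        · linarith
        · rw [Real.dist_eq, abs_le]; constructor <;> linarith [hs.1, hs.2]
  rw [hmh] at hriemann
  rw [Real.dist_eq]
  calc _ = |(∫ s in t..t + ε, ψ s) - h * ∑ k ∈ Finset.range m, ψ (t + k * h)| := by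
        rw [abs_sub_comm]; simp [movingIntegral_apply, add_comm t]
    _ ≤ ε * (δ / (2 * ε)) := hriemann
    _ < δ := by field_simp; linarith

theorem id_sq_mem_of_secondDeriv_ne_zero (hS : IsClosed (S : Set C(ℝ, ℝ)))
    (haff : ∀ ψ ∈ S, ∀ a b, ψ.comp (affine a b) ∈ S) {ψ : C(ℝ, ℝ)} (hψ : ψ ∈ S)
    {ψ₁ ψ₂ : ℝ → ℝ} (h1 : ∀ t, HasDerivAt ψ (ψ₁ t) t) (h2 : ∀ t, HasDerivAt ψ₁ (ψ₂ t) t)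
    {c : ℝ} (hc : ContinuousAt ψ₂ c) (hne : ψ₂ c ≠ 0) : ContinuousMap.id ℝ ^ 2 ∈ S := by
  rw [← S.smul_mem_iff hne, ← SetLike.mem_coe, ← hS.closure_eq, mem_closure_iff_forall_isCompact]
  intro K hK δ hδ
  obtain ⟨R, hR0, hR⟩ := hK.isBounded.exists_pos_norm_le
  set δ' := δ / (4 * R ^ 2)
  obtain ⟨η, hη, hψ₂η⟩ := Metric.continuousAt_iff.mp hc δ' (by positivity)
  set w := η / (2 * R)
  have hw : 0 < w := by positivity
  refine ⟨(w ^ 2)⁻¹ •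
      (ψ.comp (affine w c) + ψ.comp (affine (-w) c) - (2 : ℝ) • ψ.comp (affine 0 c)),
    S.smul_mem _ (S.sub_mem (S.add_mem (haff ψ hψ _ _) (haff ψ hψ _ _))
      (S.smul_mem _ (haff ψ hψ _ _))), fun t ht => ?_⟩
  have htR : |t| ≤ R := Real.norm_eq_abs t ▸ hR t ht
  have hwt : |w * t| ≤ η / 2 := by
    rw [abs_mul, abs_of_pos hw]
    calc w * |t| ≤ w * R := by gcongr
      _ = η / 2 := by simp only [w]; field_simp
  have hψ₂le : ∀ s, |s| ≤ η / 2 → |ψ₂ (c + s) - ψ₂ c| ≤ δ' := fun s hs => by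
    rw [← Real.dist_eq]
    refine (hψ₂η ?_).le
    rw [Real.dist_eq, add_sub_cancel_left]
    linarith
  have htaylor := abs_secondDiff_sub_le h1 h2 hψ₂le hwt
  have hval : ((w ^ 2)⁻¹ • (ψ.comp (affine w c) + ψ.comp (affine (-w) c)
      - (2 : ℝ) • ψ.comp (affine 0 c))) t - (ψ₂ c • ContinuousMap.id ℝ ^ 2) t
      = (ψ (c + w * t) + ψ (c - w * t) - 2 * ψ c - (w * t) ^ 2 * ψ₂ c) / w ^ 2 := by
    simp only [smul_apply, sub_apply, add_apply, comp_apply, affine_apply, pow_apply, id_apply,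
      smul_eq_mul]
    rw [show w * t + c = c + w * t by ring, show -w * t + c = c - w * t by ring, zero_mul, zero_add]
    field_simp
  rw [Real.dist_eq, hval, abs_div, abs_of_pos (by positivity : 0 < w ^ 2)]
  calc _ ≤ 2 * δ' * (w * t) ^ 2 / w ^ 2 := by gcongr
    _ = 2 * δ' * t ^ 2 := by field_simp
    _ ≤ 2 * δ' * R ^ 2 :=
        mul_le_mul_of_nonneg_left (sq_le_sq' (abs_le.mp htR).1 (abs_le.mp htR).2) (by positivity)
    _ < δ := by rw [show δ' = δ / (4 * R ^ 2) from rfl]; field_simp; linarith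

theorem id_sq_mem_of_not_affine (hS : IsClosed (S : Set C(ℝ, ℝ)))
    (haff : ∀ ψ ∈ S, ∀ a b, ψ.comp (affine a b) ∈ S) {φ : C(ℝ, ℝ)} (hφ : φ ∈ S)
    (hna : ¬∃ a b : ℝ, ∀ t, φ t = a * t + b) : ContinuousMap.id ℝ ^ 2 ∈ S := by
  obtain ⟨c, ε, hε, hne⟩ := exists_secondDiff_ne_zero_of_not_affine φ.continuous hna
  have htrans : ∀ ψ ∈ S, ∀ b, ψ.comp (affine 1 b) ∈ S := fun ψ hψ => haff ψ hψ 1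
  -- smoothing `φ` twice gives a `C²` function whose second derivative is a second difference of `φ`
  refine id_sq_mem_of_secondDeriv_ne_zero hS haff
    (movingIntegral_mem hS htrans (movingIntegral_mem hS htrans hφ hε) hε)
    (ψ₂ := fun t => φ (t + 2 * ε) - 2 * φ (t + ε) + φ t)
    (fun t => hasDerivAt_movingIntegral _ ε t) (fun t => ?_) (by fun_prop) hne
  refine (((hasDerivAt_movingIntegral φ ε (t + ε)).comp_add_const t ε).sub
    (hasDerivAt_movingIntegral φ ε t)).congr_deriv ?_
  ring_nf

end AffineInvariant

section Operating

def operatingFunctions (G : Submodule ℝ C(X, ℝ)) : Submodule ℝ C(ℝ, ℝ) where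
  carrier := {ψ | ∀ f ∈ G, ψ.comp f ∈ G}
  add_mem' hψ hχ f hf := by simpa only [add_comp] using G.add_mem (hψ f hf) (hχ f hf)
  zero_mem' f _ := by simpa only [zero_comp] using G.zero_mem
  smul_mem' r ψ hψ f hf := by simpa only [smul_comp] using G.smul_mem r (hψ f hf)

variable {G : Submodule ℝ C(X, ℝ)}

lemma mem_operatingFunctions {ψ : C(ℝ, ℝ)} : ψ ∈ operatingFunctions G ↔ ∀ f ∈ G, ψ.comp f ∈ G :=
  Iff.rfl

theorem isClosed_operatingFunctions (hG : IsClosed (G : Set C(X, ℝ))) :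
    IsClosed (operatingFunctions G : Set C(ℝ, ℝ)) := by
  have : (operatingFunctions G : Set C(ℝ, ℝ)) = ⋂ f ∈ G, (fun ψ : C(ℝ, ℝ) => ψ.comp f) ⁻¹' G := by
    ext ψ; simp [mem_operatingFunctions]
  rw [this]
  exact isClosed_biInter fun f _ => hG.preimage (continuous_precomp f)

theorem comp_affine_mem_operatingFunctions (h1 : (1 : C(X, ℝ)) ∈ G) {ψ : C(ℝ, ℝ)}
    (hψ : ψ ∈ operatingFunctions G) (a b : ℝ) : ψ.comp (affine a b) ∈ operatingFunctions G :=
  fun f hf => by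
    have : (ψ.comp (affine a b)).comp f = ψ.comp (a • f + b • 1) := by ext; simp
    rw [this]
    exact hψ _ (G.add_mem (G.smul_mem a hf) (G.smul_mem b h1))

theorem mem_operatingFunctions_topologicalClosure {F : Submodule ℝ C(X, ℝ)} {φ : C(ℝ, ℝ)}
    (hφ : φ ∈ operatingFunctions F) : φ ∈ operatingFunctions F.topologicalClosure := fun f hf =>
  closure_mono (image_subset_iff.mpr hφ)
    (image_closure_subset_closure_image (continuous_postcomp φ) ⟨f, hf, rfl⟩)

theorem operatingFunctions_eq_top (hG : IsClosed (G : Set C(X, ℝ))) (h1 : (1 : C(X, ℝ)) ∈ G)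
    (hmul : ∀ f g, f ∈ G → g ∈ G → f * g ∈ G) : operatingFunctions G = ⊤ := by
  let A : Subalgebra ℝ C(ℝ, ℝ) := (operatingFunctions G).toSubalgebra
    (fun f _ => by simpa only [one_comp] using h1)
    (fun ψ χ hψ hχ f hf => by simpa only [mul_comp] using hmul _ _ (hψ f hf) (hχ f hf))
  have hsep : A.SeparatesPoints := fun x y hxy =>
    ⟨_, ⟨ContinuousMap.id ℝ, fun f hf => by simpa only [id_comp] using hf, rfl⟩, hxy⟩
  rw [Submodule.eq_top_iff']
  intro ψ
  rw [← SetLike.mem_coe, ← (isClosed_operatingFunctions hG).closure_eq]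
  exact dense_of_separatesPoints hsep ψ

end Operating

end ContinuousMap

open ContinuousMap

theorem stmt_16_general (X : Type*) [TopologicalSpace X]
    (F : Submodule ℝ C(X, ℝ)) (hone : (1 : C(X, ℝ)) ∈ F)
    (φ : ℝ → ℝ) (hφ : Continuous φ)
    (hnotaff : ¬∃ a b : ℝ, ∀ t : ℝ, φ t = a * t + b)
    (hcomp : ∀ f ∈ F, ∃ h ∈ F, ∀ x : X, h x = φ (f x)) :
    ((∀ f ∈ closure (F : Set C(X, ℝ)), ∀ g ∈ closure (F : Set C(X, ℝ)),
        f * g ∈ closure (F : Set C(X, ℝ))) ∧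
      (∀ f ∈ closure (F : Set C(X, ℝ)), ∀ g ∈ closure (F : Set C(X, ℝ)),
        f ⊔ g ∈ closure (F : Set C(X, ℝ)))) ∧
      ((∀ x y : X, x ≠ y → ∃ f ∈ F, f x ≠ f y) → Dense (F : Set C(X, ℝ))) := by
  set G := F.topologicalClosure
  have hG : IsClosed (G : Set C(X, ℝ)) := F.isClosed_topologicalClosure
  have hG1 : (1 : C(X, ℝ)) ∈ G := F.le_topologicalClosure hone
  have hφG : ⟨φ, hφ⟩ ∈ operatingFunctions G := mem_operatingFunctions_topologicalClosure
    fun f hf => by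
      obtain ⟨h, hh, hhf⟩ := hcomp f hf
      convert hh
      ext x
      exact (hhf x).symm
  have hsq := id_sq_mem_of_not_affine (isClosed_operatingFunctions hG)
    (fun ψ hψ => comp_affine_mem_operatingFunctions hG1 hψ) hφG hnotaff
  have hmul : ∀ f g, f ∈ G → g ∈ G → f * g ∈ G := fun f g hf hg =>
    Submodule.mul_mem_of_forall_sq_mem (fun f hf => by simpa using hsq f hf) hf hg
  have habs : (⟨fun t => |t|, continuous_abs⟩ : C(ℝ, ℝ)) ∈ operatingFunctions G := by
    rw [operatingFunctions_eq_top hG hG1 hmul]; trivial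
  have hsup : ∀ f ∈ G, ∀ g ∈ G, f ⊔ g ∈ G := fun f hf g hg => by
    rw [sup_eq_half_smul_add_add_abs_sub' ℝ]
    exact G.smul_mem _ (G.add_mem (G.add_mem hf hg) (habs _ (G.sub_mem hg hf)))
  refine ⟨⟨fun f hf g hg => hmul f g hf hg, hsup⟩, fun hsep => ?_⟩
  rw [← dense_closure]
  exact dense_of_separatesPoints (A := G.toSubalgebra hG1 hmul) fun x y hxy =>
    let ⟨f, hf, hfxy⟩ := hsep x y hxy
    ⟨f, ⟨f, F.le_topologicalClosure hf, rfl⟩, hfxy⟩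

/-- Let `X` be a Tychonoff space, `F ≤ C(X)` a subspace containing
`1`, and `φ : ℝ → ℝ` continuous and not affine, with `φ ∘ f ∈ F` for all `f ∈ F`. Then
the closure of `F` in the compact-open topology is a subalgebra and a sublattice of
`C(X)`; moreover if `F` separates points then `F` is dense. -/
theorem stmt_16 (X : Type*) [TopologicalSpace X] [T35Space X]
    (F : Submodule ℝ C(X, ℝ)) (hone : (1 : C(X, ℝ)) ∈ F)
    (φ : ℝ → ℝ) (hφ : Continuous φ)
    (hnotaff : ¬∃ a b : ℝ, ∀ t : ℝ, φ t = a * t + b)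
    (hcomp : ∀ f ∈ F, ∃ h ∈ F, ∀ x : X, h x = φ (f x)) :
    ((∀ f ∈ closure (F : Set C(X, ℝ)), ∀ g ∈ closure (F : Set C(X, ℝ)),
        f * g ∈ closure (F : Set C(X, ℝ))) ∧
      (∀ f ∈ closure (F : Set C(X, ℝ)), ∀ g ∈ closure (F : Set C(X, ℝ)),
        f ⊔ g ∈ closure (F : Set C(X, ℝ)))) ∧
      ((∀ x y : X, x ≠ y → ∃ f ∈ F, f x ≠ f y) → Dense (F : Set C(X, ℝ))) :=
  stmt_16_general X F hone φ hφ hnotaff hcomp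
end

section
/- Let P = { x ∈ ℝ³ : x₁ ≥ 0, x₂ ≥ 0, x₃ ≥ 0 } and let u, v, w : P → ℝ be the three coordinate functions. Fix r, s ∈ ℝ with s ≠ −r and define φ : ℝ → ℝ by φ(t) = r·max(t, 0) + s·max(−t, 0). Then the function g : P → ℝ, g(x) = max(min(x₁, x₂) − x₃, 0), does not belong to the linear span of { φ ∘ ℓ restricted to P : ℓ : ℝ³ → ℝ linear } (equivalently, g ∉ span{ φ ∘ f : f ∈ span{u, v, w} }). -/
set_option maxHeartbeats 1000000

noncomputable def pt18 (t u v : ℝ) : ↥{x : Fin 3 → ℝ | ∀ i, 0 ≤ x i} :=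
  ⟨![max (1 + t * u) 0, max (1 + t * v) 0, 1], by
    intro i
    fin_cases i
    · exact le_max_right _ _
    · exact le_max_right _ _
    · exact zero_le_one⟩

noncomputable def St18 (t : ℝ) (h : ↥{x : Fin 3 → ℝ | ∀ i, 0 ≤ x i} → ℝ) : ℝ :=
  h (pt18 t 2 0) + h (pt18 t 0 2) - 2 * h (pt18 t 1 1)
    - h (pt18 t 0 (-2)) - h (pt18 t (-2) 0) + 2 * h (pt18 t (-1) (-1))

/-- Let `P = ℝ³₊` and `φ(t) = r·t⁺ + s·t⁻` with `s ≠ -r`. The function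
`g(x) = (min(x₁, x₂) - x₃)⁺` on `P` does not belong to the span of the restrictions to
`P` of the functions `φ ∘ ℓ`, `ℓ : ℝ³ → ℝ` linear. -/
theorem stmt_18 (r s : ℝ) (hrs : s ≠ -r)
    (φ : ℝ → ℝ) (hφ : ∀ t : ℝ, φ t = r * max t 0 + s * max (-t) 0)
    (P : Set (Fin 3 → ℝ)) (hP : P = {x : Fin 3 → ℝ | ∀ i, 0 ≤ x i})
    (g : P → ℝ) (hg : ∀ x : P, g x = max (min ((x : Fin 3 → ℝ) 0) ((x : Fin 3 → ℝ) 1)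
      - (x : Fin 3 → ℝ) 2) 0) :
    g ∉ Submodule.span ℝ
      {h : P → ℝ | ∃ ℓ : (Fin 3 → ℝ) →ₗ[ℝ] ℝ, ∀ x : P, h x = φ (ℓ (x : Fin 3 → ℝ))} := by
  intro hmem
  subst hP
  have hφ0 : φ 0 = 0 := by simp [hφ]
  have hφpos : ∀ x : ℝ, 0 < x → φ x = r * x := by
    intro x hx
    rw [hφ, max_eq_left hx.le, max_eq_right (by linarith : -x ≤ 0)]
    ring
  have hφneg : ∀ x : ℝ, x < 0 → φ x = -(s * x) := by
    intro x hx
    rw [hφ, max_eq_right hx.le, max_eq_left (by linarith : (0:ℝ) ≤ -x)]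
    ring
  have hodd : ∀ x : ℝ, φ x - φ (-x) = (r - s) * x := by
    intro x
    rcases lt_trichotomy x 0 with h | h | h
    · rw [hφneg x h, hφpos (-x) (by linarith)]; ring
    · rw [h]; simp [hφ0]
    · rw [hφpos x h, hφneg (-x) (by linarith)]; ring
  have hQg : ∃ t0 : ℝ, 0 < t0 ∧ t0 ≤ 1/2 ∧ ∀ t, 0 < t → t ≤ t0 → St18 t g = 0 := by
    refine Submodule.span_induction
      (p := fun h _ => ∃ t0 : ℝ, 0 < t0 ∧ t0 ≤ 1/2 ∧ ∀ t, 0 < t → t ≤ t0 → St18 t h = 0)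
      ?_ ?_ ?_ ?_ hmem
    · rintro h ⟨ℓ, hh⟩
      set c := ℓ ![1,1,1] with hc
      set a := ℓ ![1,0,0] with ha
      set b := ℓ ![0,1,0] with hb
      have hval : ∀ t u v : ℝ, 0 < t → t ≤ 1/2 → |u| ≤ 2 → |v| ≤ 2 →
          h (pt18 t u v) = φ (c + t * u * a + t * v * b) := by
        intro t u v ht ht2 hu hv
        rw [hh]
        congr 1
        have h1 : 0 ≤ 1 + t * u := by
          have h3 : |t * u| ≤ 1 := by
            rw [abs_mul, abs_of_pos ht]; nlinarith [abs_nonneg u]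
          have := neg_abs_le (t * u); linarith
        have h2 : 0 ≤ 1 + t * v := by
          have h3 : |t * v| ≤ 1 := by
            rw [abs_mul, abs_of_pos ht]; nlinarith [abs_nonneg v]
          have := neg_abs_le (t * v); linarith
        have hvec : ((pt18 t u v : ↥{x : Fin 3 → ℝ | ∀ i, 0 ≤ x i}) : Fin 3 → ℝ)
            = ![1,1,1] + (t*u) • ![(1:ℝ),0,0] + (t*v) • ![(0:ℝ),1,0] := by
          funext i
          fin_cases i <;>
            simp [pt18, max_eq_left h1, max_eq_left h2]
        rw [hvec, map_add, map_add, map_smul, map_smul, smul_eq_mul, smul_eq_mul]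
      rcases eq_or_ne c 0 with hc0 | hc0
      · refine ⟨1/2, by norm_num, le_rfl, fun t ht htle => ?_⟩
        have v1 := hval t 2 0 ht htle (by norm_num) (by norm_num)
        have v2 := hval t 0 2 ht htle (by norm_num) (by norm_num)
        have v3 := hval t 1 1 ht htle (by norm_num) (by norm_num)
        have v4 := hval t 0 (-2) ht htle (by norm_num) (by norm_num)
        have v5 := hval t (-2) 0 ht htle (by norm_num) (by norm_num)
        have v6 := hval t (-1) (-1) ht htle (by norm_num) (by norm_num)
        have e1 : c + t * 2 * a + t * 0 * b = 2*t*a := by rw [hc0]; ring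
        have e2 : c + t * 0 * a + t * 2 * b = 2*t*b := by rw [hc0]; ring
        have e3 : c + t * 1 * a + t * 1 * b = t*a + t*b := by rw [hc0]; ring
        have e4 : c + t * 0 * a + t * (-2) * b = -(2*t*b) := by rw [hc0]; ring
        have e5 : c + t * (-2) * a + t * 0 * b = -(2*t*a) := by rw [hc0]; ring
        have e6 : c + t * (-1) * a + t * (-1) * b = -(t*a + t*b) := by rw [hc0]; ring
        rw [e1] at v1; rw [e2] at v2; rw [e3] at v3
        rw [e4] at v4; rw [e5] at v5; rw [e6] at v6
        simp only [St18]
        rw [v1, v2, v3, v4, v5, v6]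
        linear_combination hodd (2*t*a) + hodd (2*t*b) - 2 * hodd (t*a + t*b)
      · have hK : (0:ℝ) < 2*|a| + 2*|b| + 1 := by positivity
        rcases hc0.lt_or_gt with hneg | hpos
        · refine ⟨min (1/2) ((-c) / (2*|a| + 2*|b| + 1)),
            lt_min (by norm_num) (div_pos (by linarith) hK), min_le_left _ _,
            fun t ht htle => ?_⟩
          have ht2 : t ≤ 1/2 := le_trans htle (min_le_left _ _)
          have htK : t * (2*|a| + 2*|b| + 1) ≤ -c := by
            have h4 : t ≤ (-c) / (2*|a| + 2*|b| + 1) := le_trans htle (min_le_right _ _)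
            calc t * (2*|a| + 2*|b| + 1) ≤ ((-c) / (2*|a| + 2*|b| + 1)) * (2*|a| + 2*|b| + 1) :=
                  mul_le_mul_of_nonneg_right h4 hK.le
              _ = -c := div_mul_cancel₀ _ hK.ne'
          have hta1 : t*a ≤ t*|a| := mul_le_mul_of_nonneg_left (le_abs_self a) ht.le
          have hta2 : -(t*|a|) ≤ t*a := by nlinarith [neg_abs_le a]
          have htb1 : t*b ≤ t*|b| := mul_le_mul_of_nonneg_left (le_abs_self b) ht.le
          have htb2 : -(t*|b|) ≤ t*b := by nlinarith [neg_abs_le b]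
          have v1 := hval t 2 0 ht ht2 (by norm_num) (by norm_num)
          have v2 := hval t 0 2 ht ht2 (by norm_num) (by norm_num)
          have v3 := hval t 1 1 ht ht2 (by norm_num) (by norm_num)
          have v4 := hval t 0 (-2) ht ht2 (by norm_num) (by norm_num)
          have v5 := hval t (-2) 0 ht ht2 (by norm_num) (by norm_num)
          have v6 := hval t (-1) (-1) ht ht2 (by norm_num) (by norm_num)
          have P1 : c + t * 2 * a + t * 0 * b < 0 := by nlinarith
          have P2 : c + t * 0 * a + t * 2 * b < 0 := by nlinarith
          have P3 : c + t * 1 * a + t * 1 * b < 0 := by nlinarith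
          have P4 : c + t * 0 * a + t * (-2) * b < 0 := by nlinarith
          have P5 : c + t * (-2) * a + t * 0 * b < 0 := by nlinarith
          have P6 : c + t * (-1) * a + t * (-1) * b < 0 := by nlinarith
          simp only [St18]
          rw [v1, v2, v3, v4, v5, v6, hφneg _ P1, hφneg _ P2, hφneg _ P3,
            hφneg _ P4, hφneg _ P5, hφneg _ P6]
          ring
        · refine ⟨min (1/2) (c / (2*|a| + 2*|b| + 1)),
            lt_min (by norm_num) (div_pos hpos hK), min_le_left _ _,
            fun t ht htle => ?_⟩
          have ht2 : t ≤ 1/2 := le_trans htle (min_le_left _ _)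
          have htK : t * (2*|a| + 2*|b| + 1) ≤ c := by
            have h4 : t ≤ c / (2*|a| + 2*|b| + 1) := le_trans htle (min_le_right _ _)
            calc t * (2*|a| + 2*|b| + 1) ≤ (c / (2*|a| + 2*|b| + 1)) * (2*|a| + 2*|b| + 1) :=
                  mul_le_mul_of_nonneg_right h4 hK.le
              _ = c := div_mul_cancel₀ _ hK.ne'
          have hta1 : t*a ≤ t*|a| := mul_le_mul_of_nonneg_left (le_abs_self a) ht.le
          have hta2 : -(t*|a|) ≤ t*a := by nlinarith [neg_abs_le a]
          have htb1 : t*b ≤ t*|b| := mul_le_mul_of_nonneg_left (le_abs_self b) ht.le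
          have htb2 : -(t*|b|) ≤ t*b := by nlinarith [neg_abs_le b]
          have v1 := hval t 2 0 ht ht2 (by norm_num) (by norm_num)
          have v2 := hval t 0 2 ht ht2 (by norm_num) (by norm_num)
          have v3 := hval t 1 1 ht ht2 (by norm_num) (by norm_num)
          have v4 := hval t 0 (-2) ht ht2 (by norm_num) (by norm_num)
          have v5 := hval t (-2) 0 ht ht2 (by norm_num) (by norm_num)
          have v6 := hval t (-1) (-1) ht ht2 (by norm_num) (by norm_num)
          have P1 : 0 < c + t * 2 * a + t * 0 * b := by nlinarith
          have P2 : 0 < c + t * 0 * a + t * 2 * b := by nlinarith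
          have P3 : 0 < c + t * 1 * a + t * 1 * b := by nlinarith
          have P4 : 0 < c + t * 0 * a + t * (-2) * b := by nlinarith
          have P5 : 0 < c + t * (-2) * a + t * 0 * b := by nlinarith
          have P6 : 0 < c + t * (-1) * a + t * (-1) * b := by nlinarith
          simp only [St18]
          rw [v1, v2, v3, v4, v5, v6, hφpos _ P1, hφpos _ P2, hφpos _ P3,
            hφpos _ P4, hφpos _ P5, hφpos _ P6]
          ring
    · exact ⟨1/2, by norm_num, le_rfl, fun t _ _ => by simp [St18]⟩
    · rintro h1 h2 - - ⟨t1, ht1, h1half, H1⟩ ⟨t2, ht2, h2half, H2⟩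
      refine ⟨min t1 t2, lt_min ht1 ht2, le_trans (min_le_left _ _) h1half,
        fun t ht htle => ?_⟩
      have e : St18 t (h1 + h2) = St18 t h1 + St18 t h2 := by
        simp only [St18, Pi.add_apply]; ring
      rw [e, H1 t ht (le_trans htle (min_le_left _ _)),
        H2 t ht (le_trans htle (min_le_right _ _))]
      ring
    · rintro q h - ⟨t1, ht1, h1half, H1⟩
      refine ⟨t1, ht1, h1half, fun t ht htle => ?_⟩
      have e : St18 t (q • h) = q * St18 t h := by
        simp only [St18, Pi.smul_apply, smul_eq_mul]; ring
      rw [e, H1 t ht htle, mul_zero]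
  obtain ⟨t0, ht0, ht05, H⟩ := hQg
  have h0 := H t0 ht0 le_rfl
  have gval : ∀ u v : ℝ, |u| ≤ 2 → |v| ≤ 2 →
      g (pt18 t0 u v) = max (min (1 + t0*u) (1 + t0*v) - 1) 0 := by
    intro u v hu hv
    have h1 : 0 ≤ 1 + t0 * u := by
      have h3 : |t0 * u| ≤ 1 := by
        rw [abs_mul, abs_of_pos ht0]; nlinarith [abs_nonneg u]
      have := neg_abs_le (t0 * u); linarith
    have h2 : 0 ≤ 1 + t0 * v := by
      have h3 : |t0 * v| ≤ 1 := by
        rw [abs_mul, abs_of_pos ht0]; nlinarith [abs_nonneg v]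
      have := neg_abs_le (t0 * v); linarith
    rw [hg]
    have c0 : ((pt18 t0 u v : ↥{x : Fin 3 → ℝ | ∀ i, 0 ≤ x i}) : Fin 3 → ℝ) 0 = 1 + t0*u := by
      simp [pt18, max_eq_left h1]
    have c1 : ((pt18 t0 u v : ↥{x : Fin 3 → ℝ | ∀ i, 0 ≤ x i}) : Fin 3 → ℝ) 1 = 1 + t0*v := by
      simp [pt18, max_eq_left h2]
    have c2 : ((pt18 t0 u v : ↥{x : Fin 3 → ℝ | ∀ i, 0 ≤ x i}) : Fin 3 → ℝ) 2 = 1 := by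
      simp [pt18]
    rw [c0, c1, c2]
  have g1 : g (pt18 t0 2 0) = 0 := by
    rw [gval 2 0 (by norm_num) (by norm_num),
      min_eq_right (by nlinarith : 1 + t0*0 ≤ 1 + t0*2)]
    simp
  have g2 : g (pt18 t0 0 2) = 0 := by
    rw [gval 0 2 (by norm_num) (by norm_num),
      min_eq_left (by nlinarith : 1 + t0*0 ≤ 1 + t0*2)]
    simp
  have g3 : g (pt18 t0 1 1) = t0 := by
    rw [gval 1 1 (by norm_num) (by norm_num), min_self]
    rw [show 1 + t0*1 - 1 = t0 by ring, max_eq_left ht0.le]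
  have g4 : g (pt18 t0 0 (-2)) = 0 := by
    rw [gval 0 (-2) (by norm_num) (by norm_num),
      min_eq_right (by nlinarith : 1 + t0*(-2) ≤ 1 + t0*0),
      max_eq_right (by nlinarith : 1 + t0*(-2) - 1 ≤ 0)]
  have g5 : g (pt18 t0 (-2) 0) = 0 := by
    rw [gval (-2) 0 (by norm_num) (by norm_num),
      min_eq_left (by nlinarith : 1 + t0*(-2) ≤ 1 + t0*0),
      max_eq_right (by nlinarith : 1 + t0*(-2) - 1 ≤ 0)]
  have g6 : g (pt18 t0 (-1) (-1)) = 0 := by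
    rw [gval (-1) (-1) (by norm_num) (by norm_num), min_self,
      max_eq_right (by nlinarith : 1 + t0*(-1) - 1 ≤ 0)]
  simp only [St18] at h0
  rw [g1, g2, g3, g4, g5, g6] at h0
  linarith
end
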